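/- arXiv:2412.03971 — 6 statements merged into one kernel-verified Lean document; each statement's English description precedes it below -/
import Mathlib

section
/- Let K be a commutative ring and let a : ℕ × ℕ → K satisfy a(i,j) = 0 unless i ≥ j. In the formal power series ring K⟦x, y, z⟧ the following identity holds: (1−x)(1−y) · Σ a(i,j) x^m y^ℓ z^{i+j} = F(xz, yz) − y·F(xyz, z), where the sum on the left runs over all quadruples (m, i, ℓ, j) of nonnegative integers with m ≥ i ≥ ℓ ≥ j ≥ 0, F(xz, yz) denotes the power series Σ_{i≥j≥0} a(i,j) (xz)^i (yz)^j, and F(xyz, z) denotes Σ_{i≥j≥0} a(i,j) (xyz)^i z^j. (Each of these sums assigns only finitely many contributions to any fixed monomial, so all series are well defined.) -/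
section Aux
variable {K : Type} [CommRing K]

/-- The sum defining `S`'s coefficient, as a `Finset` sum over one index. -/
lemma tsum_eq (a : ℕ × ℕ → K) (M L N : ℕ) :
    (∑ᶠ ij ∈ {ij : ℕ × ℕ | ij.1 + ij.2 = N ∧ ij.1 ≤ M ∧ L ≤ ij.1 ∧ ij.2 ≤ L}, a ij)
      = ∑ i ∈ Finset.Icc (max L (N - L)) (min M N), a (i, N - i) := by
  have hset : {ij : ℕ × ℕ | ij.1 + ij.2 = N ∧ ij.1 ≤ M ∧ L ≤ ij.1 ∧ ij.2 ≤ L}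
      = ↑((Finset.Icc (max L (N - L)) (min M N)).image (fun i => (i, N - i))) := by
    ext ⟨i, j⟩
    simp only [Set.mem_setOf_eq, Finset.coe_image, Set.mem_image, Finset.mem_coe,
      Finset.mem_Icc, Prod.mk.injEq]
    constructor
    · rintro ⟨h1, h2, h3, h4⟩
      exact ⟨i, by omega, rfl, by omega⟩
    · rintro ⟨k, hk, rfl, rfl⟩
      omega
  rw [hset, finsum_mem_coe_finset, Finset.sum_image]
  intro x _ y _ h
  exact (Prod.mk.injEq _ _ _ _ ▸ h).1

/-- Peeling off the top term `i = M` of the sum. -/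
lemma tsum_step (a : ℕ × ℕ → K) (M L N : ℕ) :
    (∑ i ∈ Finset.Icc (max L (N - L)) (min M N), a (i, N - i))
      = (if 1 ≤ M then
          ∑ i ∈ Finset.Icc (max L (N - L)) (min (M - 1) N), a (i, N - i) else 0)
        + (if L ≤ M ∧ M ≤ N ∧ N ≤ M + L then a (M, N - M) else 0) := by
  by_cases hM : M = 0
  · subst hM
    rw [if_neg (by omega), zero_add]
    by_cases h : L = 0 ∧ N = 0
    · obtain ⟨rfl, rfl⟩ := h
      simp
    · have hemp : ¬ (max L (N - L) ≤ min 0 N) := by omega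
      have hc : ¬ (L ≤ 0 ∧ 0 ≤ N ∧ N ≤ 0 + L) := by omega
      rw [Finset.Icc_eq_empty hemp, Finset.sum_empty, if_neg hc]
  · rw [if_pos (by omega)]
    by_cases hMN : M ≤ N
    · by_cases hlb : max L (N - L) ≤ M
      · have h1 : min M N = (M - 1) + 1 := by omega
        have h2 : min (M - 1) N = M - 1 := by omega
        have hab : max L (N - L) ≤ (M - 1) + 1 := by omega
        rw [h1, Finset.sum_Icc_succ_top hab, h2]
        have hc : L ≤ M ∧ M ≤ N ∧ N ≤ M + L := by omega
        rw [if_pos hc, show (M - 1) + 1 = M from by omega]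
      · have e1 : Finset.Icc (max L (N - L)) (min M N) = ∅ :=
          Finset.Icc_eq_empty (by omega)
        have e2 : Finset.Icc (max L (N - L)) (min (M - 1) N) = ∅ :=
          Finset.Icc_eq_empty (by omega)
        have hc : ¬ (L ≤ M ∧ M ≤ N ∧ N ≤ M + L) := by omega
        rw [e1, e2, if_neg hc, Finset.sum_empty, add_zero]
    · have h1 : min M N = N := by omega
      have h2 : min (M - 1) N = N := by omega
      have hc : ¬ (L ≤ M ∧ M ≤ N ∧ N ≤ M + L) := by omega
      rw [h1, h2, if_neg hc, add_zero]

/-- Coefficient of `F₁` in closed form. -/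
lemma f1_eq (a : ℕ × ℕ → K) (M L N : ℕ) :
    (∑ᶠ ij ∈ {ij : ℕ × ℕ | ij.2 ≤ ij.1 ∧ M = ij.1 ∧ L = ij.2 ∧ N = ij.1 + ij.2}, a ij)
      = if L ≤ M ∧ N = M + L then a (M, L) else 0 := by
  by_cases h : L ≤ M ∧ N = M + L
  · have hs : {ij : ℕ × ℕ | ij.2 ≤ ij.1 ∧ M = ij.1 ∧ L = ij.2 ∧ N = ij.1 + ij.2}
        = {(M, L)} := by
      ext ⟨i, j⟩
      simp only [Set.mem_setOf_eq, Set.mem_singleton_iff, Prod.mk.injEq]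
      omega
    rw [hs, finsum_mem_singleton, if_pos h]
  · have hs : {ij : ℕ × ℕ | ij.2 ≤ ij.1 ∧ M = ij.1 ∧ L = ij.2 ∧ N = ij.1 + ij.2}
        = (∅ : Set (ℕ × ℕ)) := by
      ext ⟨i, j⟩
      simp only [Set.mem_setOf_eq, Set.mem_empty_iff_false, iff_false, not_and]
      omega
    rw [hs, finsum_mem_empty, if_neg h]

/-- Coefficient of `F₂` in closed form. -/
lemma f2_eq (a : ℕ × ℕ → K) (M L N : ℕ) :
    (∑ᶠ ij ∈ {ij : ℕ × ℕ | ij.2 ≤ ij.1 ∧ M = ij.1 ∧ L = ij.1 ∧ N = ij.1 + ij.2}, a ij)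
      = if L = M ∧ M ≤ N ∧ N ≤ M + M then a (M, N - M) else 0 := by
  by_cases h : L = M ∧ M ≤ N ∧ N ≤ M + M
  · have hs : {ij : ℕ × ℕ | ij.2 ≤ ij.1 ∧ M = ij.1 ∧ L = ij.1 ∧ N = ij.1 + ij.2}
        = {(M, N - M)} := by
      ext ⟨i, j⟩
      simp only [Set.mem_setOf_eq, Set.mem_singleton_iff, Prod.mk.injEq]
      omega
    rw [hs, finsum_mem_singleton, if_pos h]
  · have hs : {ij : ℕ × ℕ | ij.2 ≤ ij.1 ∧ M = ij.1 ∧ L = ij.1 ∧ N = ij.1 + ij.2}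
        = (∅ : Set (ℕ × ℕ)) := by
      ext ⟨i, j⟩
      simp only [Set.mem_setOf_eq, Set.mem_empty_iff_false, iff_false, not_and]
      omega
    rw [hs, finsum_mem_empty, if_neg h]

/-- The purely combinatorial coefficient identity. -/
lemma final_eq (a : ℕ × ℕ → K) (M L N : ℕ) :
    (∑ i ∈ Finset.Icc (max L (N - L)) (min M N), a (i, N - i))
      - (if 1 ≤ M then ∑ i ∈ Finset.Icc (max L (N - L)) (min (M - 1) N), a (i, N - i) else 0)
      - (if 1 ≤ L then ∑ i ∈ Finset.Icc (max (L - 1) (N - (L - 1))) (min M N), a (i, N - i) else 0)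
      + (if 1 ≤ M then
          (if 1 ≤ L then
            ∑ i ∈ Finset.Icc (max (L - 1) (N - (L - 1))) (min (M - 1) N), a (i, N - i)
          else 0) else 0)
      = (if L ≤ M ∧ N = M + L then a (M, L) else 0)
        - (if 1 ≤ L then
            (if L - 1 = M ∧ M ≤ N ∧ N ≤ M + M then a (M, N - M) else 0) else 0) := by
  rw [tsum_step a M L N, tsum_step a M (L - 1) N]
  by_cases hM : 1 ≤ M <;> by_cases hL : 1 ≤ L <;>
    simp only [hM, hL, if_true, if_false] <;>
    split_ifs
  all_goals try ring
  all_goals try (exfalso; omega)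
  all_goals (rw [show N - M = L from by omega]; try ring)

lemma coeff_X_mul' (s : Fin 3) (f : MvPowerSeries (Fin 3) K) (d : Fin 3 →₀ ℕ) :
    MvPowerSeries.coeff d (MvPowerSeries.X s * f)
      = if 1 ≤ d s then MvPowerSeries.coeff (d - Finsupp.single s 1) f else 0 := by
  classical
  rw [MvPowerSeries.X_def, MvPowerSeries.coeff_monomial_mul]
  by_cases h : 1 ≤ d s
  · rw [if_pos (Finsupp.single_le_iff.mpr h), if_pos h, one_mul]
  · rw [if_neg (fun hh => h (Finsupp.single_le_iff.mp hh)), if_neg h]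

end Aux


/-- In `K⟦x, y, z⟧` (variables `X 0 = x`, `X 1 = y`, `X 2 = z`):
`(1-x)(1-y) ⬝ Σ_{m ≥ i ≥ ℓ ≥ j ≥ 0} a(i,j) x^m y^ℓ z^{i+j} = F(xz, yz) - y ⬝ F(xyz, z)`,
where the series are specified coefficientwise. -/
theorem stmt_1 (K : Type) [CommRing K] (a : ℕ × ℕ → K)
    (ha : ∀ i j : ℕ, i < j → a (i, j) = 0)
    (S F₁ F₂ : MvPowerSeries (Fin 3) K)
    -- `S = Σ_{m ≥ i ≥ ℓ ≥ j ≥ 0} a(i,j) x^m y^ℓ z^{i+j}`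
    (hS : ∀ d : Fin 3 →₀ ℕ, MvPowerSeries.coeff d S =
      ∑ᶠ ij ∈ {ij : ℕ × ℕ | ij.1 + ij.2 = d 2 ∧ ij.1 ≤ d 0 ∧ d 1 ≤ ij.1 ∧ ij.2 ≤ d 1}, a ij)
    -- `F₁ = F(xz, yz) = Σ_{i ≥ j ≥ 0} a(i,j) (xz)^i (yz)^j`
    (hF₁ : ∀ d : Fin 3 →₀ ℕ, MvPowerSeries.coeff d F₁ =
      ∑ᶠ ij ∈ {ij : ℕ × ℕ | ij.2 ≤ ij.1 ∧ d 0 = ij.1 ∧ d 1 = ij.2 ∧ d 2 = ij.1 + ij.2}, a ij)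
    -- `F₂ = F(xyz, z) = Σ_{i ≥ j ≥ 0} a(i,j) (xyz)^i z^j`
    (hF₂ : ∀ d : Fin 3 →₀ ℕ, MvPowerSeries.coeff d F₂ =
      ∑ᶠ ij ∈ {ij : ℕ × ℕ | ij.2 ≤ ij.1 ∧ d 0 = ij.1 ∧ d 1 = ij.1 ∧ d 2 = ij.1 + ij.2}, a ij) :
    (1 - MvPowerSeries.X (0 : Fin 3)) * (1 - MvPowerSeries.X (1 : Fin 3)) * S
      = F₁ - MvPowerSeries.X (1 : Fin 3) * F₂ := by
  classical
  have cS : ∀ e : Fin 3 →₀ ℕ, MvPowerSeries.coeff e S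
      = ∑ i ∈ Finset.Icc (max (e 1) (e 2 - e 1)) (min (e 0) (e 2)), a (i, e 2 - i) :=
    fun e => (hS e).trans (tsum_eq a _ _ _)
  ext d
  have hexp : (1 - MvPowerSeries.X (0 : Fin 3)) * (1 - MvPowerSeries.X (1 : Fin 3)) * S
      = S - MvPowerSeries.X 0 * S - MvPowerSeries.X 1 * S
        + MvPowerSeries.X 0 * (MvPowerSeries.X 1 * S) := by ring
  rw [hexp]
  simp only [map_add, map_sub, coeff_X_mul']
  rw [hF₁ d, hF₂ ((d - Finsupp.single (1 : Fin 3) 1 : Fin 3 →₀ ℕ)), f1_eq, f2_eq]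
  have E10 : ((d - Finsupp.single (1 : Fin 3) 1 : Fin 3 →₀ ℕ)) 0 = d 0 := by
    simp [Finsupp.tsub_apply, Finsupp.single_apply]
  have E11 : ((d - Finsupp.single (1 : Fin 3) 1 : Fin 3 →₀ ℕ)) 1 = d 1 - 1 := by
    simp [Finsupp.tsub_apply, Finsupp.single_apply]
  have E12 : ((d - Finsupp.single (1 : Fin 3) 1 : Fin 3 →₀ ℕ)) 2 = d 2 := by
    simp [Finsupp.tsub_apply, Finsupp.single_apply]
  have E00 : ((d - Finsupp.single (0 : Fin 3) 1 : Fin 3 →₀ ℕ)) 0 = d 0 - 1 := by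
    simp [Finsupp.tsub_apply, Finsupp.single_apply]
  have E01 : ((d - Finsupp.single (0 : Fin 3) 1 : Fin 3 →₀ ℕ)) 1 = d 1 := by
    simp [Finsupp.tsub_apply, Finsupp.single_apply]
  have E02 : ((d - Finsupp.single (0 : Fin 3) 1 : Fin 3 →₀ ℕ)) 2 = d 2 := by
    simp [Finsupp.tsub_apply, Finsupp.single_apply]
  have B0 : ((d - Finsupp.single (0 : Fin 3) 1 - Finsupp.single (1 : Fin 3) 1 : Fin 3 →₀ ℕ)) 0 = d 0 - 1 := by
    simp [Finsupp.tsub_apply, Finsupp.single_apply]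
  have B1 : ((d - Finsupp.single (0 : Fin 3) 1 - Finsupp.single (1 : Fin 3) 1 : Fin 3 →₀ ℕ)) 1 = d 1 - 1 := by
    simp [Finsupp.tsub_apply, Finsupp.single_apply]
  have B2 : ((d - Finsupp.single (0 : Fin 3) 1 - Finsupp.single (1 : Fin 3) 1 : Fin 3 →₀ ℕ)) 2 = d 2 := by
    simp [Finsupp.tsub_apply, Finsupp.single_apply]
  rw [cS d, cS ((d - Finsupp.single (0 : Fin 3) 1 : Fin 3 →₀ ℕ)), cS ((d - Finsupp.single (1 : Fin 3) 1 : Fin 3 →₀ ℕ)),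
    cS ((d - Finsupp.single (0 : Fin 3) 1 - Finsupp.single (1 : Fin 3) 1 : Fin 3 →₀ ℕ)),
    E10, E11, E12, E00, E01, E02, B0, B1, B2]
  exact final_eq a (d 0) (d 1) (d 2)
end

section
/- Let K be a commutative ring and let a : ℕ × ℕ → K satisfy a(i,j) = 0 unless i ≥ j. In the formal power series ring K⟦x, z⟧ the following identity holds: (1−x) · Σ a(i,j) x^ℓ z^{i+j} = F(z, xz) − x·F(xz, z), where the sum on the left runs over all triples (i, ℓ, j) of nonnegative integers with i ≥ ℓ ≥ j ≥ 0, F(z, xz) denotes the power series Σ_{i≥j≥0} a(i,j) z^i (xz)^j, and F(xz, z) denotes Σ_{i≥j≥0} a(i,j) (xz)^i z^j. -/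
section Aux

variable {K : Type} [CommRing K]

/-- The coefficient set of `F₁` evaluates to `a (n - ℓ, ℓ)`. -/
lemma aux_F₁ (a : ℕ × ℕ → K) (ha : ∀ i j : ℕ, i < j → a (i, j) = 0) (ℓ n : ℕ) :
    (∑ᶠ ij ∈ {ij : ℕ × ℕ | ij.2 ≤ ij.1 ∧ ℓ = ij.2 ∧ n = ij.1 + ij.2}, a ij)
      = a (n - ℓ, ℓ) := by
  by_cases h : ℓ + ℓ ≤ n
  · have hset : {ij : ℕ × ℕ | ij.2 ≤ ij.1 ∧ ℓ = ij.2 ∧ n = ij.1 + ij.2}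
        = {(n - ℓ, ℓ)} := by
      ext ⟨i, j⟩
      simp only [Set.mem_setOf_eq, Set.mem_singleton_iff, Prod.mk.injEq]
      constructor
      · rintro ⟨h1, rfl, rfl⟩; omega
      · rintro ⟨rfl, rfl⟩; omega
    rw [hset, finsum_mem_singleton]
  · have hset : {ij : ℕ × ℕ | ij.2 ≤ ij.1 ∧ ℓ = ij.2 ∧ n = ij.1 + ij.2}
        = (∅ : Set (ℕ × ℕ)) := by
      ext ⟨i, j⟩
      simp only [Set.mem_setOf_eq, Set.mem_empty_iff_false, iff_false, not_and]
      rintro h1 rfl; omega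
    rw [hset, finsum_mem_empty, ha]
    omega

/-- The coefficient set of `F₂` evaluates to `a (ℓ, n - ℓ)` when `ℓ ≤ n`, else `0`. -/
lemma aux_F₂ (a : ℕ × ℕ → K) (ha : ∀ i j : ℕ, i < j → a (i, j) = 0) (ℓ n : ℕ) :
    (∑ᶠ ij ∈ {ij : ℕ × ℕ | ij.2 ≤ ij.1 ∧ ℓ = ij.1 ∧ n = ij.1 + ij.2}, a ij)
      = if ℓ ≤ n then a (ℓ, n - ℓ) else 0 := by
  by_cases h : ℓ ≤ n
  · rw [if_pos h]
    by_cases h2 : n - ℓ ≤ ℓ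
    · have hset : {ij : ℕ × ℕ | ij.2 ≤ ij.1 ∧ ℓ = ij.1 ∧ n = ij.1 + ij.2}
          = {(ℓ, n - ℓ)} := by
        ext ⟨i, j⟩
        simp only [Set.mem_setOf_eq, Set.mem_singleton_iff, Prod.mk.injEq]
        constructor
        · rintro ⟨h1, rfl, rfl⟩; omega
        · rintro ⟨rfl, rfl⟩; omega
      rw [hset, finsum_mem_singleton]
    · have hset : {ij : ℕ × ℕ | ij.2 ≤ ij.1 ∧ ℓ = ij.1 ∧ n = ij.1 + ij.2}
          = (∅ : Set (ℕ × ℕ)) := by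
        ext ⟨i, j⟩
        simp only [Set.mem_setOf_eq, Set.mem_empty_iff_false, iff_false, not_and]
        rintro h1 rfl; omega
      rw [hset, finsum_mem_empty, ha]
      omega
  · rw [if_neg h]
    have hset : {ij : ℕ × ℕ | ij.2 ≤ ij.1 ∧ ℓ = ij.1 ∧ n = ij.1 + ij.2}
        = (∅ : Set (ℕ × ℕ)) := by
      ext ⟨i, j⟩
      simp only [Set.mem_setOf_eq, Set.mem_empty_iff_false, iff_false, not_and]
      rintro h1 rfl; omega
    rw [hset, finsum_mem_empty]

/-- The coefficient set of `S` evaluates to a finite sum. -/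
lemma aux_S (a : ℕ × ℕ → K) (ℓ n : ℕ) :
    (∑ᶠ ij ∈ {ij : ℕ × ℕ | ij.1 + ij.2 = n ∧ ℓ ≤ ij.1 ∧ ij.2 ≤ ℓ}, a ij)
      = if ℓ ≤ n then ∑ j ∈ Finset.range (min ℓ (n - ℓ) + 1), a (n - j, j) else 0 := by
  by_cases h : ℓ ≤ n
  · rw [if_pos h]
    have hset : {ij : ℕ × ℕ | ij.1 + ij.2 = n ∧ ℓ ≤ ij.1 ∧ ij.2 ≤ ℓ}
        = ↑((Finset.range (min ℓ (n - ℓ) + 1)).image (fun j => (n - j, j))) := by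
      ext ⟨i, j⟩
      simp only [Set.mem_setOf_eq, Finset.coe_image, Set.mem_image, Finset.mem_coe,
        Finset.mem_range, Prod.mk.injEq]
      constructor
      · rintro ⟨h1, h2, h3⟩
        exact ⟨j, by omega, by omega, rfl⟩
      · rintro ⟨k, hk, rfl, rfl⟩
        omega
    rw [hset, finsum_mem_coe_finset, Finset.sum_image]
    intro x _ y _ hxy
    exact (Prod.mk.injEq _ _ _ _ ▸ hxy).2
  · rw [if_neg h]
    have hset : {ij : ℕ × ℕ | ij.1 + ij.2 = n ∧ ℓ ≤ ij.1 ∧ ij.2 ≤ ℓ}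
        = (∅ : Set (ℕ × ℕ)) := by
      ext ⟨i, j⟩
      simp only [Set.mem_setOf_eq, Set.mem_empty_iff_false, iff_false, not_and]
      intro h1 h2; omega
    rw [hset, finsum_mem_empty]

end Aux

/-- In `K⟦x, z⟧` (variables `X 0 = x`, `X 1 = z`):
`(1-x) ⬝ Σ_{i ≥ ℓ ≥ j ≥ 0} a(i,j) x^ℓ z^{i+j} = F(z, xz) - x ⬝ F(xz, z)`,
where the series are specified coefficientwise. -/
theorem stmt_2 (K : Type) [CommRing K] (a : ℕ × ℕ → K)
    (ha : ∀ i j : ℕ, i < j → a (i, j) = 0)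
    (S F₁ F₂ : MvPowerSeries (Fin 2) K)
    -- `S = Σ_{i ≥ ℓ ≥ j ≥ 0} a(i,j) x^ℓ z^{i+j}`
    (hS : ∀ d : Fin 2 →₀ ℕ, MvPowerSeries.coeff d S =
      ∑ᶠ ij ∈ {ij : ℕ × ℕ | ij.1 + ij.2 = d 1 ∧ d 0 ≤ ij.1 ∧ ij.2 ≤ d 0}, a ij)
    -- `F₁ = F(z, xz) = Σ_{i ≥ j ≥ 0} a(i,j) z^i (xz)^j`
    (hF₁ : ∀ d : Fin 2 →₀ ℕ, MvPowerSeries.coeff d F₁ =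
      ∑ᶠ ij ∈ {ij : ℕ × ℕ | ij.2 ≤ ij.1 ∧ d 0 = ij.2 ∧ d 1 = ij.1 + ij.2}, a ij)
    -- `F₂ = F(xz, z) = Σ_{i ≥ j ≥ 0} a(i,j) (xz)^i z^j`
    (hF₂ : ∀ d : Fin 2 →₀ ℕ, MvPowerSeries.coeff d F₂ =
      ∑ᶠ ij ∈ {ij : ℕ × ℕ | ij.2 ≤ ij.1 ∧ d 0 = ij.1 ∧ d 1 = ij.1 + ij.2}, a ij) :
    (1 - MvPowerSeries.X (0 : Fin 2)) * S = F₁ - MvPowerSeries.X (0 : Fin 2) * F₂ := by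
  ext d
  have hXmul : ∀ (φ : MvPowerSeries (Fin 2) K),
      MvPowerSeries.coeff d (MvPowerSeries.X (0 : Fin 2) * φ)
        = if Finsupp.single (0 : Fin 2) 1 ≤ d then
            MvPowerSeries.coeff (d - Finsupp.single (0 : Fin 2) 1) φ else 0 := by
    intro φ
    rw [show (MvPowerSeries.X (0 : Fin 2) : MvPowerSeries (Fin 2) K)
        = MvPowerSeries.monomial (Finsupp.single 0 1) 1 from rfl,
      MvPowerSeries.coeff_monomial_mul]
    split_ifs <;> simp
  rw [sub_mul, one_mul, map_sub, map_sub, hXmul S, hXmul F₂]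
  set ℓ := d 0 with hℓ
  set n := d 1 with hn
  have hd0 : (d - Finsupp.single (0 : Fin 2) 1 : Fin 2 →₀ ℕ) 0 = ℓ - 1 := by
    simp [Finsupp.sub_apply, hℓ]
  have hd1 : (d - Finsupp.single (0 : Fin 2) 1 : Fin 2 →₀ ℕ) 1 = n := by
    simp [Finsupp.sub_apply, Finsupp.single_apply, hn]
  have hle : (Finsupp.single (0 : Fin 2) 1 ≤ d) ↔ 1 ≤ ℓ := Finsupp.single_le_iff
  rw [hS d, hS _, hF₁ d, hF₂ _]
  simp only [hd0, hd1, ← hℓ, ← hn, hle]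
  rw [aux_S a ℓ n, aux_S a (ℓ - 1) n, aux_F₁ a ha ℓ n, aux_F₂ a ha (ℓ - 1) n]
  split_ifs with c1 c2 c3 c4 c5
  · -- ℓ ≤ n, 1 ≤ ℓ, ℓ - 1 ≤ n : the main case
    by_cases h3 : ℓ + ℓ ≤ n
    · have e1 : ℓ ⊓ (n - ℓ) = ℓ := by omega
      have e2 : (ℓ - 1) ⊓ (n - (ℓ - 1)) = ℓ - 1 := by omega
      have h6 : ℓ - 1 + 1 = ℓ := by omega
      rw [e1, e2, h6, Finset.sum_range_succ, ha (ℓ - 1) (n - (ℓ - 1)) (by omega)]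
      ring
    · by_cases h4 : ℓ + ℓ = n + 1
      · have e1 : ℓ ⊓ (n - ℓ) = ℓ - 1 := by omega
        have e2 : (ℓ - 1) ⊓ (n - (ℓ - 1)) = ℓ - 1 := by omega
        rw [e1, e2, ha (n - ℓ) ℓ (by omega), ha (ℓ - 1) (n - (ℓ - 1)) (by omega)]
        ring
      · have e1 : ℓ ⊓ (n - ℓ) = n - ℓ := by omega
        have e2 : (ℓ - 1) ⊓ (n - (ℓ - 1)) = n - ℓ + 1 := by omega
        have hsplit : ∑ j ∈ Finset.range (n - ℓ + 1 + 1), a (n - j, j)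
            = ∑ j ∈ Finset.range (n - ℓ + 1), a (n - j, j) + a (ℓ - 1, n - ℓ + 1) := by
          rw [Finset.sum_range_succ]
          have : n - (n - ℓ + 1) = ℓ - 1 := by omega
          rw [this]
        rw [e1, e2, hsplit, ha (n - ℓ) ℓ (by omega)]
        have e4 : n - (ℓ - 1) = n - ℓ + 1 := by omega
        rw [e4]; ring
  · exact absurd (show ℓ - 1 ≤ n by omega) c3
  · -- ℓ = 0
    have e1 : ℓ ⊓ (n - ℓ) = 0 := by omega
    have e0 : ℓ = 0 := by omega
    rw [e1, Finset.sum_range_succ, Finset.sum_range_zero, e0]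
    simp
  · -- ¬ℓ ≤ n, 1 ≤ ℓ, ℓ - 1 ≤ n : n = ℓ - 1
    have e2 : (ℓ - 1) ⊓ (n - (ℓ - 1)) = 0 := by omega
    rw [e2, Finset.sum_range_succ, Finset.sum_range_zero, ha (n - ℓ) ℓ (by omega)]
    have e3 : n - (ℓ - 1) = 0 := by omega
    have e4 : ℓ - 1 = n := by omega
    rw [e3, e4]
    simp
  · have hz : a (n - ℓ, ℓ) = 0 := ha (n - ℓ) ℓ (by omega)
    rw [hz]
  · have hz : a (n - ℓ, ℓ) = 0 := ha (n - ℓ) ℓ (by omega)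
    rw [hz]
end

section
/- Let λ and μ be integer partitions with μ ⊆ λ (i.e., μ_i ≤ λ_i for all i), let k = ℓ(λ) be the number of nonzero parts of λ, and set μ_j = 0 for ℓ(μ) < j ≤ k. Let P_{λ/μ} be the finite poset whose elements are the cells {(i,j) : 1 ≤ i ≤ k, μ_i < j ≤ λ_i} of the skew diagram λ/μ, partially ordered componentwise: (i,j) ≤ (i′,j′) iff i ≤ i′ and j ≤ j′. Then the number of linear extensions of P_{λ/μ} is e(P_{λ/μ}) = (|λ|−|μ|)! · det_{1≤i,j≤k}( 1/(λ_i − μ_j − i + j)! ), where the determinant is taken over ℚ and by convention 1/m! = 0 whenever m < 0. -/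
open Finset

/-- entry function: `1/z!` with value `0` for negative `z`. -/
noncomputable def ent (z : ℤ) : ℚ := if 0 ≤ z then ((z.toNat).factorial : ℚ)⁻¹ else 0

lemma ent_sub_one (z : ℤ) : ent (z - 1) = (z : ℚ) * ent z := by
  unfold ent
  rcases lt_trichotomy z 0 with h | h | h
  · rw [if_neg (by omega), if_neg (by omega)]; ring
  · subst h; norm_num
  · rw [if_pos (by omega), if_pos (by omega)]
    set a := (z - 1).toNat with ha
    have h1 : z.toNat = a + 1 := by omega
    have hz : (z : ℚ) = (a : ℚ) + 1 := by
      have : z = (a : ℤ) + 1 := by omega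
      exact_mod_cast congrArg (fun t : ℤ => (t : ℚ)) this
    rw [h1, hz, Nat.factorial_succ]
    have h3 : (Nat.factorial a : ℚ) ≠ 0 := by exact_mod_cast Nat.factorial_ne_zero _
    have h4 : ((a : ℚ) + 1) ≠ 0 := by positivity
    push_cast
    field_simp

/-- sum over rows of determinant with one row rescaled columnwise. -/
lemma sum_det_updateRow_mul {k : ℕ} (M : Matrix (Fin k) (Fin k) ℚ) (c : Fin k → ℚ) :
    ∑ r, (M.updateRow r (fun j => c j * M r j)).det = (∑ j, c j) * M.det := by
  have key : ∀ (r : Fin k) (σ : Equiv.Perm (Fin k)),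
      (∏ i, (M.updateRow r fun j => c j * M r j) (σ i) i)
        = c (σ.symm r) * ∏ i, M (σ i) i := by
    intro r σ
    have h1 : ∀ i, (M.updateRow r fun j => c j * M r j) (σ i) i
        = (if i = σ.symm r then c i else 1) * M (σ i) i := by
      intro i
      rw [Matrix.updateRow_apply]
      by_cases h : σ i = r
      · have hi : i = σ.symm r := by rw [← h, Equiv.symm_apply_apply]
        rw [if_pos h, if_pos hi, ← h]
      · have hi : ¬ i = σ.symm r := fun hh => h (by rw [hh, Equiv.apply_symm_apply])
        rw [if_neg h, if_neg hi, one_mul]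
    simp only [h1]
    rw [Finset.prod_mul_distrib, Finset.prod_ite_eq' Finset.univ (σ.symm r) c,
      if_pos (Finset.mem_univ _)]
  simp only [Matrix.det_apply, key]
  rw [Finset.sum_comm, Finset.mul_sum]
  refine Finset.sum_congr rfl fun σ _ => ?_
  rw [← Finset.smul_sum, ← Finset.sum_mul, Equiv.sum_comp σ.symm c, mul_smul_comm]

lemma ent_of_neg {z : ℤ} (h : z < 0) : ent z = 0 := by rw [ent, if_neg (by omega)]

noncomputable def Amat {k : ℕ} (l m : Fin k → ℕ) : Matrix (Fin k) (Fin k) ℚ :=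
  Matrix.of fun i j => ent ((l i : ℤ) - (m j : ℤ) - ((i : ℕ) : ℤ) + ((j : ℕ) : ℤ))
noncomputable def Dmat {k : ℕ} (l m : Fin k → ℕ) (r : Fin k) : Matrix (Fin k) (Fin k) ℚ :=
  (Amat l m).updateRow r
    (fun j => (((l r : ℤ) - (m j : ℤ) - ((r : ℕ) : ℤ) + ((j : ℕ) : ℤ) : ℤ) : ℚ) * Amat l m r j)
lemma Dmat_row_self {k : ℕ} (l m : Fin k → ℕ) (r j : Fin k) :
    Dmat l m r r j = ent ((l r : ℤ) - (m j : ℤ) - ((r : ℕ) : ℤ) + ((j : ℕ) : ℤ) - 1) := by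
  rw [Dmat, Matrix.updateRow_self, ent_sub_one]; rfl
lemma Dmat_row_ne {k : ℕ} (l m : Fin k → ℕ) {r i : Fin k} (h : i ≠ r) (j : Fin k) :
    Dmat l m r i j = ent ((l i : ℤ) - (m j : ℤ) - ((i : ℕ) : ℤ) + ((j : ℕ) : ℤ)) := by
  rw [Dmat, Matrix.updateRow_ne h]; rfl

/-- zero lemma 1: if some later row has the same `l` value, `det (Dmat l m r) = 0` -/
lemma Dmat_det_zero_of_eq {k : ℕ} (l m : Fin k → ℕ) (hl : Antitone l) {r r' : Fin k}
    (hrr : r < r') (he : l r' = l r) : (Dmat l m r).det = 0 := by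
  have hrk : (r : ℕ) + 1 < k := by
    have := r'.2; have : (r : ℕ) < (r' : ℕ) := hrr; omega
  set r1 : Fin k := ⟨(r : ℕ) + 1, hrk⟩ with hr1
  have hlr1 : l r1 = l r := by
    have h1 : l r' ≤ l r1 := hl (by rw [Fin.le_def]; simp [hr1]; omega)
    have h2 : l r1 ≤ l r := hl (by rw [Fin.le_def]; simp [hr1])
    omega
  have hne : r ≠ r1 := by
    intro h; rw [Fin.ext_iff] at h; simp [hr1] at h
  apply Matrix.det_zero_of_row_eq hne
  funext j
  rw [Dmat_row_self, Dmat_row_ne l m (Ne.symm hne), hlr1]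
  congr 1
  simp only [hr1]
  push_cast
  ring

/-- zero lemma 2: if `l r = m r`, `det (Dmat l m r) = 0`. -/
lemma Dmat_det_zero_of_empty {k : ℕ} (l m : Fin k → ℕ) (hl : Antitone l) (hm : Antitone m)
    {r : Fin k} (he : l r = m r) : (Dmat l m r).det = 0 := by
  classical
  set d : ℕ := (r : ℕ) with hd
  have hdk : d < k := r.2
  set M := Dmat l m r with hMdef
  -- entries vanish in the lower-left block
  have hzero : ∀ i j : Fin k, d ≤ (i : ℕ) → (j : ℕ) ≤ d → M i j = 0 := by
    intro i j hi hj
    by_cases hir : i = r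
    · subst hir
      rw [hMdef, Dmat_row_self]
      apply ent_of_neg
      have hmj : m i ≤ m j := hm (by rwa [Fin.le_def])
      omega
    · have hii : d < (i : ℕ) := by
        rcases lt_or_eq_of_le hi with h | h
        · exact h
        · exact absurd (Fin.ext h.symm : i = r) hir
      rw [hMdef, Dmat_row_ne l m hir]
      apply ent_of_neg
      have h1 : l i ≤ l r := hl (by rw [Fin.le_def]; omega)
      have h2 : m r ≤ m j := hm (by rwa [Fin.le_def])
      omega
  -- columns 0..d are dependent
  rw [← Matrix.exists_mulVec_eq_zero_iff]
  set w : Fin (d + 1) → (Fin d → ℚ) := fun j a =>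
    M (Fin.castLE (by omega) a) (Fin.castLE (by omega) j) with hw
  have hnli : ¬ LinearIndependent ℚ w := by
    intro h
    have := h.fintype_card_le_finrank
    rw [Module.finrank_fin_fun, Fintype.card_fin] at this
    omega
  rw [Fintype.not_linearIndependent_iff] at hnli
  obtain ⟨g, hg0, j0, hj0⟩ := hnli
  refine ⟨fun j => if h : (j : ℕ) < d + 1 then g ⟨(j : ℕ), h⟩ else 0, ?_, ?_⟩
  · intro hv
    apply hj0
    have := congrFun hv (Fin.castLE (by omega) j0)
    exact (by simpa using this : ((j0 : ℕ) ≤ d → g j0 = 0)) (by omega)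
  · funext i
    show ∑ j, M i j * _ = 0
    by_cases hi : d ≤ (i : ℕ)
    · apply Finset.sum_eq_zero
      intro j _
      by_cases hj : (j : ℕ) < d + 1
      · rw [hzero i j hi (by omega), zero_mul]
      · rw [dif_neg hj, mul_zero]
    · push_neg at hi
      have hle : d + 1 ≤ k := by omega
      have key : ∑ j : Fin k, M i j * (if h : (j : ℕ) < d + 1 then g ⟨(j : ℕ), h⟩ else 0)
          = ∑ j : Fin (d + 1), M i (Fin.castLE hle j) * g j := by
        have h1 : ∑ j ∈ (Finset.univ.map ⟨Fin.castLE hle, Fin.castLE_injective _⟩),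
            M i j * (if h : (j : ℕ) < d + 1 then g ⟨(j : ℕ), h⟩ else 0)
            = ∑ j : Fin k, M i j * (if h : (j : ℕ) < d + 1 then g ⟨(j : ℕ), h⟩ else 0) :=
          Finset.sum_subset (Finset.subset_univ _) (fun x _ hx => by
            have hnx : ¬ (x : ℕ) < d + 1 := fun hlt => hx (by
              simp only [Finset.mem_map, Finset.mem_univ, Function.Embedding.coeFn_mk]
              exact ⟨⟨(x : ℕ), hlt⟩, trivial, by ext; simp⟩)
            rw [dif_neg hnx, mul_zero])
        rw [← h1, Finset.sum_map]
        refine Finset.sum_congr rfl fun j _ => ?_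
        simp only [Function.Embedding.coeFn_mk]
        rw [dif_pos (by simpa using j.2)]
        congr 1
      rw [key]
      have h2 := congrFun hg0 ⟨(i : ℕ), hi⟩
      simp only [Finset.sum_apply, Pi.smul_apply, smul_eq_mul, Pi.zero_apply, hw] at h2
      rw [← h2]
      refine Finset.sum_congr rfl fun j _ => ?_
      rw [mul_comm]
      congr 1

/-- main multilinearity identity -/
lemma sum_Dmat_det {k : ℕ} (l m : Fin k → ℕ) (hml : ∀ i, m i ≤ l i) :
    ∑ r, (Dmat l m r).det = ((∑ i, (l i - m i) : ℕ) : ℚ) * (Amat l m).det := by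
  set M := Amat l m with hM
  have hrow : ∀ r : Fin k, (fun j => (((l r : ℤ) - (m j : ℤ) - ((r : ℕ) : ℤ) + ((j : ℕ) : ℤ) : ℤ) : ℚ) * M r j)
      = (((l r : ℚ) - (r : ℕ)) • M r) + (fun j : Fin k => (((j : ℕ) : ℚ) - (m j : ℚ)) * M r j) := by
    intro r; funext j
    simp only [Pi.add_apply, Pi.smul_apply, smul_eq_mul]
    push_cast
    ring
  have h1 : ∀ r, (Dmat l m r).det
      = ((l r : ℚ) - (r : ℕ)) * M.det
        + (M.updateRow r (fun j => (((j : ℕ) : ℚ) - (m j : ℚ)) * M r j)).det := by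
    intro r
    rw [Dmat, ← hM, hrow, Matrix.det_updateRow_add, Matrix.det_updateRow_smul,
      Matrix.updateRow_eq_self]
  simp only [h1]
  rw [Finset.sum_add_distrib, ← Finset.sum_mul, sum_det_updateRow_mul, ← add_mul]
  congr 1
  rw [← Finset.sum_add_distrib, Nat.cast_sum]
  refine Finset.sum_congr rfl fun i _ => ?_
  rw [Nat.cast_sub (hml i)]
  ring

section general2
open Finset


section general
set_option linter.unusedSectionVars false
variable {α : Type*} [PartialOrder α] [DecidableEq α] {n : ℕ} {x : α}

lemma isMax_symm_last (f : α ≃ Fin (n + 1)) (hf : Monotone ⇑f) :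
    IsMax (f.symm (Fin.last n)) := by
  intro y hy
  have h1 := hf hy
  rw [Equiv.apply_symm_apply] at h1
  have h2 : f y = Fin.last n := le_antisymm (Fin.le_last _) h1
  exact le_of_eq (by rw [← h2, Equiv.symm_apply_apply])

/-- restrict an equivalence sending `x` to the top. -/
def resEquiv (f : α ≃ Fin (n + 1)) (hfx : f.symm (Fin.last n) = x) :
    {y : α // y ≠ x} ≃ Fin n where
  toFun y := (f y.1).castPred (fun hlast =>
    y.2 (f.injective (hlast.trans ((Equiv.symm_apply_eq f).mp hfx))))
  invFun j := ⟨f.symm j.castSucc, fun hyx => (Fin.castSucc_lt_last j).ne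
    (f.symm.injective (hyx.trans hfx.symm))⟩
  left_inv y := by apply Subtype.ext; simp
  right_inv j := by apply Fin.ext; simp

@[simp] lemma resEquiv_apply (f : α ≃ Fin (n + 1)) (hfx : f.symm (Fin.last n) = x)
    (y : {y : α // y ≠ x}) : ((resEquiv f hfx y : Fin n) : ℕ) = ((f y.1 : Fin (n+1)) : ℕ) := by
  simp [resEquiv]

/-- extend an equivalence by sending `x` to the top. -/
def extEquiv (g : {y : α // y ≠ x} ≃ Fin n) : α ≃ Fin (n + 1) where
  toFun y := if h : y = x then Fin.last n else (g ⟨y, h⟩).castSucc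
  invFun j := if h : j = Fin.last n then x else (g.symm (j.castPred h)).1
  left_inv y := by
    dsimp only
    by_cases h : y = x
    · simp [h]
    · rw [dif_neg h, dif_neg (Fin.castSucc_lt_last _).ne]
      simp
  right_inv j := by
    dsimp only
    by_cases h : j = Fin.last n
    · simp [h]
    · rw [dif_neg h, dif_neg (g.symm (j.castPred h)).2]
      simp

@[simp] lemma extEquiv_apply_ne (g : {y : α // y ≠ x} ≃ Fin n) {y : α} (h : y ≠ x) :
    extEquiv g y = (g ⟨y, h⟩).castSucc := by simp [extEquiv, h]

@[simp] lemma extEquiv_apply_self (g : {y : α // y ≠ x} ≃ Fin n) :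
    extEquiv g x = Fin.last n := by simp [extEquiv]

@[simp] lemma extEquiv_symm_last (g : {y : α // y ≠ x} ≃ Fin n) :
    (extEquiv g).symm (Fin.last n) = x := by
  show (if h : Fin.last n = Fin.last n then x else _) = x
  rw [dif_pos rfl]

lemma extEquiv_monotone (hx : IsMax x) (g : {y : α // y ≠ x} ≃ Fin n)
    (hg : Monotone ⇑g) : Monotone ⇑(extEquiv g) := by
  intro y y' hle
  by_cases h' : y' = x
  · subst h'; rw [extEquiv_apply_self]; exact Fin.le_last _
  · have h : y ≠ x := by
      intro hy
      subst hy
      exact h' (le_antisymm (hx hle) hle)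
    rw [extEquiv_apply_ne g h, extEquiv_apply_ne g h', Fin.castSucc_le_castSucc_iff]
    exact hg (show (⟨y, h⟩ : {y : α // y ≠ x}) ≤ ⟨y', h'⟩ from hle)

/-- linear extensions sending the top to a fixed maximal `x` correspond to linear
extensions of the complement of `x`. -/
noncomputable def restrictEquiv (hx : IsMax x) (n : ℕ) :
    {f : α ≃ Fin (n + 1) // Monotone ⇑f ∧ f.symm (Fin.last n) = x} ≃
      {f : {y : α // y ≠ x} ≃ Fin n // Monotone ⇑f} where
  toFun f := ⟨resEquiv f.1 f.2.2, by
    intro y y' hle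
    have h := f.2.1 (show y.1 ≤ y'.1 from hle)
    rw [Fin.le_def] at h ⊢
    simpa using h⟩
  invFun g := ⟨extEquiv g.1, extEquiv_monotone hx g.1 g.2, extEquiv_symm_last g.1⟩
  left_inv f := by
    apply Subtype.ext
    apply Equiv.ext
    intro y
    by_cases h : y = x
    · rw [h, extEquiv_apply_self]
      exact (Equiv.symm_apply_eq f.1).mp f.2.2
    · rw [extEquiv_apply_ne _ h]
      apply Fin.ext
      simp [resEquiv]
  right_inv g := by
    apply Subtype.ext
    apply Equiv.ext
    intro y
    apply Fin.ext
    rw [resEquiv_apply, extEquiv_apply_ne _ y.2]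
    simp

/-- transport of the set of linear extensions along an order isomorphism. -/
def linExtCongr {β γ : Type*} [PartialOrder β] [PartialOrder γ] (e : β ≃o γ) (N : ℕ) :
    {f : β ≃ Fin N // Monotone ⇑f} ≃ {f : γ ≃ Fin N // Monotone ⇑f} where
  toFun f := ⟨e.symm.toEquiv.trans f.1, f.2.comp e.symm.monotone⟩
  invFun f := ⟨e.toEquiv.trans f.1, f.2.comp e.monotone⟩
  left_inv f := Subtype.ext (by ext y; simp)
  right_inv f := Subtype.ext (by ext y; simp)

lemma card_linext_base {α : Type*} [PartialOrder α] [IsEmpty α] :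
    Nat.card {f : α ≃ Fin 0 // Monotone ⇑f} = 1 := by
  haveI : Unique {f : α ≃ Fin 0 // Monotone ⇑f} :=
    { default := ⟨Equiv.equivOfIsEmpty _ _, fun a => isEmptyElim a⟩
      uniq := fun f => Subtype.ext (Equiv.ext fun a => isEmptyElim a) }
  exact Nat.card_unique

lemma nat_card_fiber_sum {A : Type*} [Finite A] {ι : Type*} [Fintype ι] (φ : A → ι) :
    Nat.card A = ∑ i, Nat.card {a : A // φ a = i} := by
  classical
  letI := Fintype.ofFinite A
  rw [Nat.card_eq_fintype_card, ← Fintype.card_congr (Equiv.sigmaFiberEquiv φ),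
    Fintype.card_sigma]
  exact Finset.sum_congr rfl fun i _ => (Nat.card_eq_fintype_card).symm

end general

end general2


section skew
variable {k : ℕ}

abbrev Cells (l m : Fin k → ℕ) := {c : Fin k × ℕ // m c.1 < c.2 ∧ c.2 ≤ l c.1}

instance cellsFinite (l m : Fin k → ℕ) : Finite (Cells l m) := by
  apply Finite.of_injective
    (fun c : Cells l m => ((c.1.1, ⟨c.1.2, Nat.lt_succ_of_le
      (le_trans c.2.2 (Finset.le_sup (Finset.mem_univ c.1.1)))⟩) :
      Fin k × Fin (Finset.univ.sup l + 1)))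
  intro a b hab
  simp only [Prod.mk.injEq, Fin.mk.injEq] at hab
  exact Subtype.ext (Prod.ext hab.1 hab.2)

/-- the corner cell of a row. -/
def xcell (l m : Fin k → ℕ) (i : Fin k) (h1 : m i < l i) : Cells l m :=
  ⟨(i, l i), ⟨h1, le_refl _⟩⟩

lemma isMax_xcell {l m : Fin k → ℕ} {i : Fin k} (h1 : m i < l i)
    (h2 : ∀ i', i < i' → l i' < l i) : IsMax (xcell l m i h1) := by
  intro c hle
  obtain ⟨hfst, hsnd⟩ := (Prod.le_def.mp (show (xcell l m i h1).1 ≤ c.1 from hle))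
  simp only [xcell] at hfst hsnd
  have hc1 : c.1.1 = i := by
    by_contra hne
    have hlt : i < c.1.1 := lt_of_le_of_ne hfst (fun h => hne (h.symm))
    have := h2 _ hlt
    have := c.2.2
    omega
  have hc2 : c.1.2 = l i := by
    have := c.2.2
    rw [hc1] at this
    omega
  apply le_of_eq
  apply Subtype.ext
  apply Prod.ext
  · exact hc1
  · exact hc2

/-- an isMax cell with first coordinate `i` (a corner row) is the corner cell. -/
lemma eq_xcell_of_isMax {l m : Fin k → ℕ} {i : Fin k} (h1 : m i < l i)
    {y : Cells l m} (hy : IsMax y) (hyi : y.1.1 = i) : y = xcell l m i h1 := by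
  have hle : y ≤ xcell l m i h1 := by
    show y.1 ≤ (i, l i)
    rw [Prod.le_def]
    constructor
    · exact le_of_eq hyi
    · have := y.2.2; rw [hyi] at this; exact this
  exact le_antisymm hle (hy hle)

/-- order iso between the complement of a corner cell and the smaller skew shape. -/
def cornerIso (l m : Fin k → ℕ) (i : Fin k) (h1 : m i < l i) :
    {y : Cells l m // y ≠ xcell l m i h1} ≃o Cells (Function.update l i (l i - 1)) m where
  toFun y := ⟨y.1.1, ⟨y.1.2.1, by
    rw [Function.update_apply]
    split_ifs with h
    · have hne : y.1.1.2 ≠ l i := by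
        intro hv
        exact y.2 (Subtype.ext (Prod.ext h (by rw [hv]; rfl)))
      have := y.1.2.2
      rw [h] at this
      omega
    · exact y.1.2.2⟩⟩
  invFun c := ⟨⟨c.1, ⟨c.2.1, by
      have := c.2.2
      rw [Function.update_apply] at this
      split_ifs at this with h
      · rw [h]; omega
      · exact this⟩⟩, by
    intro hc
    have h2 := congrArg (fun y : Cells l m => y.1.2) hc
    have h3 := congrArg (fun y : Cells l m => y.1.1) hc
    simp only [xcell] at h2 h3
    have := c.2.2
    rw [Function.update_apply, if_pos h3] at this
    omega⟩
  left_inv y := by apply Subtype.ext; apply Subtype.ext; rfl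
  right_inv c := by apply Subtype.ext; rfl
  map_rel_iff' := Iff.rfl

end skew

-- Amat_update and sum bookkeeping
section upd
variable {k : ℕ}

lemma Amat_update (l m : Fin k → ℕ) (i : Fin k) (h1 : 1 ≤ l i) :
    Amat (Function.update l i (l i - 1)) m = Dmat l m i := by
  funext a j
  by_cases h : a = i
  · subst h
    rw [Dmat_row_self]
    show ent _ = _
    rw [Function.update_self]
    congr 1
    have : ((l a - 1 : ℕ) : ℤ) = (l a : ℤ) - 1 := by omega
    rw [this]
    ring
  · rw [Dmat_row_ne l m h]
    show ent _ = _
    rw [Function.update_of_ne h]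

lemma sum_update (l m : Fin k → ℕ) (i : Fin k) (hml : ∀ j, m j ≤ l j) (h1 : m i < l i) :
    ∑ j, (Function.update l i (l i - 1) j - m j) = (∑ j, (l j - m j)) - 1 := by
  have hfun : (fun j => Function.update l i (l i - 1) j - m j)
      = Function.update (fun j => l j - m j) i (l i - 1 - m i) := by
    funext j
    rw [Function.update_apply, Function.update_apply]
    split_ifs with h
    · rw [h]
    · rfl
  rw [hfun, Finset.sum_update_of_mem (Finset.mem_univ i), Finset.sdiff_singleton_eq_erase]
  have h2 := Finset.add_sum_erase Finset.univ (fun j => l j - m j) (Finset.mem_univ i)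
  omega

end upd


section main
variable {k : ℕ}

lemma Amat_det_eq_one (l m : Fin k → ℕ) (hm : Antitone m) (heq : ∀ i, l i = m i) :
    (Amat l m).det = 1 := by
  rw [Matrix.det_of_upperTriangular (M := Amat l m) (by
    intro i j hij
    have h1 : m i ≤ m j := hm (le_of_lt hij)
    have h2 : (j : ℕ) < (i : ℕ) := hij
    show ent _ = 0
    apply ent_of_neg
    have := heq i
    omega)]
  apply Finset.prod_eq_one
  intro i _
  show ent _ = 1
  have hz : (l i : ℤ) - (m i : ℤ) - ((i : ℕ) : ℤ) + ((i : ℕ) : ℤ) = 0 := by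
    have := heq i; omega
  rw [hz]
  norm_num [ent]

theorem aux : ∀ (n : ℕ) {k : ℕ} (l m : Fin k → ℕ), Antitone l → Antitone m →
    (∀ i, m i ≤ l i) → (∑ i, (l i - m i)) = n →
    (Nat.card {f : Cells l m ≃ Fin n // Monotone ⇑f} : ℚ)
      = (n.factorial : ℚ) * (Amat l m).det := by
  intro n
  induction n using Nat.strong_induction_on with
  | _ n IH =>
  intro k l m hl hm hml hsum
  cases n with
  | zero =>
    have heq : ∀ i, l i = m i := by
      intro i
      have h0 := (Finset.sum_eq_zero_iff.mp hsum) i (Finset.mem_univ i)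
      have := hml i
      omega
    haveI : IsEmpty (Cells l m) := by
      constructor
      rintro ⟨⟨i, j⟩, hij⟩
      have := heq i
      obtain ⟨hij1, hij2⟩ := hij
      simp only at hij1 hij2
      omega
    rw [card_linext_base, Amat_det_eq_one l m hm heq]
    norm_num
  | succ n' =>
    classical
    have hfib := nat_card_fiber_sum
      (fun a : {f : Cells l m ≃ Fin (n' + 1) // Monotone ⇑f} => ((a.1.symm (Fin.last n')).1.1))
    have hterm : ∀ i : Fin k,
        (Nat.card {a : {f : Cells l m ≃ Fin (n' + 1) // Monotone ⇑f} //
            ((a.1.symm (Fin.last n')).1.1) = i} : ℚ)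
          = (n'.factorial : ℚ) * (Dmat l m i).det := by
      intro i
      by_cases hC : m i < l i ∧ ∀ i', i < i' → l i' < l i
      · obtain ⟨h1, h2⟩ := hC
        have e1 : {a : {f : Cells l m ≃ Fin (n' + 1) // Monotone ⇑f} //
              ((a.1.symm (Fin.last n')).1.1) = i}
            ≃ {f : Cells l m ≃ Fin (n' + 1) //
                Monotone ⇑f ∧ (f.symm (Fin.last n')).1.1 = i} :=
          Equiv.subtypeSubtypeEquivSubtypeInter (fun f : Cells l m ≃ Fin (n' + 1) => Monotone ⇑f)
            (fun f => (f.symm (Fin.last n')).1.1 = i)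
        have e2 : {f : Cells l m ≃ Fin (n' + 1) //
              Monotone ⇑f ∧ (f.symm (Fin.last n')).1.1 = i}
            ≃ {f : Cells l m ≃ Fin (n' + 1) //
                Monotone ⇑f ∧ f.symm (Fin.last n') = xcell l m i h1} :=
          Equiv.subtypeEquivRight (fun f => and_congr_right (fun hf =>
            ⟨fun hfi => eq_xcell_of_isMax h1 (isMax_symm_last f hf) hfi,
             fun he => by rw [he]; rfl⟩))
        have e3 := restrictEquiv (isMax_xcell h1 h2) n'
        have e4 := linExtCongr (cornerIso l m i h1).symm n'
        rw [Nat.card_congr (((e1.trans e2).trans e3).trans e4.symm)]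
        have hml' : ∀ j, m j ≤ Function.update l i (l i - 1) j := by
          intro j
          rw [Function.update_apply]
          split_ifs with h
          · rw [h]; omega
          · exact hml j
        have hl' : Antitone (Function.update l i (l i - 1)) := by
          intro a b hab
          rw [Function.update_apply, Function.update_apply]
          split_ifs with hb ha hc
          · exact le_refl _
          · have h3 : l b ≤ l a := hl hab
            rw [hb] at h3
            omega
          · have hba : i ≤ b := (le_of_eq hc.symm).trans hab
            have hbne : i < b := lt_of_le_of_ne hba (fun h => hb h.symm)
            have := h2 b hbne
            omega
          · exact hl hab
        have hsum' : ∑ j, (Function.update l i (l i - 1) j - m j) = n' := by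
          rw [sum_update l m i hml h1, hsum]
          omega
        rw [IH n' (Nat.lt_succ_self n') _ m hl' hm hml' hsum',
          Amat_update l m i (by omega)]
      · have hzero : (Dmat l m i).det = 0 := by
          push_neg at hC
          by_cases h1 : m i < l i
          · obtain ⟨i', hi', hge⟩ := hC h1
            exact Dmat_det_zero_of_eq l m hl hi'
              (le_antisymm (hl (le_of_lt hi')) hge)
          · exact Dmat_det_zero_of_empty l m hl hm
              (le_antisymm (not_lt.mp h1) (hml i))
        haveI : IsEmpty {a : {f : Cells l m ≃ Fin (n' + 1) // Monotone ⇑f} //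
            ((a.1.symm (Fin.last n')).1.1) = i} := by
          constructor
          rintro ⟨⟨f, hf⟩, hfi⟩
          simp only at hfi
          have hymax : IsMax (f.symm (Fin.last n')) := isMax_symm_last f hf
          set y := f.symm (Fin.last n') with hy
          have h1 : m i < l i := by
            have hy1 := y.2.1
            have hy2 := y.2.2
            rw [hfi] at hy1 hy2
            omega
          push_neg at hC
          obtain ⟨i', hi', hge⟩ := hC h1
          have hge' : l i ≤ l i' := hge
          have hcell : m i' < l i' := lt_of_le_of_lt (hm (le_of_lt hi')) (lt_of_lt_of_le h1 hge')
          have hle : y ≤ (⟨(i', l i'), ⟨hcell, le_refl _⟩⟩ : Cells l m) := by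
            show y.1 ≤ (i', l i')
            rw [Prod.le_def]
            constructor
            · show y.1.1 ≤ i'
              rw [Fin.le_def, hfi]
              exact le_of_lt hi'
            · show y.1.2 ≤ l i'
              have hy2 := y.2.2
              rw [hfi] at hy2
              omega
          have := hymax hle
          have hfst : (i' : ℕ) ≤ (y.1.1 : ℕ) := (Prod.le_def.mp this).1
          rw [hfi] at hfst
          have : (i : ℕ) < (i' : ℕ) := hi'
          omega
        rw [Nat.card_of_isEmpty, hzero]
        simp
    rw [hfib]
    push_cast
    calc (∑ i : Fin k, (Nat.card {a : {f : Cells l m ≃ Fin (n' + 1) // Monotone ⇑f} //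
            ((a.1.symm (Fin.last n')).1.1) = i} : ℚ))
        = ∑ i : Fin k, (n'.factorial : ℚ) * (Dmat l m i).det :=
          Finset.sum_congr rfl fun i _ => hterm i
      _ = (n'.factorial : ℚ) * ∑ i : Fin k, (Dmat l m i).det := by rw [Finset.mul_sum]
      _ = (n'.factorial : ℚ) * (((n' + 1 : ℕ) : ℚ) * (Amat l m).det) := by
          rw [sum_Dmat_det l m hml, hsum]
      _ = ((n' + 1).factorial : ℚ) * (Amat l m).det := by
          rw [Nat.factorial_succ]
          push_cast
          ring

end main

/-- Let `λ = l` be a partition with `k` nonzero parts and `μ = m ⊆ λ`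
(padded with zeros).  The cells of the skew diagram `λ/μ`, ordered componentwise, form the
poset `P_{λ/μ}`, and the number of its linear extensions (order-preserving bijections onto
the chain `Fin (|λ|-|μ|)`) is `(|λ|-|μ|)! ⬝ det(1/(λᵢ-μⱼ-i+j)!)`, with `1/s! = 0` for `s < 0`. -/
theorem stmt_6 (k : ℕ) (l m : Fin k → ℕ)
    (hl : Antitone l) (hlpos : ∀ i, 0 < l i)
    (hm : Antitone m) (hml : ∀ i, m i ≤ l i) :
    (Nat.card {f : {c : Fin k × ℕ // m c.1 < c.2 ∧ c.2 ≤ l c.1} ≃ Fin (∑ i, (l i - m i)) //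
        Monotone ⇑f} : ℚ)
      = ((∑ i, (l i - m i)).factorial : ℚ) *
          Matrix.det (Matrix.of fun i j : Fin k =>
            if 0 ≤ (l i : ℤ) - (m j : ℤ) - ((i : ℕ) : ℤ) + ((j : ℕ) : ℤ) then
              (1 : ℚ) / (((l i : ℤ) - (m j : ℤ) - ((i : ℕ) : ℤ) + ((j : ℕ) : ℤ)).toNat.factorial)
            else 0) := by
  have h := aux (∑ i, (l i - m i)) l m hl hm hml rfl
  have hAmat : Amat l m = Matrix.of (fun i j : Fin k =>
      if 0 ≤ (l i : ℤ) - (m j : ℤ) - ((i : ℕ) : ℤ) + ((j : ℕ) : ℤ) then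
        (1 : ℚ) / (((l i : ℤ) - (m j : ℤ) - ((i : ℕ) : ℤ) + ((j : ℕ) : ℤ)).toNat.factorial)
      else 0) := by
    funext i j
    simp [Amat, ent, one_div]
  exact h.trans (by rw [← hAmat])
end

section
/- Let n ≥ 1 and k ≥ 0 be integers. Let G ∈ ℤ⟦q⟧ be the formal power series whose coefficient of q^N is the number of arrays of nonnegative integers (π_{1,1}, …, π_{1,n+k}; π_{2,1}, …, π_{2,n}) satisfying π_{1,1} ≥ π_{1,2} ≥ ⋯ ≥ π_{1,n+k} ≥ 0, π_{2,1} ≥ π_{2,2} ≥ ⋯ ≥ π_{2,n} ≥ 0, π_{1,j} ≥ π_{2,j} for 1 ≤ j ≤ n, and total sum Σ π_{i,j} = N. Then in ℤ⟦q⟧: (q;q)_{n+k+1} · (q;q)_n · G = 1 − q + q^{n+1} − q^{n+k+1}. -/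
open PowerSeries

/-- The q-shifted factorial `(q;q)_s = ∏_{i=1}^{s} (1 - q^i)` in `ℤ⟦q⟧`. -/
noncomputable def qqPoch (s : ℕ) : PowerSeries ℤ :=
  ∏ i ∈ Finset.range s, (1 - PowerSeries.X ^ (i + 1))

set_option linter.unusedSectionVars false

section AuxStmt7
open Finset

namespace Stmt7

def OK (a : ℕ) (f : ℕ → ℕ) : Prop := Antitone f ∧ ∀ i, a ≤ i → f i = 0

def Par (a N : ℕ) : Type := {f : ℕ → ℕ // OK a f ∧ ∑ i ∈ Finset.range a, f i = N}

def PPair (a b N : ℕ) : Type :=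
  {p : (ℕ → ℕ) × (ℕ → ℕ) // OK a p.1 ∧ OK b p.2 ∧
    (∑ i ∈ Finset.range a, p.1 i) + (∑ i ∈ Finset.range b, p.2 i) = N}

lemma OK.bound {a N : ℕ} {f : ℕ → ℕ} (h : OK a f) (hs : ∑ i ∈ Finset.range a, f i ≤ N) :
    ∀ i, f i ≤ N := by
  intro i
  rcases lt_or_ge i a with hi | hi
  · exact le_trans (Finset.single_le_sum (fun j _ => Nat.zero_le _) (Finset.mem_range.mpr hi)) hs
  · simp [h.2 i hi]

lemma eq_of_agree {a : ℕ} {f g : ℕ → ℕ} (hf : OK a f) (hg : OK a g)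
    (h : ∀ i, i < a → f i = g i) : f = g := by
  funext i
  rcases lt_or_ge i a with hi | hi
  · exact h i hi
  · rw [hf.2 i hi, hg.2 i hi]

instance parFinite (a N : ℕ) : Finite (Par a N) := by
  apply Finite.of_injective (fun f => (fun i : Fin a => (⟨f.1 i, Nat.lt_succ_of_le
    (f.2.1.bound (le_of_eq f.2.2) i)⟩ : Fin (N+1))))
  intro f g hfg
  exact Subtype.ext (eq_of_agree f.2.1 g.2.1 fun i hi => by
    simpa using congrArg Fin.val (congrFun hfg ⟨i, hi⟩))

instance ppairFinite (a b N : ℕ) : Finite (PPair a b N) := by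
  apply Finite.of_injective (fun p =>
    ((fun i : Fin a => (⟨p.1.1 i, Nat.lt_succ_of_le
        (p.2.1.bound (le_trans (Nat.le_add_right _ _) (le_of_eq p.2.2.2)) i)⟩ : Fin (N+1))),
     (fun i : Fin b => (⟨p.1.2 i, Nat.lt_succ_of_le
        (p.2.2.1.bound (le_trans (Nat.le_add_left _ _) (le_of_eq p.2.2.2)) i)⟩ : Fin (N+1)))))
  intro p q hpq
  obtain ⟨h1, h2⟩ := Prod.mk.injEq .. ▸ hpq
  refine Subtype.ext (Prod.ext ?_ ?_)
  · exact eq_of_agree p.2.1 q.2.1 fun i hi => by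
      simpa using congrArg Fin.val (congrFun h1 ⟨i, hi⟩)
  · exact eq_of_agree p.2.2.1 q.2.2.1 fun i hi => by
      simpa using congrArg Fin.val (congrFun h2 ⟨i, hi⟩)

noncomputable def cnt (a N : ℕ) : ℕ := Nat.card (Par a N)
noncomputable def pcnt (a b N : ℕ) : ℕ := Nat.card (PPair a b N)
noncomputable def ncnt (a b N : ℕ) : ℕ :=
  Nat.card {p : PPair a b N // ∀ j, p.1.2 j ≤ p.1.1 j}
noncomputable def ccnt (a b N : ℕ) : ℕ :=
  Nat.card {p : PPair a b N // ∃ j, p.1.1 j < p.1.2 j}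

lemma split (a b N : ℕ) : pcnt a b N = ncnt a b N + ccnt a b N := by
  classical
  have e := Equiv.sumCompl (fun p : PPair a b N => ∃ j, p.1.1 j < p.1.2 j)
  have := Nat.card_congr e.symm
  rw [pcnt, this, Nat.card_sum, ncnt, ccnt, add_comm]
  congr 1
  apply Nat.card_congr
  exact Equiv.subtypeEquivRight fun p => by push_neg; rfl

end Stmt7

namespace Stmt7b
open Stmt7

lemma card_sigma' {ι : Type*} [Fintype ι] {α : ι → Type*} [∀ i, Finite (α i)] :
    Nat.card (Σ i, α i) = ∑ i, Nat.card (α i) := by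
  letI : ∀ i, Fintype (α i) := fun i => Fintype.ofFinite _
  simp [Nat.card_eq_fintype_card]

noncomputable def sigmaEquiv (a b N : ℕ) :
    PPair a b N ≃ Σ x : (Finset.HasAntidiagonal.antidiagonal N : Finset (ℕ × ℕ)),
      Par a x.1.1 × Par b x.1.2 where
  toFun p := ⟨⟨(∑ i ∈ Finset.range a, p.1.1 i, ∑ i ∈ Finset.range b, p.1.2 i),
      Finset.HasAntidiagonal.mem_antidiagonal.mpr p.2.2.2⟩,
      (⟨p.1.1, p.2.1, rfl⟩, ⟨p.1.2, p.2.2.1, rfl⟩)⟩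
  invFun s := ⟨(s.2.1.1, s.2.2.1), s.2.1.2.1, s.2.2.2.1, by
      rw [s.2.1.2.2, s.2.2.2.2]; exact Finset.HasAntidiagonal.mem_antidiagonal.mp s.1.2⟩
  left_inv p := rfl
  right_inv := by
    rintro ⟨⟨⟨i, j⟩, hx⟩, ⟨f, hf1, hf2⟩, ⟨g, hg1, hg2⟩⟩
    dsimp only at hf2 hg2
    subst hf2; subst hg2
    rfl

lemma pcnt_eq (a b N : ℕ) :
    pcnt a b N = ∑ x ∈ Finset.HasAntidiagonal.antidiagonal N, cnt a x.1 * cnt b x.2 := by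
  rw [pcnt, Nat.card_congr (sigmaEquiv a b N), card_sigma']
  rw [← Finset.sum_attach (Finset.HasAntidiagonal.antidiagonal N) (fun x => cnt a x.1 * cnt b x.2)]
  exact Finset.sum_congr rfl fun x _ => by rw [Nat.card_prod]; rfl

noncomputable def P (a : ℕ) : PowerSeries ℤ := mk fun N => (cnt a N : ℤ)

lemma P_mul_P (a b : ℕ) : P a * P b = mk fun N => (pcnt a b N : ℤ) := by
  ext N
  rw [coeff_mk, coeff_mul, pcnt_eq]
  push_cast
  exact Finset.sum_congr rfl fun x _ => by rw [P, P, coeff_mk, coeff_mk]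

end Stmt7b

namespace Stmt7c
open Stmt7 Stmt7b

def zeroLastEquiv (a N : ℕ) : {p : Par (a+1) N // p.1 a = 0} ≃ Par a N where
  toFun f := ⟨f.1.1,
    ⟨f.1.2.1.1, fun i hi => by
      have h := f.1.2.1.1 hi
      rw [f.2] at h
      exact Nat.le_zero.mp h⟩,
    by have := f.1.2.2; rwa [Finset.sum_range_succ, f.2, add_zero] at this⟩
  invFun g := ⟨⟨g.1, ⟨g.2.1.1, fun i hi => g.2.1.2 i (le_trans (Nat.le_succ a) hi)⟩,
      by rw [Finset.sum_range_succ, g.2.1.2 a le_rfl, add_zero]; exact g.2.2⟩,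
    g.2.1.2 a le_rfl⟩
  left_inv f := by apply Subtype.ext; apply Subtype.ext; rfl
  right_inv g := by apply Subtype.ext; rfl

def posLastEquiv (a N : ℕ) : {p : Par (a+1) (N + (a+1)) // p.1 a ≠ 0} ≃ Par (a+1) N where
  toFun f := ⟨fun i => f.1.1 i - 1,
    ⟨fun i j hij => Nat.sub_le_sub_right (f.1.2.1.1 hij) 1,
     fun i hi => by show f.1.1 i - 1 = 0; rw [f.1.2.1.2 i hi]⟩,
    by
      have hpos : ∀ i ∈ Finset.range (a+1), 1 ≤ f.1.1 i := by
        intro i hi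
        have : f.1.1 a ≤ f.1.1 i ∨ f.1.1 i ≥ 1 := by
          rcases Nat.lt_or_ge i (a+1) with h | h
          · exact Or.inl (f.1.2.1.1 (Nat.lt_succ_iff.mp h))
          · exact Or.inl (f.1.2.1.1 (Nat.lt_succ_iff.mp (Finset.mem_range.mp hi)))
        rcases this with h | h
        · exact le_trans (Nat.one_le_iff_ne_zero.mpr f.2) h
        · exact h
      show ∑ i ∈ Finset.range (a+1), (f.1.1 i - 1) = N
      rw [Finset.sum_tsub_distrib _ hpos, f.1.2.2]
      simp⟩
  invFun g := ⟨⟨fun i => if i < a+1 then g.1 i + 1 else 0,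
    ⟨antitone_nat_of_succ_le (by
        intro i
        by_cases h1 : i + 1 < a + 1
        · have h2 : i < a + 1 := Nat.lt_of_succ_lt h1
          simp only [h1, h2, if_pos]
          exact Nat.add_le_add_right (g.2.1.1 (Nat.le_succ i)) 1
        · simp only [h1, if_neg, if_false]
          exact Nat.zero_le _),
     fun i hi => by simp [Nat.not_lt.mpr hi]⟩,
    by
      rw [Finset.sum_congr rfl (fun i hi => if_pos (Finset.mem_range.mp hi)),
        Finset.sum_add_distrib, g.2.2]
      simp⟩,
    by simp⟩
  left_inv f := by
    apply Subtype.ext; apply Subtype.ext; funext i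
    by_cases h : i < a + 1
    · have h1 : 1 ≤ f.1.1 i := by
        refine le_trans (Nat.one_le_iff_ne_zero.mpr f.2) (f.1.2.1.1 ?_)
        exact Nat.lt_succ_iff.mp h
      simp [h, Nat.sub_add_cancel h1]
    · simp [h, f.1.2.1.2 i (Nat.not_lt.mp h)]
  right_inv g := by
    apply Subtype.ext; funext i
    by_cases h : i < a + 1
    · simp [h]
    · simp [h, g.2.1.2 i (Nat.not_lt.mp h)]

lemma posLast_empty (a N : ℕ) (hN : N < a + 1) :
    IsEmpty {p : Par (a+1) N // p.1 a ≠ 0} := by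
  constructor
  rintro ⟨⟨f, ⟨hanti, hsupp⟩, hsum⟩, hne⟩
  have hpos : ∀ i ∈ Finset.range (a+1), 1 ≤ f i := fun i hi =>
    le_trans (Nat.one_le_iff_ne_zero.mpr hne) (hanti (Nat.lt_succ_iff.mp (Finset.mem_range.mp hi)))
  have : a + 1 ≤ N := by
    calc a + 1 = ∑ _i ∈ Finset.range (a+1), 1 := by simp
    _ ≤ ∑ i ∈ Finset.range (a+1), f i := Finset.sum_le_sum hpos
    _ = N := hsum
  omega

lemma cnt_split (a M : ℕ) :
    cnt (a+1) M = cnt a M + Nat.card {p : Par (a+1) M // p.1 a ≠ 0} := by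
  classical
  have e := Equiv.sumCompl (fun p : Par (a+1) M => p.1 a = 0)
  rw [cnt, Nat.card_congr e.symm, Nat.card_sum,
    Nat.card_congr (zeroLastEquiv a M), cnt]

lemma cnt_succ_low (a M : ℕ) (h : M < a + 1) : cnt (a+1) M = cnt a M := by
  haveI := posLast_empty a M h
  rw [cnt_split a M, Nat.card_of_isEmpty, add_zero]

lemma cnt_succ_high (a N : ℕ) :
    cnt (a+1) (N + (a+1)) = cnt a (N + (a+1)) + cnt (a+1) N := by
  rw [cnt_split a (N + (a+1)), Nat.card_congr (posLastEquiv a N)]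
  rfl

lemma recur1 (a : ℕ) : (1 - X ^ (a+1)) * P (a+1) = P a := by
  ext M
  rw [sub_mul, one_mul, map_sub]
  rw [show (X : PowerSeries ℤ) ^ (a+1) * P (a+1) = P (a+1) * X ^ (a+1) by ring,
    PowerSeries.coeff_mul_X_pow']
  simp only [P, coeff_mk]
  split_ifs with h
  · obtain ⟨N, rfl⟩ := Nat.exists_eq_add_of_le' h
    have := cnt_succ_high a N
    rw [show N + (a+1) - (a+1) = N by omega]
    push_cast [this]
    ring
  · rw [cnt_succ_low a M (by omega)]
    ring

lemma P_zero : P 0 = 1 := by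
  ext M
  rw [P, coeff_mk, coeff_one]
  rcases Nat.eq_zero_or_pos M with rfl | hM
  · have : Nat.card (Par 0 0) = 1 := by
      rw [Nat.card_eq_one_iff_unique]
      constructor
      · constructor
        rintro ⟨f, ⟨_, hf⟩, _⟩ ⟨g, ⟨_, hg⟩, _⟩
        apply Subtype.ext; funext i
        show f i = g i
        rw [hf i (Nat.zero_le i), hg i (Nat.zero_le i)]
      · exact ⟨⟨fun _ => 0, ⟨antitone_const, fun _ _ => rfl⟩, by simp⟩⟩
    simp [cnt, this]
  · have : IsEmpty (Par 0 M) := by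
      constructor; rintro ⟨f, _, hsum⟩
      simp at hsum; omega
    simp [cnt, Nat.card_of_isEmpty, this]
    omega

lemma poch_P (a : ℕ) : qqPoch a * P a = 1 := by
  induction a with
  | zero => simp [qqPoch, P_zero]
  | succ a ih =>
    rw [qqPoch, Finset.prod_range_succ, ← qqPoch, mul_assoc, recur1 a, ih]

end Stmt7c

namespace Stmt7d
open Stmt7 Stmt7b Stmt7c

/-- forward reflection: first component -/
def A (f g : ℕ → ℕ) (j : ℕ) : ℕ → ℕ := fun i => if i ≤ j then g i - 1 else f (i-1)
/-- forward reflection: second component -/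
def B (f g : ℕ → ℕ) (j : ℕ) : ℕ → ℕ := fun i => if i < j then f i + 1 else g (i+1)
/-- backward reflection: first component -/
def C (α β : ℕ → ℕ) (j : ℕ) : ℕ → ℕ := fun i => if i < j then β i - 1 else α (i+1)
/-- backward reflection: second component -/
def D (α β : ℕ → ℕ) (j : ℕ) : ℕ → ℕ := fun i => if i ≤ j then α i + 1 else β (i-1)

section Forward

variable {a b j N : ℕ} {f g : ℕ → ℕ}
  (hb : 1 ≤ b) (hba : b ≤ a)
  (hf : OK a f) (hg : OK b g)
  (hj : f j < g j) (hmin : ∀ i, i < j → ¬ f i < g i)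

include hg hj in
lemma jlt : j < b := by
  by_contra h
  rw [hg.2 j (Nat.not_lt.mp h)] at hj
  omega

include hg hj in
lemma g_pos : ∀ i, i ≤ j → 1 ≤ g i := fun i hi => by
  have := hg.1 hi
  omega

include hba hf hg hj in
lemma A_ok : OK (a+1) (A f g j) := by
  constructor
  · apply antitone_nat_of_succ_le
    intro i
    unfold A
    by_cases h1 : i + 1 ≤ j
    · rw [if_pos h1, if_pos (by omega)]
      have := hg.1 (by omega : i ≤ i + 1)
      omega
    · by_cases h2 : i ≤ j
      · have hij : i = j := by omega
        rw [if_neg h1, if_pos h2, Nat.add_sub_cancel]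
        subst hij
        omega
      · rw [if_neg h1, if_neg h2]
        exact hf.1 (by omega)
  · intro i hi
    have hjb := jlt hg hj
    unfold A
    rw [if_neg (by omega), hf.2 (i-1) (by omega)]

include hg hj hmin in
lemma B_ok (hf : OK a f) : OK (b-1) (B f g j) := by
  have hjb := jlt hg hj
  constructor
  · apply antitone_nat_of_succ_le
    intro i
    unfold B
    by_cases h1 : i + 1 < j
    · rw [if_pos h1, if_pos (by omega)]
      have := hf.1 (by omega : i ≤ i + 1)
      omega
    · by_cases h2 : i < j
      · have hij : i + 1 = j := by omega
        rw [if_neg h1, if_pos h2]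
        have e1 : ¬ f i < g i := hmin i h2
        have e2 : g (i+1+1) ≤ g i := hg.1 (by omega)
        omega
      · rw [if_neg h1, if_neg h2]
        exact hg.1 (by omega)
  · intro i hi
    unfold B
    rw [if_neg (by omega), hg.2 (i+1) (by omega)]

include hba hg hj in
omit hb in
lemma sum_fwd :
    (∑ i ∈ Finset.range (a+1), A f g j i) + (∑ i ∈ Finset.range (b-1), B f g j i) + 1
      = (∑ i ∈ Finset.range a, f i) + (∑ i ∈ Finset.range b, g i) := by
  have hjb : j < b := jlt hg hj
  have hg1 := g_pos hg hj
  -- split the A-sum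
  have sA : ∑ i ∈ Finset.range (a+1), A f g j i
      = (∑ i ∈ Finset.range (j+1), (g i - 1)) + ∑ i ∈ Finset.Ico (j+1) (a+1), f (i-1) := by
    rw [Finset.range_eq_Ico, ← Finset.sum_Ico_consecutive _ (Nat.zero_le (j+1)) (by omega : j+1 ≤ a+1),
      ← Finset.range_eq_Ico]
    congr 1
    · exact Finset.sum_congr rfl fun i hi => if_pos (by
        have := Finset.mem_range.mp hi; omega)
    · exact Finset.sum_congr rfl fun i hi => if_neg (by
        have := (Finset.mem_Ico.mp hi).1; omega)
  have sA2 : ∑ i ∈ Finset.Ico (j+1) (a+1), f (i-1) = ∑ i ∈ Finset.Ico j a, f i := by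
    rw [Finset.sum_Ico_eq_sum_range, Finset.sum_Ico_eq_sum_range]
    rw [show a + 1 - (j+1) = a - j by omega]
    exact Finset.sum_congr rfl fun i _ => by congr 1; omega
  have sB : ∑ i ∈ Finset.range (b-1), B f g j i
      = (∑ i ∈ Finset.range j, (f i + 1)) + ∑ i ∈ Finset.Ico j (b-1), g (i+1) := by
    rw [Finset.range_eq_Ico, ← Finset.sum_Ico_consecutive _ (Nat.zero_le j) (by omega : j ≤ b-1),
      ← Finset.range_eq_Ico]
    congr 1
    · exact Finset.sum_congr rfl fun i hi => if_pos (Finset.mem_range.mp hi)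
    · exact Finset.sum_congr rfl fun i hi => if_neg (by
        have := (Finset.mem_Ico.mp hi).1; omega)
  have sB2 : ∑ i ∈ Finset.Ico j (b-1), g (i+1) = ∑ i ∈ Finset.Ico (j+1) b, g i := by
    rw [Finset.sum_Ico_eq_sum_range, Finset.sum_Ico_eq_sum_range]
    rw [show b - 1 - j = b - (j+1) by omega]
    exact Finset.sum_congr rfl fun i _ => by congr 1; omega
  have sgr : ∑ i ∈ Finset.range (j+1), g i = (∑ i ∈ Finset.range (j+1), (g i - 1)) + (j+1) := by
    have : ∀ i ∈ Finset.range (j+1), g i = (g i - 1) + 1 := fun i hi => by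
      have := hg1 i (by have := Finset.mem_range.mp hi; omega)
      omega
    rw [Finset.sum_congr rfl this, Finset.sum_add_distrib]
    simp
  have sfr : ∑ i ∈ Finset.range j, (f i + 1) = (∑ i ∈ Finset.range j, f i) + j := by
    rw [Finset.sum_add_distrib]; simp
  have sf : ∑ i ∈ Finset.range a, f i
      = (∑ i ∈ Finset.range j, f i) + ∑ i ∈ Finset.Ico j a, f i := by
    rw [Finset.range_eq_Ico, ← Finset.sum_Ico_consecutive _ (Nat.zero_le j) (by omega : j ≤ a),
      ← Finset.range_eq_Ico]
  have sg : ∑ i ∈ Finset.range b, g i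
      = (∑ i ∈ Finset.range (j+1), g i) + ∑ i ∈ Finset.Ico (j+1) b, g i := by
    rw [Finset.range_eq_Ico, ← Finset.sum_Ico_consecutive _ (Nat.zero_le (j+1)) (by omega : j+1 ≤ b),
      ← Finset.range_eq_Ico]
  rw [sA, sA2, sB, sB2, sgr, sfr] at *
  omega

include hf hg hj hmin in
lemma CA : C (A f g j) (B f g j) j = f := by
  funext i
  simp only [A, B, C]
  by_cases h : i < j
  · rw [if_pos h, if_pos h, Nat.add_sub_cancel]
  · rw [if_neg h, if_neg (by omega : ¬ i + 1 ≤ j), Nat.add_sub_cancel]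

include hf hg hj hmin in
lemma DB : D (A f g j) (B f g j) j = g := by
  have hg1 := g_pos hg hj
  funext i
  simp only [A, B, D]
  by_cases h : i ≤ j
  · rw [if_pos h, if_pos h]
    have := hg1 i h
    omega
  · rw [if_neg h, if_neg (by omega : ¬ i - 1 < j)]
    congr 1
    omega

include hf hg hj hmin in
lemma find_fwd :
    (B f g j j ≤ A f g j j + 1) ∧ ∀ i, i < j → ¬ (B f g j i ≤ A f g j i + 1) := by
  have hg1 := g_pos hg hj
  constructor
  · simp only [A, B]
    rw [if_neg (lt_irrefl j), if_pos le_rfl]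
    have h1 : g (j+1) ≤ g j := hg.1 (Nat.le_succ j)
    have h2 : 1 ≤ g j := hg1 j le_rfl
    omega
  · intro i hi
    simp only [A, B]
    rw [if_pos hi, if_pos (by omega : i ≤ j)]
    have h1 : ¬ f i < g i := hmin i hi
    have h2 : 1 ≤ g i := hg1 i (by omega)
    omega

end Forward

section Backward

variable {a b j N : ℕ} {α β : ℕ → ℕ}
  (hb : 1 ≤ b) (hba : b ≤ a)
  (hα : OK (a+1) α) (hβ : OK (b-1) β)
  (hj : β j ≤ α j + 1) (hmin : ∀ i, i < j → ¬ β i ≤ α i + 1)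
  (hjle : j ≤ b - 1)

include hα hβ hj hmin hjle hb hba

omit hα hβ hj hjle hb hba in
lemma beta_big : ∀ i, i < j → α i + 2 ≤ β i := fun i hi => by
  have := hmin i hi
  omega

omit hj in
lemma C_ok : OK a (C α β j) := by
  have hbb := beta_big hmin
  constructor
  · apply antitone_nat_of_succ_le
    intro i
    simp only [C]
    by_cases h1 : i + 1 < j
    · rw [if_pos h1, if_pos (by omega)]
      have := hβ.1 (by omega : i ≤ i + 1)
      have := hbb i (by omega)
      have := hbb (i+1) h1
      omega
    · by_cases h2 : i < j
      · have hij : i + 1 = j := by omega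
        rw [if_neg h1, if_pos h2]
        have e1 := hbb i h2
        have e2 : α (i+1+1) ≤ α i := hα.1 (by omega)
        omega
      · rw [if_neg h1, if_neg h2]
        exact hα.1 (by omega)
  · intro i hi
    simp only [C]
    rw [if_neg (by omega), hα.2 (i+1) (by omega)]

omit hba in
lemma D_ok : OK b (D α β j) := by
  constructor
  · apply antitone_nat_of_succ_le
    intro i
    simp only [D]
    by_cases h1 : i + 1 ≤ j
    · rw [if_pos h1, if_pos (by omega)]
      have := hα.1 (by omega : i ≤ i + 1)
      omega
    · by_cases h2 : i ≤ j
      · have hij : i = j := by omega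
        rw [if_neg h1, if_pos h2, Nat.add_sub_cancel]
        subst hij
        omega
      · rw [if_neg h1, if_neg h2]
        exact hβ.1 (by omega)
  · intro i hi
    simp only [D]
    rw [if_neg (by omega), hβ.2 (i-1) (by omega)]

omit hβ hj hjle hb hba hmin in
lemma cross_bwd : C α β j j < D α β j j := by
  simp only [C, D]
  rw [if_neg (lt_irrefl j), if_pos le_rfl]
  have := hα.1 (by omega : j ≤ j + 1)
  omega

omit hα hβ hj hjle hb hba in
lemma min_bwd : ∀ i, i < j → ¬ C α β j i < D α β j i := by
  intro i hi
  have := beta_big hmin i hi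
  simp only [C, D]
  rw [if_pos hi, if_pos (by omega : i ≤ j)]
  omega

omit hj in
lemma sum_bwd :
    (∑ i ∈ Finset.range a, C α β j i) + (∑ i ∈ Finset.range b, D α β j i)
      = (∑ i ∈ Finset.range (a+1), α i) + (∑ i ∈ Finset.range (b-1), β i) + 1 := by
  have hbb := beta_big hmin
  have sC : ∑ i ∈ Finset.range a, C α β j i
      = (∑ i ∈ Finset.range j, (β i - 1)) + ∑ i ∈ Finset.Ico j a, α (i+1) := by
    rw [Finset.range_eq_Ico, ← Finset.sum_Ico_consecutive _ (Nat.zero_le j) (by omega : j ≤ a),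
      ← Finset.range_eq_Ico]
    congr 1
    · exact Finset.sum_congr rfl fun i hi => if_pos (Finset.mem_range.mp hi)
    · exact Finset.sum_congr rfl fun i hi => if_neg (by
        have := (Finset.mem_Ico.mp hi).1; omega)
  have sC2 : ∑ i ∈ Finset.Ico j a, α (i+1) = ∑ i ∈ Finset.Ico (j+1) (a+1), α i := by
    rw [Finset.sum_Ico_eq_sum_range, Finset.sum_Ico_eq_sum_range]
    rw [show a - j = a + 1 - (j+1) by omega]
    exact Finset.sum_congr rfl fun i _ => by congr 1; omega
  have sD : ∑ i ∈ Finset.range b, D α β j i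
      = (∑ i ∈ Finset.range (j+1), (α i + 1)) + ∑ i ∈ Finset.Ico (j+1) b, β (i-1) := by
    rw [Finset.range_eq_Ico, ← Finset.sum_Ico_consecutive _ (Nat.zero_le (j+1)) (by omega : j+1 ≤ b),
      ← Finset.range_eq_Ico]
    congr 1
    · exact Finset.sum_congr rfl fun i hi => if_pos (by
        have := Finset.mem_range.mp hi; omega)
    · exact Finset.sum_congr rfl fun i hi => if_neg (by
        have := (Finset.mem_Ico.mp hi).1; omega)
  have sD2 : ∑ i ∈ Finset.Ico (j+1) b, β (i-1) = ∑ i ∈ Finset.Ico j (b-1), β i := by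
    rw [Finset.sum_Ico_eq_sum_range, Finset.sum_Ico_eq_sum_range]
    rw [show b - (j+1) = b - 1 - j by omega]
    exact Finset.sum_congr rfl fun i _ => by congr 1; omega
  have sbr : ∑ i ∈ Finset.range j, β i = (∑ i ∈ Finset.range j, (β i - 1)) + j := by
    have : ∀ i ∈ Finset.range j, β i = (β i - 1) + 1 := fun i hi => by
      have := hbb i (Finset.mem_range.mp hi)
      omega
    rw [Finset.sum_congr rfl this, Finset.sum_add_distrib]
    simp
  have sar : ∑ i ∈ Finset.range (j+1), (α i + 1) = (∑ i ∈ Finset.range (j+1), α i) + (j+1) := by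
    rw [Finset.sum_add_distrib]; simp
  have sa : ∑ i ∈ Finset.range (a+1), α i
      = (∑ i ∈ Finset.range (j+1), α i) + ∑ i ∈ Finset.Ico (j+1) (a+1), α i := by
    rw [Finset.range_eq_Ico, ← Finset.sum_Ico_consecutive _ (Nat.zero_le (j+1)) (by omega : j+1 ≤ a+1),
      ← Finset.range_eq_Ico]
  have sb : ∑ i ∈ Finset.range (b-1), β i
      = (∑ i ∈ Finset.range j, β i) + ∑ i ∈ Finset.Ico j (b-1), β i := by
    rw [Finset.range_eq_Ico, ← Finset.sum_Ico_consecutive _ (Nat.zero_le j) (by omega : j ≤ b-1),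
      ← Finset.range_eq_Ico]
  rw [sC, sC2, sD, sD2, sar, sbr] at *
  omega

omit hβ hj hjle hb hba hmin in
lemma AC : A (C α β j) (D α β j) j = α := by
  funext i
  simp only [A, C, D]
  by_cases h : i ≤ j
  · rw [if_pos h, if_pos h, Nat.add_sub_cancel]
  · rw [if_neg h, if_neg (by omega : ¬ i - 1 < j)]
    congr 1
    omega

omit hα hj hjle hb hba in
lemma BD : B (C α β j) (D α β j) j = β := by
  have hbb := beta_big hmin
  funext i
  simp only [B, C, D]
  by_cases h : i < j
  · rw [if_pos h, if_pos h]
    have := hbb i h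
    omega
  · rw [if_neg h, if_neg (by omega : ¬ i + 1 ≤ j), Nat.add_sub_cancel]

end Backward

end Stmt7d

namespace Stmt7e
open Stmt7 Stmt7b Stmt7c Stmt7d

def Cross (a b M : ℕ) : Type := {p : PPair a b M // ∃ j, p.1.1 j < p.1.2 j}

variable {a b N : ℕ} (hb : 1 ≤ b) (hba : b ≤ a)

noncomputable def fwdFun (p : Cross a b (N+1)) : PPair (a+1) (b-1) N :=
  ⟨(A p.1.1.1 p.1.1.2 (Nat.find p.2), B p.1.1.1 p.1.1.2 (Nat.find p.2)),
   A_ok hba p.1.2.1 p.1.2.2.1 (Nat.find_spec p.2),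
   B_ok p.1.2.2.1 (Nat.find_spec p.2) (fun i hi => Nat.find_min p.2 hi) p.1.2.1,
   by
     show (∑ i ∈ Finset.range (a+1), A p.1.1.1 p.1.1.2 (Nat.find p.2) i)
        + (∑ i ∈ Finset.range (b-1), B p.1.1.1 p.1.1.2 (Nat.find p.2) i) = N
     have h := sum_fwd hba p.1.2.2.1 (Nat.find_spec p.2)
     have h2 := p.1.2.2.2
     omega⟩

lemma bwd_exists (q : PPair (a+1) (b-1) N) : ∃ i, q.1.2 i ≤ q.1.1 i + 1 :=
  ⟨b-1, by rw [q.2.2.1.2 (b-1) le_rfl]; omega⟩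

noncomputable def bwdFun (q : PPair (a+1) (b-1) N) : Cross a b (N+1) :=
  have hjle : Nat.find (bwd_exists q) ≤ b - 1 :=
    Nat.find_min' (bwd_exists q) (by rw [q.2.2.1.2 (b-1) le_rfl]; omega)
  have hmin : ∀ i, i < Nat.find (bwd_exists q) → ¬ q.1.2 i ≤ q.1.1 i + 1 :=
    fun i hi => Nat.find_min (bwd_exists q) hi
  ⟨⟨(C q.1.1 q.1.2 (Nat.find (bwd_exists q)), D q.1.1 q.1.2 (Nat.find (bwd_exists q))),
    C_ok hb hba q.2.1 q.2.2.1 hmin hjle,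
    D_ok hb q.2.1 q.2.2.1 (Nat.find_spec (bwd_exists q)) hmin hjle,
    by
      show (∑ i ∈ Finset.range a, C q.1.1 q.1.2 (Nat.find (bwd_exists q)) i)
         + (∑ i ∈ Finset.range b, D q.1.1 q.1.2 (Nat.find (bwd_exists q)) i) = N + 1
      have h := sum_bwd hb hba q.2.1 q.2.2.1 hmin hjle
      have h2 := q.2.2.2
      omega⟩,
    ⟨Nat.find (bwd_exists q), cross_bwd q.2.1⟩⟩

noncomputable def reflEquiv : Cross a b (N+1) ≃ PPair (a+1) (b-1) N where
  toFun := fwdFun hba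
  invFun := bwdFun hb hba
  left_inv := by
    rintro ⟨⟨⟨f, g⟩, hf, hg, hsum⟩, hc⟩
    have hj := Nat.find_spec hc
    have hmin : ∀ i, i < Nat.find hc → ¬ f i < g i := fun i hi => Nat.find_min hc hi
    apply Subtype.ext
    apply Subtype.ext
    show (C _ _ (Nat.find (bwd_exists _)), D _ _ (Nat.find (bwd_exists _))) = (f, g)
    have hkey : Nat.find (bwd_exists (fwdFun hba ⟨⟨⟨f, g⟩, hf, hg, hsum⟩, hc⟩)) = Nat.find hc := by
      rw [Nat.find_eq_iff]
      have h := find_fwd hf hg hj hmin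
      exact ⟨h.1, fun i hi => h.2 i hi⟩
    rw [hkey]
    exact Prod.ext (CA hf hg hj hmin) (DB hf hg hj hmin)
  right_inv := by
    rintro ⟨⟨α, β⟩, hα, hβ, hsum⟩
    set q : PPair (a+1) (b-1) N := ⟨(α, β), hα, hβ, hsum⟩ with hq
    have hj := Nat.find_spec (bwd_exists q)
    have hmin : ∀ i, i < Nat.find (bwd_exists q) → ¬ β i ≤ α i + 1 :=
      fun i hi => Nat.find_min (bwd_exists q) hi
    apply Subtype.ext
    show (A _ _ (Nat.find _), B _ _ (Nat.find _)) = (α, β)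
    have hkey : Nat.find ((bwdFun hb hba q).2) = Nat.find (bwd_exists q) := by
      rw [Nat.find_eq_iff]
      refine ⟨cross_bwd hα, fun i hi => min_bwd hmin i hi⟩
    rw [hkey]
    exact Prod.ext (AC hα) (BD hβ hmin)

end Stmt7e

namespace Stmt7f
open Stmt7 Stmt7b Stmt7c Stmt7d Stmt7e

lemma ccnt_zero (a b : ℕ) : ccnt a b 0 = 0 := by
  have : IsEmpty {p : PPair a b 0 // ∃ j, p.1.1 j < p.1.2 j} := by
    constructor
    rintro ⟨⟨⟨f, g⟩, hf, hg, hsum⟩, j, hj⟩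
    have hj' : f j < g j := hj
    have hs : (∑ i ∈ Finset.range a, f i) + (∑ i ∈ Finset.range b, g i) = 0 := hsum
    have hgz : g j = 0 := by
      rcases lt_or_ge j b with h | h
      · have h2 : ∑ i ∈ Finset.range b, g i = 0 := by omega
        exact (Finset.sum_eq_zero_iff).mp h2 j (Finset.mem_range.mpr h)
      · exact hg.2 j h
    omega
  rw [ccnt, Nat.card_of_isEmpty]

lemma ccnt_succ (a b N : ℕ) (hb : 1 ≤ b) (hba : b ≤ a) :
    ccnt a b (N+1) = pcnt (a+1) (b-1) N :=
  Nat.card_congr (reflEquiv hb hba)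

lemma G_eq (a b : ℕ) (hb : 1 ≤ b) (hba : b ≤ a) :
    (mk fun N => (ncnt a b N : ℤ)) = P a * P b - X * (P (a+1) * P (b-1)) := by
  rw [P_mul_P, P_mul_P]
  ext M
  rw [map_sub, coeff_mk]
  cases M with
  | zero =>
    rw [coeff_zero_X_mul, coeff_mk]
    have h1 := split a b 0
    have h0 := ccnt_zero a b
    have : pcnt a b 0 = ncnt a b 0 := by omega
    rw [this, sub_zero]
  | succ M =>
    rw [coeff_succ_X_mul, coeff_mk, coeff_mk]
    have h1 := split a b (M+1)
    rw [ccnt_succ a b M hb hba] at h1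
    rw [eq_sub_iff_add_eq]
    exact_mod_cast congrArg (Nat.cast (R := ℤ)) h1.symm

def ext (m : ℕ) (u : Fin m → ℕ) : ℕ → ℕ := fun i => if h : i < m then u ⟨i, h⟩ else 0

lemma ext_ok {m : ℕ} {u : Fin m → ℕ} (hu : Antitone u) : OK m (ext m u) := by
  constructor
  · intro x y hxy
    unfold ext
    by_cases hy : y < m
    · rw [dif_pos hy, dif_pos (lt_of_le_of_lt hxy hy)]
      exact hu (by exact hxy)
    · rw [dif_neg hy]
      exact Nat.zero_le _
  · intro i hi
    exact dif_neg (by omega)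

lemma ext_sum {m : ℕ} (u : Fin m → ℕ) : ∑ i ∈ Finset.range m, ext m u i = ∑ j, u j := by
  rw [← Fin.sum_univ_eq_sum_range (fun i => ext m u i) m]
  exact Finset.sum_congr rfl fun j _ => by simp [ext, j.isLt]

def finEquiv (a b N : ℕ) (hba : b ≤ a) :
    {p : (Fin a → ℕ) × (Fin b → ℕ) //
      Antitone p.1 ∧ Antitone p.2 ∧
      (∀ j : Fin b, p.2 j ≤ p.1 ⟨(j : ℕ), lt_of_lt_of_le j.isLt hba⟩) ∧
      (∑ j, p.1 j) + (∑ j, p.2 j) = N}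
    ≃ {p : PPair a b N // ∀ j, p.1.2 j ≤ p.1.1 j} where
  toFun p := ⟨⟨(ext a p.1.1, ext b p.1.2), ext_ok p.2.1, ext_ok p.2.2.1, by
      rw [ext_sum, ext_sum]; exact p.2.2.2.2⟩, by
      intro j
      show ext b p.1.2 j ≤ ext a p.1.1 j
      unfold ext
      by_cases hj : j < b
      · rw [dif_pos hj, dif_pos (lt_of_lt_of_le hj hba)]
        exact p.2.2.2.1 ⟨j, hj⟩
      · rw [dif_neg hj]
        exact Nat.zero_le _⟩
  invFun q := ⟨(fun j => q.1.1.1 j, fun j => q.1.1.2 j),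
    fun x y hxy => q.1.2.1.1 (by exact_mod_cast hxy),
    fun x y hxy => q.1.2.2.1.1 (by exact_mod_cast hxy),
    fun j => q.2 j, by
      have h1 : ∑ j : Fin a, q.1.1.1 (j : ℕ) = ∑ i ∈ Finset.range a, q.1.1.1 i :=
        Fin.sum_univ_eq_sum_range _ a
      have h2 : ∑ j : Fin b, q.1.1.2 (j : ℕ) = ∑ i ∈ Finset.range b, q.1.1.2 i :=
        Fin.sum_univ_eq_sum_range _ b
      rw [h1, h2]
      exact q.1.2.2.2⟩
  left_inv p := by
    apply Subtype.ext
    apply Prod.ext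
    · funext j
      show ext a p.1.1 j = p.1.1 j
      simp [ext, j.isLt]
    · funext j
      show ext b p.1.2 j = p.1.2 j
      simp [ext, j.isLt]
  right_inv q := by
    apply Subtype.ext
    apply Subtype.ext
    apply Prod.ext
    · funext i
      show ext a (fun j : Fin a => q.1.1.1 j) i = q.1.1.1 i
      unfold ext
      by_cases hi : i < a
      · rw [dif_pos hi]
      · rw [dif_neg hi, q.1.2.1.2 i (by omega)]
    · funext i
      show ext b (fun j : Fin b => q.1.1.2 j) i = q.1.1.2 i
      unfold ext
      by_cases hi : i < b
      · rw [dif_pos hi]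
      · rw [dif_neg hi, q.1.2.2.1.2 i (by omega)]

end Stmt7f


end AuxStmt7

/-- If `G` is the generating function for two-rowed plane partitions with
first row of length `n+k` and second row of length `n`, then
`(q;q)_{n+k+1} (q;q)_n ⬝ G = 1 - q + q^{n+1} - q^{n+k+1}`. -/
theorem stmt_7 (n k : ℕ) (hn : 1 ≤ n)
    (G : PowerSeries ℤ)
    (hG : G = PowerSeries.mk fun N =>
      (Nat.card {p : (Fin (n + k) → ℕ) × (Fin n → ℕ) //
        Antitone p.1 ∧ Antitone p.2 ∧
        (∀ j : Fin n, p.2 j ≤ p.1 ⟨(j : ℕ), by have := j.isLt; omega⟩) ∧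
        (∑ j, p.1 j) + (∑ j, p.2 j) = N} : ℤ)) :
    qqPoch (n + k + 1) * qqPoch n * G = 1 - X + X ^ (n + 1) - X ^ (n + k + 1) := by
  have hba : n ≤ n + k := Nat.le_add_right n k
  have hGn : G = PowerSeries.mk fun N => (Stmt7.ncnt (n+k) n N : ℤ) := by
    rw [hG]
    exact congrArg _ (funext fun N =>
      congrArg _ (Nat.card_congr (Stmt7f.finEquiv (n+k) n N hba)))
  rw [hGn, Stmt7f.G_eq (n+k) n hn hba]
  obtain ⟨m, rfl⟩ : ∃ m, n = m + 1 := ⟨n - 1, by omega⟩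
  simp only [Nat.add_sub_cancel]
  have h1 := Stmt7c.poch_P (m+1+k)
  have h2 := Stmt7c.poch_P (m+1)
  have h3 := Stmt7c.poch_P (m+1+k+1)
  have h4 := Stmt7c.poch_P m
  have e1 : qqPoch (m+1+k+1) = qqPoch (m+1+k) * (1 - X^(m+1+k+1)) := by
    rw [qqPoch, qqPoch, Finset.prod_range_succ]
  have e2 : qqPoch (m+1) = qqPoch m * (1 - X^(m+1)) := by
    rw [qqPoch, qqPoch, Finset.prod_range_succ]
  have t1 : qqPoch (m+1+k+1) * qqPoch (m+1) * (Stmt7b.P (m+1+k) * Stmt7b.P (m+1))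
      = 1 - X^(m+1+k+1) := by
    have hr : qqPoch (m+1+k) * (1 - X^(m+1+k+1)) * qqPoch (m+1)
          * (Stmt7b.P (m+1+k) * Stmt7b.P (m+1))
        = (1 - X^(m+1+k+1)) * ((qqPoch (m+1+k) * Stmt7b.P (m+1+k))
          * (qqPoch (m+1) * Stmt7b.P (m+1))) := by
      ring
    rw [e1, hr, h1, h2]
    ring
  have t2 : qqPoch (m+1+k+1) * qqPoch (m+1) * (X * (Stmt7b.P (m+1+k+1) * Stmt7b.P m))
      = X * (1 - X^(m+1)) := by
    have hr : qqPoch (m+1+k+1) * (qqPoch m * (1 - X^(m+1)))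
          * (X * (Stmt7b.P (m+1+k+1) * Stmt7b.P m))
        = X * (1 - X^(m+1)) * ((qqPoch (m+1+k+1) * Stmt7b.P (m+1+k+1))
          * (qqPoch m * Stmt7b.P m)) := by
      ring
    rw [e2, hr, h3, h4]
    ring
  rw [mul_sub, t1, t2]
  ring
end

section
/- Let m ≥ 1 and n ≥ 1 be integers. Let G ∈ ℤ⟦q⟧ be the formal power series whose coefficient of q^N is the number of arrays of nonnegative integers (x_{1,j} for m ≤ j ≤ n+m−1; x_{2,j} for 1 ≤ j ≤ n+m−1; x_{3,j} for 1 ≤ j ≤ m) satisfying: each row is weakly decreasing (x_{i,j} ≥ x_{i,j+1} whenever both entries exist), x_{1,j} ≥ x_{2,j} for m ≤ j ≤ n+m−1, x_{2,j} ≥ x_{3,j} for 1 ≤ j ≤ m, and total sum Σ x_{i,j} = N. Then in ℤ⟦q⟧: (q;q)_{m−1} · (q;q)_{m+n+1} · (q;q)_n · G = 1 − q − q^{m+n+1} + q^{m+2}. -/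
open PowerSeries

open Finset

noncomputable section


/-- Generating function of a weighted set restricted by a predicate. -/
def gfun {α : Type} (P : α → Prop) (w : α → ℕ) : PowerSeries ℤ :=
  PowerSeries.mk fun N => (Nat.card {a : α // P a ∧ w a = N} : ℤ)

lemma gfun_coeff {α : Type} (P : α → Prop) (w : α → ℕ) (N : ℕ) :
    (PowerSeries.coeff N) (gfun P w) = (Nat.card {a : α // P a ∧ w a = N} : ℤ) := by
  simp [gfun]

/-- Splitting a generating function along a predicate `Q`. -/
lemma gfun_split {α : Type} (P Q : α → Prop) (w : α → ℕ)
    (hf : ∀ N : ℕ, Finite {a : α // P a ∧ w a = N}) :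
    gfun P w = gfun (fun a => P a ∧ Q a) w + gfun (fun a => P a ∧ ¬ Q a) w := by
  classical
  ext N
  have e : {a : α // P a ∧ w a = N} ≃
      ({a : α // (P a ∧ Q a) ∧ w a = N} ⊕ {a : α // (P a ∧ ¬ Q a) ∧ w a = N}) :=
    { toFun := fun x => if h : Q x.1 then Sum.inl ⟨x.1, ⟨x.2.1, h⟩, x.2.2⟩
        else Sum.inr ⟨x.1, ⟨x.2.1, h⟩, x.2.2⟩
      invFun := fun x => x.elim (fun y => ⟨y.1, y.2.1.1, y.2.2⟩) (fun y => ⟨y.1, y.2.1.1, y.2.2⟩)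
      left_inv := by intro x; by_cases h : Q x.1 <;> simp [h]
      right_inv := by
        rintro (y | y)
        · simp [y.2.1.2]
        · simp [y.2.1.2] }
  have f1 : Finite {a : α // (P a ∧ Q a) ∧ w a = N} := by
    haveI := hf N
    exact Finite.of_injective
      (fun x => (⟨x.1, x.2.1.1, x.2.2⟩ : {a : α // P a ∧ w a = N}))
      (by intro x y h; exact Subtype.ext (by simpa using congrArg Subtype.val h))
  have f2 : Finite {a : α // (P a ∧ ¬ Q a) ∧ w a = N} := by
    haveI := hf N
    exact Finite.of_injective
      (fun x => (⟨x.1, x.2.1.1, x.2.2⟩ : {a : α // P a ∧ w a = N}))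
      (by intro x y h; exact Subtype.ext (by simpa using congrArg Subtype.val h))
  simp only [map_add, gfun_coeff]
  rw [Nat.card_congr e]
  haveI := f1; haveI := f2
  rw [Nat.card_sum]
  push_cast
  ring

/-- Transport of a generating function along a weight-shifting equivalence. -/
lemma gfun_equiv_shift {α β : Type} (P : α → Prop) (Q : β → Prop) (w : α → ℕ) (w' : β → ℕ)
    (c : ℕ) (e : {a : α // P a} ≃ {b : β // Q b})
    (hw : ∀ x : {a : α // P a}, w x.1 = w' (e x).1 + c) :
    gfun P w = X ^ c * gfun Q w' := by
  ext N
  rw [PowerSeries.coeff_X_pow_mul', gfun_coeff]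
  by_cases h : c ≤ N
  · rw [if_pos h, gfun_coeff]
    congr 1
    apply Nat.card_congr
    refine { toFun := fun x => ⟨(e ⟨x.1, x.2.1⟩).1, (e ⟨x.1, x.2.1⟩).2, ?_⟩,
             invFun := fun y => ⟨(e.symm ⟨y.1, y.2.1⟩).1, (e.symm ⟨y.1, y.2.1⟩).2, ?_⟩,
             left_inv := ?_, right_inv := ?_ }
    · have h1 : w x.1 = w' (e ⟨x.1, x.2.1⟩).1 + c := hw ⟨x.1, x.2.1⟩
      have h2 : w x.1 = N := x.2.2
      omega
    · have h1 : w (e.symm ⟨y.1, y.2.1⟩).1 = w' y.1 + c := by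
        have h0 := hw (e.symm ⟨y.1, y.2.1⟩)
        rw [Equiv.apply_symm_apply] at h0
        exact h0
      have h2 : w' y.1 = N - c := y.2.2
      omega
    · intro x
      apply Subtype.ext
      have : e.symm ⟨(e ⟨x.1, x.2.1⟩).1, (e ⟨x.1, x.2.1⟩).2⟩ = e.symm (e ⟨x.1, x.2.1⟩) := rfl
      simp only [this, Equiv.symm_apply_apply]
    · intro y
      apply Subtype.ext
      have : e ⟨(e.symm ⟨y.1, y.2.1⟩).1, (e.symm ⟨y.1, y.2.1⟩).2⟩ = e (e.symm ⟨y.1, y.2.1⟩) := rfl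
      simp only [this, Equiv.apply_symm_apply]
  · rw [if_neg h]
    have hempty : {a : α // P a ∧ w a = N} → False := by
      rintro ⟨a, ha, haw⟩
      have h1 : w a = w' (e ⟨a, ha⟩).1 + c := hw ⟨a, ha⟩
      omega
    haveI : IsEmpty {a : α // P a ∧ w a = N} := ⟨hempty⟩
    simp

/-- The weight-fiber decomposition of a product. -/
def weightPairEquiv {α β : Type} (P : α → Prop) (Q : β → Prop) (w₁ : α → ℕ) (w₂ : β → ℕ)
    (N : ℕ) : {p : α × β // (P p.1 ∧ Q p.2) ∧ w₁ p.1 + w₂ p.2 = N} ≃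
      (Σ i : Fin (N+1), ({a : α // P a ∧ w₁ a = (i : ℕ)} ×
        {b : β // Q b ∧ w₂ b = N - (i : ℕ)})) := by
  classical
  set XX := {p : α × β // (P p.1 ∧ Q p.2) ∧ w₁ p.1 + w₂ p.2 = N} with hXX
  let f : XX → Fin (N + 1) := fun x => ⟨w₁ x.1.1, by have := x.2.2; omega⟩
  have efib : ∀ i : Fin (N+1), {x : XX // f x = i} ≃
      ({a : α // P a ∧ w₁ a = (i : ℕ)} × {b : β // Q b ∧ w₂ b = N - (i : ℕ)}) := by
    intro i
    refine { toFun := fun x => (⟨x.1.1.1, x.1.2.1.1, ?_⟩, ⟨x.1.1.2, x.1.2.1.2, ?_⟩),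
             invFun := fun y => ⟨⟨(y.1.1, y.2.1), ⟨y.1.2.1, y.2.2.1⟩, ?_⟩, ?_⟩,
             left_inv := ?_, right_inv := ?_ }
    · exact congrArg Fin.val x.2
    · have h1 : w₁ x.1.1.1 = (i : ℕ) := congrArg Fin.val x.2
      have h2 : w₁ x.1.1.1 + w₂ x.1.1.2 = N := x.1.2.2
      have h3 : (i : ℕ) < N + 1 := i.2
      omega
    · have h1 : w₁ y.1.1 = (i : ℕ) := y.1.2.2
      have h2 : w₂ y.2.1 = N - (i : ℕ) := y.2.2.2
      have h3 : (i : ℕ) < N + 1 := i.2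
      show w₁ y.1.1 + w₂ y.2.1 = N
      omega
    · exact Fin.ext y.1.2.2
    · intro x; rfl
    · intro y; rfl
  exact (Equiv.sigmaFiberEquiv f).symm.trans (Equiv.sigmaCongrRight efib)

/-- Generating function of a product. -/
lemma gfun_prod {α β : Type} (P : α → Prop) (Q : β → Prop) (w₁ : α → ℕ) (w₂ : β → ℕ)
    (hf₁ : ∀ N : ℕ, Finite {a : α // P a ∧ w₁ a = N})
    (hf₂ : ∀ N : ℕ, Finite {b : β // Q b ∧ w₂ b = N}) :
    gfun (fun p : α × β => P p.1 ∧ Q p.2) (fun p => w₁ p.1 + w₂ p.2)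
      = gfun P w₁ * gfun Q w₂ := by
  classical
  ext N
  rw [PowerSeries.coeff_mul, gfun_coeff]
  haveI h₁ : ∀ i : ℕ, Fintype {a : α // P a ∧ w₁ a = i} := fun i => @Fintype.ofFinite _ (hf₁ i)
  haveI h₂ : ∀ i : ℕ, Fintype {b : β // Q b ∧ w₂ b = i} := fun i => @Fintype.ofFinite _ (hf₂ i)
  rw [Nat.card_congr (weightPairEquiv P Q w₁ w₂ N), Nat.card_eq_fintype_card,
    Fintype.card_sigma]
  rw [Finset.Nat.sum_antidiagonal_eq_sum_range_succ_mk]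
  rw [← Fin.sum_univ_eq_sum_range (fun k => (coeff k) (gfun P w₁) *
      (coeff (N - k)) (gfun Q w₂))]
  push_cast
  apply Finset.sum_congr rfl
  intro i _
  rw [gfun_coeff, gfun_coeff, Fintype.card_prod,
    Nat.card_eq_fintype_card, Nat.card_eq_fintype_card]
  push_cast
  ring

/-- Finiteness for weighted pairs. -/
lemma finite_pair {α β : Type} (P : α → Prop) (Q : β → Prop) (w₁ : α → ℕ) (w₂ : β → ℕ)
    (hf₁ : ∀ N : ℕ, Finite {a : α // P a ∧ w₁ a = N})
    (hf₂ : ∀ N : ℕ, Finite {b : β // Q b ∧ w₂ b = N}) :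
    ∀ N : ℕ, Finite {p : α × β // (P p.1 ∧ Q p.2) ∧ w₁ p.1 + w₂ p.2 = N} := by
  classical
  intro N
  haveI h₁ : ∀ i : ℕ, Fintype {a : α // P a ∧ w₁ a = i} := fun i => @Fintype.ofFinite _ (hf₁ i)
  haveI h₂ : ∀ i : ℕ, Fintype {b : β // Q b ∧ w₂ b = i} := fun i => @Fintype.ofFinite _ (hf₂ i)
  exact Finite.of_equiv _ (weightPairEquiv P Q w₁ w₂ N).symm

/-- Finiteness descends along predicate strengthening. -/
lemma finite_sub {α : Type} (P P' : α → Prop) (w : α → ℕ)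
    (h : ∀ a, P' a → P a)
    (hf : ∀ N : ℕ, Finite {a : α // P a ∧ w a = N}) :
    ∀ N : ℕ, Finite {a : α // P' a ∧ w a = N} := by
  intro N
  haveI := hf N
  exact Finite.of_injective
    (fun x : {a : α // P' a ∧ w a = N} => (⟨x.1, h x.1 x.2.1, x.2.2⟩ : {a : α // P a ∧ w a = N}))
    (by intro x y hxy; exact Subtype.ext (by simpa using congrArg Subtype.val hxy))


/-- Antitone sequence supported on the first `p` values. -/
def Sq (p : ℕ) (x : ℕ → ℕ) : Prop := Antitone x ∧ ∀ t, p ≤ t → x t = 0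

/-- Weight of such a sequence. -/
def wt (p : ℕ) (x : ℕ → ℕ) : ℕ := ∑ t ∈ Finset.range p, x t

lemma Sq.le_wt {p : ℕ} {x : ℕ → ℕ} (j : ℕ) (hj : j < p) : x j ≤ wt p x :=
  Finset.single_le_sum (f := x) (fun i _ => Nat.zero_le _) (Finset.mem_range.2 hj)

lemma sq_finite (p N : ℕ) : Finite {x : ℕ → ℕ // Sq p x ∧ wt p x = N} := by
  apply Finite.of_injective
    (fun x : {x : ℕ → ℕ // Sq p x ∧ wt p x = N} =>
      (fun j : Fin p => (⟨x.1 j, by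
        have h1 : x.1 j ≤ wt p x.1 := Sq.le_wt j j.2
        have h2 := x.2.2
        omega⟩ : Fin (N+1))))
  intro x y h
  apply Subtype.ext
  funext t
  by_cases ht : t < p
  · have := congrArg (fun g => (g (⟨t, ht⟩ : Fin p) : ℕ)) h
    simpa using this
  · rw [x.2.1.2 t (by omega), y.2.1.2 t (by omega)]

/-- The generating function of antitone sequences of length `p`. -/
def Agf (p : ℕ) : PowerSeries ℤ := gfun (Sq p) (wt p)

lemma Agf_zero : Agf 0 = 1 := by
  ext N
  rw [Agf, gfun_coeff]
  cases N with
  | zero =>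
    haveI : Unique {x : ℕ → ℕ // Sq 0 x ∧ wt 0 x = 0} :=
      { default := ⟨fun _ => 0, ⟨⟨antitone_const, fun t _ => rfl⟩, rfl⟩⟩
        uniq := fun x => Subtype.ext (funext fun t => x.2.1.2 t (Nat.zero_le t)) }
    simp
  | succ n =>
    haveI : IsEmpty {x : ℕ → ℕ // Sq 0 x ∧ wt 0 x = n + 1} := by
      constructor
      rintro ⟨x, hx, hw⟩
      simp [wt] at hw
    simp

lemma Agf_step (p : ℕ) : Agf (p + 1) = Agf p + X ^ (p + 1) * Agf (p + 1) := by
  classical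
  have hsplit := gfun_split (Sq (p+1)) (fun x => x p = 0) (wt (p+1)) (sq_finite (p+1))
  have h1 : gfun (fun x => Sq (p+1) x ∧ x p = 0) (wt (p+1)) = Agf p := by
    have := gfun_equiv_shift (fun x => Sq (p+1) x ∧ x p = 0) (Sq p)
      (wt (p+1)) (wt p) 0
      { toFun := fun x => ⟨x.1, x.2.1.1, fun t ht => by
          rcases Nat.lt_or_ge t (p+1) with h | h
          · have : t = p := by omega
            rw [this]; exact x.2.2
          · exact x.2.1.2 t h⟩
        invFun := fun y => ⟨y.1, ⟨⟨y.2.1, fun t ht => y.2.2 t (by omega)⟩,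
          y.2.2 p le_rfl⟩⟩
        left_inv := fun x => Subtype.ext rfl
        right_inv := fun y => Subtype.ext rfl }
      (fun x => by
        show wt (p+1) x.1 = wt p x.1 + 0
        rw [wt, Finset.sum_range_succ, x.2.2, add_zero, add_zero]; rfl)
    rw [this, pow_zero, one_mul]; rfl
  have h2 : gfun (fun x => Sq (p+1) x ∧ ¬ x p = 0) (wt (p+1))
      = X ^ (p + 1) * Agf (p + 1) := by
    have := gfun_equiv_shift (fun x => Sq (p+1) x ∧ ¬ x p = 0) (Sq (p+1))
      (wt (p+1)) (wt (p+1)) (p+1)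
      { toFun := fun x => ⟨fun t => x.1 t - 1,
          ⟨fun s t hst => Nat.sub_le_sub_right (x.2.1.1 hst) 1,
           fun t ht => by show x.1 t - 1 = 0; rw [x.2.1.2 t ht]⟩⟩
        invFun := fun y => ⟨fun t => if t < p + 1 then y.1 t + 1 else 0, by
          refine ⟨⟨fun s t hst => ?_, fun t ht => by simp [Nat.not_lt.2 ht]⟩, ?_⟩
          · by_cases ht' : t < p + 1
            · by_cases hs : s < p + 1
              · simpa [hs, ht'] using Nat.add_le_add_right (y.2.1 hst) 1
              · exact absurd hst (by omega)
            · simp [ht']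
          · simp⟩
        left_inv := fun x => Subtype.ext (funext fun t => by
          by_cases ht : t < p + 1
          · have h1 : 1 ≤ x.1 t := by
              have h2 : x.1 p ≤ x.1 t := x.2.1.1 (by omega)
              have h3 := x.2.2
              omega
            simp [ht, Nat.sub_add_cancel h1]
          · simp [ht, x.2.1.2 t (by omega)])
        right_inv := fun y => Subtype.ext (funext fun t => by
          by_cases ht : t < p + 1
          · simp [ht]
          · have h0 : y.1 t = 0 := y.2.2 t (by omega)
            simp [ht, h0]) }
      (fun x => by
        show wt (p+1) x.1 = wt (p+1) (fun t => x.1 t - 1) + (p+1)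
        have hpos : ∀ t ∈ Finset.range (p+1), 1 ≤ x.1 t := by
          intro t ht
          have h2 : x.1 p ≤ x.1 t := x.2.1.1 (by
            simp only [Finset.mem_range] at ht; omega)
          have h3 := x.2.2
          omega
        have hc : ∑ t ∈ Finset.range (p+1), x.1 t
            = ∑ t ∈ Finset.range (p+1), ((x.1 t - 1) + 1) := by
          apply Finset.sum_congr rfl
          intro t ht
          have := hpos t ht
          omega
        rw [wt, wt, hc, Finset.sum_add_distrib, Finset.sum_const, Finset.card_range,
          smul_eq_mul, mul_one])
    rw [this]; rfl
  calc Agf (p+1)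
      = gfun (fun x => Sq (p+1) x ∧ x p = 0) (wt (p+1))
        + gfun (fun x => Sq (p+1) x ∧ ¬ x p = 0) (wt (p+1)) := hsplit
    _ = Agf p + X ^ (p + 1) * Agf (p + 1) := by rw [h1, h2]

lemma qq_Agf (p : ℕ) : qqPoch p * Agf p = 1 := by
  induction p with
  | zero => simp [qqPoch, Agf_zero]
  | succ n ih =>
    have hstep : (1 - X ^ (n+1)) * Agf (n+1) = Agf n := by
      linear_combination (Agf_step n)
    rw [qqPoch, Finset.prod_range_succ, ← qqPoch]
    calc qqPoch n * (1 - X ^ (n+1)) * Agf (n+1)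
        = qqPoch n * ((1 - X ^ (n+1)) * Agf (n+1)) := by ring
      _ = qqPoch n * Agf n := by rw [hstep]
      _ = 1 := ih

section TR

def trX (s : ℕ) (x y : ℕ → ℕ) (i0 : ℕ) : ℕ → ℕ :=
  fun t => if t < i0 + s + 1 then y t - 1 else x (t - s - 1)

def trY (s : ℕ) (x y : ℕ → ℕ) (i0 : ℕ) : ℕ → ℕ :=
  fun t => if t < i0 then x t + 1 else y (t + s + 1)

def trx (s : ℕ) (X Y : ℕ → ℕ) (i0 : ℕ) : ℕ → ℕ :=
  fun t => if t < i0 then Y t - 1 else X (t + s + 1)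

def try' (s : ℕ) (X Y : ℕ → ℕ) (i0 : ℕ) : ℕ → ℕ :=
  fun t => if t < i0 + s + 1 then X t + 1 else Y (t - s - 1)

variable {p r s : ℕ}

section Fwd
variable {x y : ℕ → ℕ}

-- notation: i0
lemma tr_i0_lt (hs : s + 1 ≤ r) (hy : Sq r y) (h : ∃ i, x i < y (i + s)) :
    Nat.find h < r - s := by
  by_contra hcon
  have h0 : y (Nat.find h + s) = 0 := hy.2 _ (by omega)
  have := Nat.find_spec h
  omega

lemma tr_min (h : ∃ i, x i < y (i + s)) : ∀ j < Nat.find h, y (j + s) ≤ x j := by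
  intro j hj
  have := Nat.find_min h hj
  omega

lemma tr_ypos (hy : Sq r y) (h : ∃ i, x i < y (i + s)) :
    ∀ t ≤ Nat.find h + s, 1 ≤ y t := by
  intro t ht
  have h1 : y (Nat.find h + s) ≤ y t := hy.1 ht
  have h2 := Nat.find_spec h
  omega

lemma tr_SqX (hs : s + 1 ≤ r) (hp : r - s ≤ p) (hx : Sq p x) (hy : Sq r y)
    (h : ∃ i, x i < y (i + s)) : Sq (p + s + 1) (trX s x y (Nat.find h)) := by
  have hlt := tr_i0_lt hs hy h
  have hviol := Nat.find_spec h
  set i0 := Nat.find h with hi0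
  constructor
  · intro a b hab
    show (if b < i0 + s + 1 then y b - 1 else x (b - s - 1))
        ≤ (if a < i0 + s + 1 then y a - 1 else x (a - s - 1))
    by_cases hb : b < i0 + s + 1
    · have ha : a < i0 + s + 1 := by omega
      simp only [ha, hb, if_true]
      exact Nat.sub_le_sub_right (hy.1 hab) 1
    · by_cases ha : a < i0 + s + 1
      · simp only [ha, hb, if_true, if_false]
        have h1 : y (i0 + s) ≤ y a := hy.1 (by omega)
        have h2 : x (b - s - 1) ≤ x i0 := hx.1 (by omega)
        omega
      · simp only [ha, hb, if_false]
        exact hx.1 (by omega)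
  · intro t ht
    show (if t < i0 + s + 1 then y t - 1 else x (t - s - 1)) = 0
    have h1 : i0 + s + 1 ≤ p + s + 1 := by omega
    rw [if_neg (by omega)]
    exact hx.2 _ (by omega)

lemma tr_SqY (hs : s + 1 ≤ r) (hx : Sq p x) (hy : Sq r y)
    (h : ∃ i, x i < y (i + s)) : Sq (r - s - 1) (trY s x y (Nat.find h)) := by
  have hlt := tr_i0_lt hs hy h
  have hviol := Nat.find_spec h
  have hmin := tr_min h
  set i0 := Nat.find h with hi0
  constructor
  · intro a b hab
    show (if b < i0 then x b + 1 else y (b + s + 1))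
        ≤ (if a < i0 then x a + 1 else y (a + s + 1))
    by_cases ha : a < i0
    · by_cases hb : b < i0
      · simp only [ha, hb, if_true]
        exact Nat.add_le_add_right (hx.1 hab) 1
      · simp only [ha, hb, if_true, if_false]
        have h1 : y (a + s) ≤ x a := hmin a ha
        have h2 : y (b + s + 1) ≤ y (a + s) := hy.1 (by omega)
        omega
    · have hb : ¬ b < i0 := by omega
      simp only [ha, hb, if_false]
      exact hy.1 (by omega)
  · intro t ht
    show (if t < i0 then x t + 1 else y (t + s + 1)) = 0
    rw [if_neg (by omega)]
    exact hy.2 _ (by omega)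

lemma tr_wt (hs : s + 1 ≤ r) (hp : r - s ≤ p) (hx : Sq p x) (hy : Sq r y)
    (h : ∃ i, x i < y (i + s)) : wt p x + wt r y
    = (wt (p + s + 1) (trX s x y (Nat.find h)) + wt (r - s - 1) (trY s x y (Nat.find h)))
      + (s + 1) := by
  have hlt := tr_i0_lt hs hy h
  have hviol := Nat.find_spec h
  have hmin := tr_min h
  have hypos := tr_ypos hy h
  set i0 := Nat.find h with hi0
  -- the X part
  have hX : wt (p + s + 1) (trX s x y i0) + (i0 + s + 1)
      = (∑ t ∈ Finset.range (i0 + s + 1), y t) + ∑ t ∈ Finset.Ico i0 p, x t := by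
    rw [wt, Finset.range_eq_Ico, ← Finset.sum_Ico_consecutive _ (Nat.zero_le (i0 + s + 1))
      (by omega : i0 + s + 1 ≤ p + s + 1)]
    have e1 : ∑ t ∈ Finset.Ico 0 (i0 + s + 1), trX s x y i0 t
        = ∑ t ∈ Finset.Ico 0 (i0 + s + 1), (y t - 1) := by
      apply Finset.sum_congr rfl
      intro t ht
      simp only [Finset.mem_Ico] at ht
      show (if t < i0 + s + 1 then y t - 1 else x (t - s - 1)) = y t - 1
      rw [if_pos (by omega)]
    have e2 : ∑ t ∈ Finset.Ico (i0 + s + 1) (p + s + 1), trX s x y i0 t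
        = ∑ t ∈ Finset.Ico i0 p, x t := by
      rw [Finset.sum_Ico_eq_sum_range, Finset.sum_Ico_eq_sum_range]
      have hc : p + s + 1 - (i0 + s + 1) = p - i0 := by omega
      rw [hc]
      apply Finset.sum_congr rfl
      intro t ht
      show (if i0 + s + 1 + t < i0 + s + 1 then y (i0 + s + 1 + t) - 1
        else x (i0 + s + 1 + t - s - 1)) = x (i0 + t)
      rw [if_neg (by omega)]
      congr 1
      omega
    rw [e1, e2]
    have e3 : (∑ t ∈ Finset.Ico 0 (i0 + s + 1), (y t - 1)) + (i0 + s + 1)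
        = ∑ t ∈ Finset.Ico 0 (i0 + s + 1), y t := by
      have : ∑ t ∈ Finset.Ico 0 (i0 + s + 1), y t
          = ∑ t ∈ Finset.Ico 0 (i0 + s + 1), ((y t - 1) + 1) := by
        apply Finset.sum_congr rfl
        intro t ht
        simp only [Finset.mem_Ico] at ht
        have := hypos t (by omega)
        omega
      rw [this, Finset.sum_add_distrib]
      simp
    rw [← Finset.range_eq_Ico] at e3 ⊢
    omega
  -- the Y part
  have hY : wt (r - s - 1) (trY s x y i0)
      = (∑ t ∈ Finset.range i0, x t) + i0 + ∑ t ∈ Finset.Ico (i0 + s + 1) r, y t := by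
    rw [wt, Finset.range_eq_Ico, ← Finset.sum_Ico_consecutive _ (Nat.zero_le i0)
      (by omega : i0 ≤ r - s - 1)]
    have e1 : ∑ t ∈ Finset.Ico 0 i0, trY s x y i0 t
        = ∑ t ∈ Finset.Ico 0 i0, (x t + 1) := by
      apply Finset.sum_congr rfl
      intro t ht
      simp only [Finset.mem_Ico] at ht
      show (if t < i0 then x t + 1 else y (t + s + 1)) = x t + 1
      rw [if_pos (by omega)]
    have e2 : ∑ t ∈ Finset.Ico i0 (r - s - 1), trY s x y i0 t
        = ∑ t ∈ Finset.Ico (i0 + s + 1) r, y t := by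
      rw [Finset.sum_Ico_eq_sum_range, Finset.sum_Ico_eq_sum_range]
      have hc : r - (i0 + s + 1) = r - s - 1 - i0 := by omega
      rw [hc]
      apply Finset.sum_congr rfl
      intro t ht
      show (if i0 + t < i0 then x (i0 + t) + 1 else y (i0 + t + s + 1)) = y (i0 + s + 1 + t)
      rw [if_neg (by omega)]
      congr 1
      omega
    rw [e1, e2, Finset.sum_add_distrib]
    simp [← Finset.range_eq_Ico]
  -- the original sums
  have hxsum : wt p x = (∑ t ∈ Finset.range i0, x t) + ∑ t ∈ Finset.Ico i0 p, x t := by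
    rw [wt, Finset.range_eq_Ico, ← Finset.sum_Ico_consecutive _ (Nat.zero_le i0)
      (by omega : i0 ≤ p), ← Finset.range_eq_Ico]
  have hysum : wt r y = (∑ t ∈ Finset.range (i0 + s + 1), y t)
      + ∑ t ∈ Finset.Ico (i0 + s + 1) r, y t := by
    rw [wt, Finset.range_eq_Ico, ← Finset.sum_Ico_consecutive _ (Nat.zero_le (i0 + s + 1))
      (by omega : i0 + s + 1 ≤ r), ← Finset.range_eq_Ico]
  omega

lemma tr_tail (hs : s + 1 ≤ r) (hy : Sq r y) (h : ∃ i, x i < y (i + s)) :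
    ∀ t, r - s - 1 ≤ t → trX s x y (Nat.find h) (t + s + 1) = x t := by
  intro t ht
  have hlt := tr_i0_lt hs hy h
  show (if t + s + 1 < Nat.find h + s + 1 then y (t + s + 1) - 1 else x (t + s + 1 - s - 1)) = x t
  rw [if_neg (by omega)]
  congr 1
  omega

end Fwd

section Bwd
variable {X Y : ℕ → ℕ}

/-- Existence of the cut index for the backward map. -/
lemma trJex : ∃ i, Y i < X (i + s) + 2 ∨ r - s - 1 ≤ i := ⟨r - s - 1, Or.inr le_rfl⟩

def trJ (r s : ℕ) (X Y : ℕ → ℕ) : ℕ := Nat.find (trJex (r := r) (s := s) (X := X) (Y := Y))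

lemma trJ_le : trJ r s X Y ≤ r - s - 1 :=
  Nat.find_le (Or.inr le_rfl)

lemma trJ_min : ∀ j < trJ r s X Y, X (j + s) + 2 ≤ Y j ∧ j < r - s - 1 := by
  intro j hj
  have := Nat.find_min (trJex (r := r) (s := s) (X := X) (Y := Y)) hj
  omega

lemma tr_Sqx (hs : s + 1 ≤ r) (hp : r - s ≤ p) (hX : Sq (p + s + 1) X) (hY : Sq (r - s - 1) Y) :
    Sq p (trx s X Y (trJ r s X Y)) := by
  have hle : trJ r s X Y ≤ r - s - 1 := trJ_le
  have hmin := trJ_min (X := X) (Y := Y) (r := r) (s := s)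
  set j0 := trJ r s X Y with hj0
  constructor
  · intro a b hab
    show (if b < j0 then Y b - 1 else X (b + s + 1))
        ≤ (if a < j0 then Y a - 1 else X (a + s + 1))
    by_cases ha : a < j0
    · by_cases hb : b < j0
      · simp only [ha, hb, if_true]
        exact Nat.sub_le_sub_right (hY.1 hab) 1
      · simp only [ha, hb, if_true, if_false]
        have h1 := (hmin a ha).1
        have h2 : X (b + s + 1) ≤ X (a + s) := hX.1 (by omega)
        omega
    · have hb : ¬ b < j0 := by omega
      simp only [ha, hb, if_false]
      exact hX.1 (by omega)
  · intro t ht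
    show (if t < j0 then Y t - 1 else X (t + s + 1)) = 0
    rw [if_neg (by omega)]
    exact hX.2 _ (by omega)

lemma tr_Sqy (hs : s + 1 ≤ r) (hp : r - s ≤ p) (hX : Sq (p + s + 1) X) (hY : Sq (r - s - 1) Y) :
    Sq r (try' s X Y (trJ r s X Y)) := by
  have hle : trJ r s X Y ≤ r - s - 1 := trJ_le
  have hmin := trJ_min (X := X) (Y := Y) (r := r) (s := s)
  have hspec : Y (trJ r s X Y) < X (trJ r s X Y + s) + 2 ∨ r - s - 1 ≤ trJ r s X Y :=
    Nat.find_spec (trJex (r := r) (s := s) (X := X) (Y := Y))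
  set j0 := trJ r s X Y with hj0
  constructor
  · intro a b hab
    show (if b < j0 + s + 1 then X b + 1 else Y (b - s - 1))
        ≤ (if a < j0 + s + 1 then X a + 1 else Y (a - s - 1))
    by_cases hb : b < j0 + s + 1
    · have ha : a < j0 + s + 1 := by omega
      simp only [ha, hb, if_true]
      exact Nat.add_le_add_right (hX.1 hab) 1
    · by_cases ha : a < j0 + s + 1
      · simp only [ha, hb, if_true, if_false]
        -- X a + 1 ≥ Y (b - s - 1)
        have h2 : Y (b - s - 1) ≤ Y j0 := hY.1 (by omega)
        rcases hspec with hsp | hsp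
        · have h3 : X (j0 + s) ≤ X a := by
            by_cases haj : a ≤ j0 + s
            · exact hX.1 haj
            · omega
          omega
        · have h4 : Y j0 = 0 := hY.2 _ hsp
          omega
      · simp only [ha, hb, if_false]
        exact hY.1 (by omega)
  · intro t ht
    show (if t < j0 + s + 1 then X t + 1 else Y (t - s - 1)) = 0
    rw [if_neg (by omega)]
    exact hY.2 _ (by omega)

lemma tr_bad (hX : Sq (p + s + 1) X) :
    ∃ i, trx s X Y (trJ r s X Y) i < try' s X Y (trJ r s X Y) (i + s) := by
  set j0 := trJ r s X Y with hj0
  refine ⟨j0, ?_⟩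
  show (if j0 < j0 then Y j0 - 1 else X (j0 + s + 1))
      < (if j0 + s < j0 + s + 1 then X (j0 + s) + 1 else Y (j0 + s - s - 1))
  rw [if_neg (by omega), if_pos (by omega)]
  have := hX.1 (by omega : j0 + s ≤ j0 + s + 1)
  omega

/-- In the backward-then-forward direction, the first violation is at `j0`. -/
lemma tr_find_bad (hX : Sq (p + s + 1) X)
    (hb : ∃ i, trx s X Y (trJ r s X Y) i < try' s X Y (trJ r s X Y) (i + s)) :
    Nat.find hb = trJ r s X Y := by
  have hmin := trJ_min (X := X) (Y := Y) (r := r) (s := s)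
  set j0 := trJ r s X Y with hj0
  rw [Nat.find_eq_iff]
  constructor
  · show (if j0 < j0 then Y j0 - 1 else X (j0 + s + 1))
        < (if j0 + s < j0 + s + 1 then X (j0 + s) + 1 else Y (j0 + s - s - 1))
    rw [if_neg (by omega), if_pos (by omega)]
    have := hX.1 (by omega : j0 + s ≤ j0 + s + 1)
    omega
  · intro m hm
    show ¬ ((if m < j0 then Y m - 1 else X (m + s + 1))
        < (if m + s < j0 + s + 1 then X (m + s) + 1 else Y (m + s - s - 1)))
    rw [if_pos (by omega), if_pos (by omega)]
    have := (hmin m hm).1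
    omega

end Bwd

/-- In the forward-then-backward direction, the cut index is the violation index. -/
lemma tr_trJ_eq {x y : ℕ → ℕ} (hs : s + 1 ≤ r) (hp : r - s ≤ p)
    (hx : Sq p x) (hy : Sq r y) (h : ∃ i, x i < y (i + s)) :
    trJ r s (trX s x y (Nat.find h)) (trY s x y (Nat.find h)) = Nat.find h := by
  have hlt := tr_i0_lt hs hy h
  have hviol := Nat.find_spec h
  have hmin := tr_min h
  have hypos := tr_ypos hy h
  set i0 := Nat.find h with hi0
  rw [trJ, Nat.find_eq_iff]
  constructor
  · by_cases hcase : i0 < r - s - 1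
    · left
      show (if i0 < i0 then x i0 + 1 else y (i0 + s + 1))
          < (if i0 + s < i0 + s + 1 then y (i0 + s) - 1 else x (i0 + s - s - 1)) + 2
      rw [if_neg (by omega), if_pos (by omega)]
      have h1 : y (i0 + s + 1) ≤ y (i0 + s) := hy.1 (by omega)
      have h2 := hypos (i0 + s) le_rfl
      omega
    · right; omega
  · intro m hm hcon
    have e1 : trY s x y i0 m = x m + 1 := by
      show (if m < i0 then x m + 1 else y (m + s + 1)) = x m + 1
      rw [if_pos (by omega)]
    have e2 : trX s x y i0 (m + s) = y (m + s) - 1 := by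
      show (if m + s < i0 + s + 1 then y (m + s) - 1 else x (m + s - s - 1)) = y (m + s) - 1
      rw [if_pos (by omega)]
    rw [e1, e2] at hcon
    have h1 := hmin m hm
    have h2 := hypos (m + s) (by omega)
    rcases hcon with hc | hc <;> omega

lemma tr_main (hs : s + 1 ≤ r) (hp : r - s ≤ p) :
    ∃ e : {q : (ℕ → ℕ) × (ℕ → ℕ) // (Sq p q.1 ∧ Sq r q.2) ∧ ∃ i, q.1 i < q.2 (i + s)} ≃
        {q : (ℕ → ℕ) × (ℕ → ℕ) // Sq (p + s + 1) q.1 ∧ Sq (r - s - 1) q.2},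
      (∀ z, wt p z.1.1 + wt r z.1.2
          = (wt (p + s + 1) (e z).1.1 + wt (r - s - 1) (e z).1.2) + (s + 1)) ∧
      (∀ z t, r - s - 1 ≤ t → (e z).1.1 (t + s + 1) = z.1.1 t) := by
  classical
  refine ⟨{
    toFun := fun z => ⟨(trX s z.1.1 z.1.2 (Nat.find z.2.2), trY s z.1.1 z.1.2 (Nat.find z.2.2)),
      tr_SqX hs hp z.2.1.1 z.2.1.2 z.2.2, tr_SqY hs z.2.1.1 z.2.1.2 z.2.2⟩
    invFun := fun z => ⟨(trx s z.1.1 z.1.2 (trJ r s z.1.1 z.1.2),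
        try' s z.1.1 z.1.2 (trJ r s z.1.1 z.1.2)),
      ⟨tr_Sqx hs hp z.2.1 z.2.2, tr_Sqy hs hp z.2.1 z.2.2⟩,
      tr_bad (hX := z.2.1)⟩
    left_inv := ?_
    right_inv := ?_ }, ?_, ?_⟩
  · -- left inverse
    rintro ⟨⟨x, y⟩, ⟨hx, hy⟩, hbad⟩
    dsimp only at hx hy hbad
    apply Subtype.ext
    simp only
    have hJ := tr_trJ_eq hs hp hx hy hbad
    rw [hJ]
    have hlt := tr_i0_lt hs hy hbad
    have hviol := Nat.find_spec hbad
    have hmin := tr_min hbad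
    have hypos := tr_ypos hy hbad
    set i0 := Nat.find hbad with hi0
    rw [Prod.mk.injEq]
    constructor
    · -- first component
      funext t
      show (if t < i0 then trY s x y i0 t - 1 else trX s x y i0 (t + s + 1)) = x t
      by_cases ht : t < i0
      · rw [if_pos ht]
        show trY s x y i0 t - 1 = x t
        show (if t < i0 then x t + 1 else y (t + s + 1)) - 1 = x t
        rw [if_pos ht]
        omega
      · rw [if_neg ht]
        show (if t + s + 1 < i0 + s + 1 then y (t + s + 1) - 1 else x (t + s + 1 - s - 1)) = x t
        rw [if_neg (by omega)]
        congr 1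
        omega
    · -- second component
      funext t
      show (if t < i0 + s + 1 then trX s x y i0 t + 1 else trY s x y i0 (t - s - 1)) = y t
      by_cases ht : t < i0 + s + 1
      · rw [if_pos ht]
        show (if t < i0 + s + 1 then y t - 1 else x (t - s - 1)) + 1 = y t
        rw [if_pos ht]
        have := hypos t (by omega)
        omega
      · rw [if_neg ht]
        show (if t - s - 1 < i0 then x (t - s - 1) + 1 else y (t - s - 1 + s + 1)) = y t
        rw [if_neg (by omega)]
        congr 1
        omega
  · -- right inverse
    rintro ⟨⟨X, Y⟩, hX, hY⟩
    dsimp only at hX hY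
    apply Subtype.ext
    simp only
    rw [tr_find_bad hX]
    have hle : trJ r s X Y ≤ r - s - 1 := trJ_le
    have hmin := trJ_min (X := X) (Y := Y) (r := r) (s := s)
    set j0 := trJ r s X Y with hj0
    rw [Prod.mk.injEq]
    constructor
    · funext t
      show (if t < j0 + s + 1 then try' s X Y j0 t - 1 else trx s X Y j0 (t - s - 1)) = X t
      by_cases ht : t < j0 + s + 1
      · rw [if_pos ht]
        show (if t < j0 + s + 1 then X t + 1 else Y (t - s - 1)) - 1 = X t
        rw [if_pos ht]
        omega
      · rw [if_neg ht]
        show (if t - s - 1 < j0 then Y (t - s - 1) - 1 else X (t - s - 1 + s + 1)) = X t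
        rw [if_neg (by omega)]
        congr 1
        omega
    · funext t
      show (if t < j0 then trx s X Y j0 t + 1 else try' s X Y j0 (t + s + 1)) = Y t
      by_cases ht : t < j0
      · rw [if_pos ht]
        show (if t < j0 then Y t - 1 else X (t + s + 1)) + 1 = Y t
        rw [if_pos ht]
        have := (hmin t ht).1
        omega
      · rw [if_neg ht]
        show (if t + s + 1 < j0 + s + 1 then X (t + s + 1) + 1 else Y (t + s + 1 - s - 1)) = Y t
        rw [if_neg (by omega)]
        congr 1
        omega
  · -- weights
    rintro ⟨⟨x, y⟩, ⟨hx, hy⟩, hbad⟩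
    dsimp only at hx hy hbad
    exact tr_wt hs hp hx hy hbad
  · -- tail invariant
    rintro ⟨⟨x, y⟩, ⟨hx, hy⟩, hbad⟩ t ht
    dsimp only at hx hy hbad
    exact tr_tail hs hy hbad t ht

end TR

section Assembly

/-- Triples of sequences. -/
def T3 : Type := (ℕ → ℕ) × ((ℕ → ℕ) × (ℕ → ℕ))

def P3 (k1 k2 k3 : ℕ) (q : T3) : Prop := Sq k1 q.1 ∧ (Sq k2 q.2.1 ∧ Sq k3 q.2.2)
def W3 (k1 k2 k3 : ℕ) (q : T3) : ℕ := wt k1 q.1 + (wt k2 q.2.1 + wt k3 q.2.2)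

/-- Row 1 dominates row 2 with offset `d`. -/
def RR (d : ℕ) (q : T3) : Prop := ∀ i, q.2.1 (i + d) ≤ q.1 i
/-- Row 2 dominates row 3. -/
def R23 (q : T3) : Prop := ∀ i, q.2.2 i ≤ q.2.1 i

lemma P3_finite (k1 k2 k3 : ℕ) :
    ∀ N, Finite {q : T3 // P3 k1 k2 k3 q ∧ W3 k1 k2 k3 q = N} :=
  finite_pair (Sq k1) (fun v : (ℕ → ℕ) × (ℕ → ℕ) => Sq k2 v.1 ∧ Sq k3 v.2)
    (wt k1) (fun v => wt k2 v.1 + wt k3 v.2) (sq_finite k1)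
    (finite_pair (Sq k2) (Sq k3) (wt k2) (wt k3) (sq_finite k2) (sq_finite k3))

lemma gfun_P3 (k1 k2 k3 : ℕ) :
    gfun (P3 k1 k2 k3) (W3 k1 k2 k3) = Agf k1 * (Agf k2 * Agf k3) := by
  have inner : gfun (fun v : (ℕ → ℕ) × (ℕ → ℕ) => Sq k2 v.1 ∧ Sq k3 v.2)
      (fun v => wt k2 v.1 + wt k3 v.2) = Agf k2 * Agf k3 :=
    gfun_prod (Sq k2) (Sq k3) (wt k2) (wt k3) (sq_finite k2) (sq_finite k3)
  have outer := gfun_prod (Sq k1) (fun v : (ℕ → ℕ) × (ℕ → ℕ) => Sq k2 v.1 ∧ Sq k3 v.2)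
    (wt k1) (fun v => wt k2 v.1 + wt k3 v.2) (sq_finite k1)
    (finite_pair (Sq k2) (Sq k3) (wt k2) (wt k3) (sq_finite k2) (sq_finite k3))
  calc gfun (P3 k1 k2 k3) (W3 k1 k2 k3)
      = Agf k1 * gfun (fun v : (ℕ → ℕ) × (ℕ → ℕ) => Sq k2 v.1 ∧ Sq k3 v.2)
          (fun v => wt k2 v.1 + wt k3 v.2) := outer
    _ = Agf k1 * (Agf k2 * Agf k3) := by rw [inner]

/-- Cancellation for subtype equivalences of pairs. -/
lemma esymm_pair_cancel {A B : (ℕ → ℕ) × (ℕ → ℕ) → Prop}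
    (e : {v // A v} ≃ {v // B v}) (zz : {v // A v})
    (pf : B ((e zz).1.1, (e zz).1.2)) :
    e.symm ⟨((e zz).1.1, (e zz).1.2), pf⟩ = zz := by
  have h1 : (⟨((e zz).1.1, (e zz).1.2), pf⟩ : {v // B v}) = e zz := Subtype.ext rfl
  rw [h1, Equiv.symm_apply_apply]

lemma eapp_pair_cancel {A B : (ℕ → ℕ) × (ℕ → ℕ) → Prop}
    (e : {v // A v} ≃ {v // B v}) (yy : {v // B v})
    (pf : A ((e.symm yy).1.1, (e.symm yy).1.2)) :
    e ⟨((e.symm yy).1.1, (e.symm yy).1.2), pf⟩ = yy := by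
  have h1 : (⟨((e.symm yy).1.1, (e.symm yy).1.2), pf⟩ : {v // A v}) = e.symm yy :=
    Subtype.ext rfl
  rw [h1, Equiv.apply_symm_apply]

/-- Lift of the two-row swap along rows (1,2) with row 3 as spectator. -/
lemma lift13 (k3 : ℕ) {p r s : ℕ} (hs : s + 1 ≤ r) (hp : r - s ≤ p) :
    gfun (fun q : T3 => P3 p r k3 q ∧ ¬ RR s q) (W3 p r k3)
      = X ^ (s + 1) * gfun (P3 (p + s + 1) (r - s - 1) k3) (W3 (p + s + 1) (r - s - 1) k3) := by
  obtain ⟨e, hw, _⟩ := tr_main (p := p) (r := r) (s := s) hs hp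
  refine gfun_equiv_shift _ _ _ _ (s + 1)
    { toFun := fun z =>
        ⟨((e ⟨(z.1.1, z.1.2.1), ⟨⟨z.2.1.1, z.2.1.2.1⟩, by
            have hcon := z.2.2; unfold RR at hcon; push_neg at hcon; exact hcon⟩⟩).1.1,
          ((e ⟨(z.1.1, z.1.2.1), ⟨⟨z.2.1.1, z.2.1.2.1⟩, by
            have hcon := z.2.2; unfold RR at hcon; push_neg at hcon; exact hcon⟩⟩).1.2,
           z.1.2.2)),
          (e ⟨(z.1.1, z.1.2.1), ⟨⟨z.2.1.1, z.2.1.2.1⟩, by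
            have hcon := z.2.2; unfold RR at hcon; push_neg at hcon; exact hcon⟩⟩).2.1,
          (e ⟨(z.1.1, z.1.2.1), ⟨⟨z.2.1.1, z.2.1.2.1⟩, by
            have hcon := z.2.2; unfold RR at hcon; push_neg at hcon; exact hcon⟩⟩).2.2,
          z.2.1.2.2⟩
      invFun := fun y =>
        ⟨((e.symm ⟨(y.1.1, y.1.2.1), ⟨y.2.1, y.2.2.1⟩⟩).1.1,
          ((e.symm ⟨(y.1.1, y.1.2.1), ⟨y.2.1, y.2.2.1⟩⟩).1.2, y.1.2.2)),
          ⟨(e.symm ⟨(y.1.1, y.1.2.1), ⟨y.2.1, y.2.2.1⟩⟩).2.1.1,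
           (e.symm ⟨(y.1.1, y.1.2.1), ⟨y.2.1, y.2.2.1⟩⟩).2.1.2,
           y.2.2.2⟩, by
            have hbad := (e.symm ⟨(y.1.1, y.1.2.1), ⟨y.2.1, y.2.2.1⟩⟩).2.2
            unfold RR
            push_neg
            exact hbad⟩
      left_inv := by
        intro z
        apply Subtype.ext
        dsimp only
        rw [esymm_pair_cancel]
        rfl
      right_inv := by
        intro y
        apply Subtype.ext
        dsimp only
        rw [eapp_pair_cancel]
        rfl
    } ?_
  intro z
  dsimp only [Equiv.coe_fn_mk]
  have hwz := hw ⟨(z.1.1, z.1.2.1), ⟨⟨z.2.1.1, z.2.1.2.1⟩, by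
    have hcon := z.2.2; unfold RR at hcon; push_neg at hcon; exact hcon⟩⟩
  dsimp only at hwz
  unfold W3
  dsimp only
  omega

/-- Lift of the two-row swap along rows (2,3) with row 1 as spectator,
transporting the row-1/row-2 condition. -/
lemma lift23 (k1 d K m : ℕ) (hm : 1 ≤ m) (hmK : m ≤ K) (hd : m - 1 ≤ d) :
    gfun (fun q : T3 => (P3 k1 K m q ∧ RR d q) ∧ ¬ R23 q) (W3 k1 K m)
      = X ^ 1 * gfun (fun q : T3 => P3 k1 (K + 1) (m - 1) q ∧ RR (d + 1) q)
          (W3 k1 (K + 1) (m - 1)) := by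
  obtain ⟨e, hw, htail⟩ := tr_main (p := K) (r := m) (s := 0) (by omega) (by omega)
  refine gfun_equiv_shift _ _ _ _ 1
    { toFun := fun z =>
        ⟨(z.1.1,
          ((e ⟨(z.1.2.1, z.1.2.2), ⟨⟨z.2.1.1.2.1, z.2.1.1.2.2⟩, by
              have hcon := z.2.2; unfold R23 at hcon; push_neg at hcon; exact hcon⟩⟩).1.1,
           (e ⟨(z.1.2.1, z.1.2.2), ⟨⟨z.2.1.1.2.1, z.2.1.1.2.2⟩, by
              have hcon := z.2.2; unfold R23 at hcon; push_neg at hcon; exact hcon⟩⟩).1.2)),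
         ⟨z.2.1.1.1,
          (e ⟨(z.1.2.1, z.1.2.2), ⟨⟨z.2.1.1.2.1, z.2.1.1.2.2⟩, by
              have hcon := z.2.2; unfold R23 at hcon; push_neg at hcon; exact hcon⟩⟩).2.1,
          (e ⟨(z.1.2.1, z.1.2.2), ⟨⟨z.2.1.1.2.1, z.2.1.1.2.2⟩, by
              have hcon := z.2.2; unfold R23 at hcon; push_neg at hcon; exact hcon⟩⟩).2.2⟩,
         by
          intro i
          have ht := htail ⟨(z.1.2.1, z.1.2.2), ⟨⟨z.2.1.1.2.1, z.2.1.1.2.2⟩, by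
              have hcon := z.2.2; unfold R23 at hcon; push_neg at hcon; exact hcon⟩⟩
            (i + d) (by omega)
          have h2 := z.2.1.2 i
          dsimp only at ht
          simp only [Nat.add_zero] at ht
          show (e ⟨(z.1.2.1, z.1.2.2), _⟩).1.1 (i + d + 1) ≤ z.1.1 i
          omega⟩
      invFun := fun y =>
        ⟨(y.1.1,
          ((e.symm ⟨(y.1.2.1, y.1.2.2), ⟨y.2.1.2.1, y.2.1.2.2⟩⟩).1.1,
           (e.symm ⟨(y.1.2.1, y.1.2.2), ⟨y.2.1.2.1, y.2.1.2.2⟩⟩).1.2)),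
         ⟨⟨y.2.1.1,
           (e.symm ⟨(y.1.2.1, y.1.2.2), ⟨y.2.1.2.1, y.2.1.2.2⟩⟩).2.1.1,
           (e.symm ⟨(y.1.2.1, y.1.2.2), ⟨y.2.1.2.1, y.2.1.2.2⟩⟩).2.1.2⟩,
          by
            intro i
            have ht := htail (e.symm ⟨(y.1.2.1, y.1.2.2), ⟨y.2.1.2.1, y.2.1.2.2⟩⟩)
              (i + d) (by omega)
            rw [Equiv.apply_symm_apply] at ht
            have h2 := y.2.2 i
            dsimp only at ht
            simp only [Nat.add_zero] at ht
            simp only [← Nat.add_assoc] at h2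
            show (e.symm ⟨(y.1.2.1, y.1.2.2), _⟩).1.1 (i + d) ≤ y.1.1 i
            omega⟩,
         by
          have hbad := (e.symm ⟨(y.1.2.1, y.1.2.2), ⟨y.2.1.2.1, y.2.1.2.2⟩⟩).2.2
          unfold R23
          push_neg
          exact hbad⟩
      left_inv := by
        intro z
        apply Subtype.ext
        dsimp only
        rw [esymm_pair_cancel]
        rfl
      right_inv := by
        intro y
        apply Subtype.ext
        dsimp only
        rw [eapp_pair_cancel]
        rfl
    } ?_
  intro z
  dsimp only [Equiv.coe_fn_mk]
  have hwz := hw ⟨(z.1.2.1, z.1.2.2), ⟨⟨z.2.1.1.2.1, z.2.1.1.2.2⟩, by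
      have hcon := z.2.2; unfold R23 at hcon; push_neg at hcon; exact hcon⟩⟩
  dsimp only at hwz
  simp only [Nat.add_zero, Nat.zero_add, Nat.sub_zero] at hwz
  unfold W3
  dsimp only
  omega

end Assembly

section Ext

/-- Extension of a `Fin`-tuple by zero. -/
def extF (k : ℕ) (f : Fin k → ℕ) : ℕ → ℕ := fun t => if h : t < k then f ⟨t, h⟩ else 0

lemma extF_lt (k : ℕ) (f : Fin k → ℕ) {t : ℕ} (h : t < k) : extF k f t = f ⟨t, h⟩ := dif_pos h

lemma extF_ge (k : ℕ) (f : Fin k → ℕ) {t : ℕ} (h : k ≤ t) : extF k f t = 0 :=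
  dif_neg (by omega)

lemma sq_extF (k : ℕ) (f : Fin k → ℕ) (hf : Antitone f) : Sq k (extF k f) := by
  constructor
  · intro a b hab
    by_cases hb : b < k
    · have ha : a < k := by omega
      rw [extF_lt k f hb, extF_lt k f ha]
      exact hf (show (⟨a, ha⟩ : Fin k) ≤ ⟨b, hb⟩ from hab)
    · rw [extF_ge k f (by omega)]
      exact Nat.zero_le _
  · intro t ht
    exact extF_ge k f ht

lemma wt_extF (k : ℕ) (f : Fin k → ℕ) : wt k (extF k f) = ∑ j, f j := by
  rw [wt, ← Fin.sum_univ_eq_sum_range (fun i => extF k f i) k]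
  exact Finset.sum_congr rfl (fun j _ => by rw [extF_lt k f j.2])

end Ext


/-- If `G` is the generating function for skew plane partitions of shape
`(n+m-1, n+m-1, m)/(m-1)` — row 1 occupying columns `m, …, n+m-1`, row 2 columns
`1, …, n+m-1`, row 3 columns `1, …, m` — then
`(q;q)_{m-1} (q;q)_{m+n+1} (q;q)_n ⬝ G = 1 - q - q^{m+n+1} + q^{m+2}`. -/
theorem stmt_9 (m n : ℕ) (hm : 1 ≤ m) (hn : 1 ≤ n)
    (G : PowerSeries ℤ)
    (hG : G = PowerSeries.mk fun N =>
      (Nat.card {p : (Fin n → ℕ) × (Fin (n + m - 1) → ℕ) × (Fin m → ℕ) //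
        Antitone p.1 ∧ Antitone p.2.1 ∧ Antitone p.2.2 ∧
        -- row 1 ≥ row 2 in columns `m, …, n+m-1`:
        (∀ j : Fin n, p.2.1 ⟨m - 1 + (j : ℕ), by have := j.isLt; omega⟩ ≤ p.1 j) ∧
        -- row 2 ≥ row 3 in columns `1, …, m`:
        (∀ j : Fin m, p.2.2 j ≤ p.2.1 ⟨(j : ℕ), by have := j.isLt; omega⟩) ∧
        (∑ j, p.1 j) + (∑ j, p.2.1 j) + (∑ j, p.2.2 j) = N} : ℤ)) :
    qqPoch (m - 1) * qqPoch (m + n + 1) * qqPoch n * G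
      = 1 - X - X ^ (m + n + 1) + X ^ (m + 2) := by
  classical
  -- Step 1 : identify `G` with the generating function of the sequence model.
  have hGg : G = gfun (fun q : T3 =>
      (P3 n (n + m - 1) m q ∧ RR (m - 1) q) ∧ R23 q) (W3 n (n + m - 1) m) := by
    rw [hG]
    ext N
    rw [PowerSeries.coeff_mk, gfun_coeff]
    congr 1
    apply Nat.card_congr
    refine { toFun := fun p => ⟨(extF n p.1.1, (extF (n + m - 1) p.1.2.1, extF m p.1.2.2)), ?_⟩,
             invFun := fun q => ⟨(fun j : Fin n => q.1.1 j,
               (fun j : Fin (n + m - 1) => q.1.2.1 j, fun j : Fin m => q.1.2.2 j)), ?_⟩,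
             left_inv := ?_, right_inv := ?_ }
    · obtain ⟨⟨a, b, c⟩, h1, h2, h3, h4, h5, h6⟩ := p
      dsimp only at h1 h2 h3 h4 h5 h6
      refine ⟨⟨⟨⟨sq_extF n a h1, sq_extF _ b h2, sq_extF m c h3⟩, ?_⟩, ?_⟩, ?_⟩
      · -- RR (m-1)
        intro i
        show extF (n + m - 1) b (i + (m - 1)) ≤ extF n a i
        by_cases hi : i < n
        · rw [extF_lt n a hi, extF_lt (n + m - 1) b (show i + (m - 1) < n + m - 1 by omega)]
          exact le_of_eq_of_le (congrArg b (Fin.ext (show i + (m - 1) = m - 1 + i by omega)))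
            (h4 ⟨i, hi⟩)
        · rw [extF_ge (n + m - 1) b (by omega)]
          exact Nat.zero_le _
      · -- R23
        intro i
        show extF m c i ≤ extF (n + m - 1) b i
        by_cases hi : i < m
        · rw [extF_lt m c hi, extF_lt (n + m - 1) b (by omega : i < n + m - 1)]
          exact h5 ⟨i, hi⟩
        · rw [extF_ge m c (by omega)]
          exact Nat.zero_le _
      · -- weight
        show W3 n (n + m - 1) m (extF n a, (extF (n + m - 1) b, extF m c)) = N
        unfold W3
        dsimp only
        rw [wt_extF, wt_extF, wt_extF]
        omega
    · obtain ⟨⟨x, yz⟩, hq⟩ := q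
      obtain ⟨y, z⟩ := yz
      obtain ⟨⟨⟨⟨hx, hy, hz⟩, hRR⟩, hR23⟩, hW⟩ := hq
      refine ⟨fun u v huv => hx.1 (show (u : ℕ) ≤ (v : ℕ) from huv),
        fun u v huv => hy.1 (show (u : ℕ) ≤ (v : ℕ) from huv),
        fun u v huv => hz.1 (show (u : ℕ) ≤ (v : ℕ) from huv), ?_, ?_, ?_⟩
      · intro j
        show y (m - 1 + (j : ℕ)) ≤ x (j : ℕ)
        have h := hRR (j : ℕ)
        have e : (j : ℕ) + (m - 1) = m - 1 + (j : ℕ) := by omega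
        rw [e] at h
        exact h
      · intro j
        exact hR23 (j : ℕ)
      · show (∑ j : Fin n, x (j : ℕ)) + (∑ j : Fin (n + m - 1), y (j : ℕ))
            + (∑ j : Fin m, z (j : ℕ)) = N
        have e1 : ∑ j : Fin n, x (j : ℕ) = wt n x := Fin.sum_univ_eq_sum_range _ n
        have e2 : ∑ j : Fin (n + m - 1), y (j : ℕ) = wt (n + m - 1) y :=
          Fin.sum_univ_eq_sum_range _ (n + m - 1)
        have e3 : ∑ j : Fin m, z (j : ℕ) = wt m z := Fin.sum_univ_eq_sum_range _ m
        rw [e1, e2, e3]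
        unfold W3 at hW
        dsimp only at hW
        omega
    · intro p
      apply Subtype.ext
      obtain ⟨⟨a, b, c⟩, hp⟩ := p
      dsimp only
      rw [Prod.mk.injEq, Prod.mk.injEq]
      refine ⟨?_, ?_, ?_⟩
      · funext j; rw [extF_lt n a j.2]
      · funext j; rw [extF_lt (n + m - 1) b j.2]
      · funext j; rw [extF_lt m c j.2]
    · intro q
      apply Subtype.ext
      obtain ⟨⟨x, yz⟩, hq⟩ := q
      obtain ⟨y, z⟩ := yz
      dsimp only
      change (_ : (ℕ → ℕ) × ((ℕ → ℕ) × (ℕ → ℕ))) = _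
      rw [Prod.mk.injEq, Prod.mk.injEq]
      refine ⟨?_, ?_, ?_⟩
      · funext t
        by_cases ht : t < n
        · rw [extF_lt n _ ht]
        · rw [extF_ge n _ (by omega)]
          exact (hq.1.1.1.1.2 t (by omega)).symm
      · funext t
        by_cases ht : t < n + m - 1
        · rw [extF_lt (n + m - 1) _ ht]
        · rw [extF_ge (n + m - 1) _ (by omega)]
          exact (hq.1.1.1.2.1.2 t (by omega)).symm
      · funext t
        by_cases ht : t < m
        · rw [extF_lt m _ ht]
        · rw [extF_ge m _ (by omega)]
          exact (hq.1.1.1.2.2.2 t (by omega)).symm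
  -- Step 2 : the four-term expansion of the generating function.
  have hs2 := gfun_split (P3 n (n + m - 1) m) (RR (m - 1)) (W3 n (n + m - 1) m)
    (P3_finite n (n + m - 1) m)
  have E1 : gfun (P3 n (n + m - 1) m) (W3 n (n + m - 1) m)
      = Agf n * (Agf (m + n - 1) * Agf m) := by
    rw [gfun_P3, show n + m - 1 = m + n - 1 from by omega]
  have hb1 : gfun (fun q : T3 => P3 n (n + m - 1) m q ∧ ¬ RR (m - 1) q) (W3 n (n + m - 1) m)
      = X ^ m * (Agf (m + n) * (Agf (n - 1) * Agf m)) := by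
    have h := lift13 m (p := n) (r := n + m - 1) (s := m - 1) (by omega) (by omega)
    rw [h, gfun_P3, show m - 1 + 1 = m from by omega,
      show n + (m - 1) + 1 = m + n from by omega,
      show n + m - 1 - (m - 1) - 1 = n - 1 from by omega]
  have hs4 := gfun_split (fun q : T3 => P3 n (n + m - 1) m q ∧ RR (m - 1) q) R23
    (W3 n (n + m - 1) m)
    (finite_sub _ _ _ (fun a ha => ha.1) (P3_finite n (n + m - 1) m))
  have hb2 := lift23 n (m - 1) (n + m - 1) m hm (by omega) (by omega)
  have hs6 := gfun_split (P3 n (n + m - 1 + 1) (m - 1)) (RR (m - 1 + 1))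
    (W3 n (n + m - 1 + 1) (m - 1)) (P3_finite n (n + m - 1 + 1) (m - 1))
  have E6 : gfun (P3 n (n + m - 1 + 1) (m - 1)) (W3 n (n + m - 1 + 1) (m - 1))
      = Agf n * (Agf (m + n) * Agf (m - 1)) := by
    rw [gfun_P3, show n + m - 1 + 1 = m + n from by omega]
  have hb3 : gfun (fun q : T3 => P3 n (n + m - 1 + 1) (m - 1) q ∧ ¬ RR (m - 1 + 1) q)
      (W3 n (n + m - 1 + 1) (m - 1))
      = X ^ (m + 1) * (Agf (m + n + 1) * (Agf (n - 1) * Agf (m - 1))) := by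
    have h := lift13 (m - 1) (p := n) (r := n + m - 1 + 1) (s := m - 1 + 1)
      (by omega) (by omega)
    rw [h, gfun_P3, show m - 1 + 1 + 1 = m + 1 from by omega,
      show n + (m - 1 + 1) + 1 = m + n + 1 from by omega,
      show n + m - 1 + 1 - (m - 1 + 1) - 1 = n - 1 from by omega]
  have hGgf : gfun (fun q : T3 =>
      (P3 n (n + m - 1) m q ∧ RR (m - 1) q) ∧ R23 q) (W3 n (n + m - 1) m)
      = Agf n * (Agf (m + n - 1) * Agf m)
        - X ^ m * (Agf (m + n) * (Agf (n - 1) * Agf m))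
        - X ^ 1 * (Agf n * (Agf (m + n) * Agf (m - 1))
            - X ^ (m + 1) * (Agf (m + n + 1) * (Agf (n - 1) * Agf (m - 1)))) := by
    have h6' : gfun (fun q : T3 => P3 n (n + m - 1 + 1) (m - 1) q ∧ RR (m - 1 + 1) q)
        (W3 n (n + m - 1 + 1) (m - 1))
        = Agf n * (Agf (m + n) * Agf (m - 1))
          - X ^ (m + 1) * (Agf (m + n + 1) * (Agf (n - 1) * Agf (m - 1))) := by
      linear_combination E6 - hs6 - hb3
    linear_combination E1 - hs2 - hb1 - hs4 - hb2 - X ^ 1 * h6'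
  -- Step 3 : algebra with the q-Pochhammer symbols.
  have hsucc : ∀ k : ℕ, qqPoch (k + 1) = qqPoch k * (1 - X ^ (k + 1)) := by
    intro k
    rw [qqPoch, Finset.prod_range_succ]
    rfl
  have hPm : qqPoch m = qqPoch (m - 1) * (1 - X ^ m) := by
    have h := hsucc (m - 1)
    rw [show m - 1 + 1 = m from by omega] at h
    exact h
  have hPmn1 : qqPoch (m + n + 1) = qqPoch (m + n) * (1 - X ^ (m + n + 1)) := hsucc (m + n)
  have hA1 := qq_Agf n
  have hA2 := qq_Agf m
  have hA3 := qq_Agf (m + n)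
  have hA4 := qq_Agf (m + n + 1)
  have hA8 := qq_Agf (m - 1)
  have hA5 : qqPoch (m + n + 1) * Agf (m + n - 1)
      = (1 - X ^ (m + n)) * (1 - X ^ (m + n + 1)) := by
    have h1 : qqPoch (m + n) = qqPoch (m + n - 1) * (1 - X ^ (m + n)) := by
      have h := hsucc (m + n - 1)
      rw [show m + n - 1 + 1 = m + n from by omega] at h
      exact h
    rw [hPmn1, h1]
    linear_combination ((1 - X ^ (m + n)) * (1 - X ^ (m + n + 1))) * qq_Agf (m + n - 1)
  have hA6 : qqPoch n * Agf (n - 1) = 1 - X ^ n := by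
    have h := hsucc (n - 1)
    rw [show n - 1 + 1 = n from by omega] at h
    rw [h]
    linear_combination (1 - X ^ n) * qq_Agf (n - 1)
  have hA7 : qqPoch m * Agf (m - 1) = 1 - X ^ m := by
    rw [hPm]
    linear_combination (1 - X ^ m) * qq_Agf (m - 1)
  have hCne : qqPoch m * qqPoch (m + n) ≠ 0 :=
    mul_ne_zero (left_ne_zero_of_mul_eq_one hA2) (left_ne_zero_of_mul_eq_one hA3)
  apply mul_left_cancel₀ hCne
  rw [hGg, hGgf]
  have hT1 : (qqPoch m * qqPoch (m + n)) * (qqPoch (m - 1) * qqPoch (m + n + 1) * qqPoch n *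
        (Agf n * (Agf (m + n - 1) * Agf m)))
      = qqPoch (m - 1) * qqPoch (m + n) * ((1 - X ^ (m + n)) * (1 - X ^ (m + n + 1))) := by
    calc (qqPoch m * qqPoch (m + n)) * (qqPoch (m - 1) * qqPoch (m + n + 1) * qqPoch n *
        (Agf n * (Agf (m + n - 1) * Agf m)))
        = (qqPoch n * Agf n) * (qqPoch m * Agf m) * (qqPoch (m + n + 1) * Agf (m + n - 1))
          * (qqPoch (m - 1) * qqPoch (m + n)) := by ring
      _ = _ := by rw [hA1, hA2, hA5]; ring
  have hT2 : (qqPoch m * qqPoch (m + n)) * (qqPoch (m - 1) * qqPoch (m + n + 1) * qqPoch n *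
        (X ^ m * (Agf (m + n) * (Agf (n - 1) * Agf m))))
      = X ^ m * (1 - X ^ n) * (qqPoch (m - 1) * qqPoch (m + n + 1)) := by
    calc (qqPoch m * qqPoch (m + n)) * (qqPoch (m - 1) * qqPoch (m + n + 1) * qqPoch n *
        (X ^ m * (Agf (m + n) * (Agf (n - 1) * Agf m))))
        = (qqPoch (m + n) * Agf (m + n)) * (qqPoch m * Agf m) * (qqPoch n * Agf (n - 1))
          * (X ^ m * (qqPoch (m - 1) * qqPoch (m + n + 1))) := by ring
      _ = _ := by rw [hA3, hA2, hA6]; ring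
  have hT3 : (qqPoch m * qqPoch (m + n)) * (qqPoch (m - 1) * qqPoch (m + n + 1) * qqPoch n *
        (X ^ 1 * (Agf n * (Agf (m + n) * Agf (m - 1)))))
      = X ^ 1 * (qqPoch m * qqPoch (m + n + 1)) := by
    calc (qqPoch m * qqPoch (m + n)) * (qqPoch (m - 1) * qqPoch (m + n + 1) * qqPoch n *
        (X ^ 1 * (Agf n * (Agf (m + n) * Agf (m - 1)))))
        = (qqPoch n * Agf n) * (qqPoch (m + n) * Agf (m + n)) * (qqPoch (m - 1) * Agf (m - 1))
          * (X ^ 1 * (qqPoch m * qqPoch (m + n + 1))) := by ring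
      _ = _ := by rw [hA1, hA3, hA8]; ring
  have hT4 : (qqPoch m * qqPoch (m + n)) * (qqPoch (m - 1) * qqPoch (m + n + 1) * qqPoch n *
        (X ^ 1 * (X ^ (m + 1) * (Agf (m + n + 1) * (Agf (n - 1) * Agf (m - 1))))))
      = X ^ 1 * X ^ (m + 1) * (1 - X ^ n) * (qqPoch m * qqPoch (m + n)) := by
    calc (qqPoch m * qqPoch (m + n)) * (qqPoch (m - 1) * qqPoch (m + n + 1) * qqPoch n *
        (X ^ 1 * (X ^ (m + 1) * (Agf (m + n + 1) * (Agf (n - 1) * Agf (m - 1))))))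
        = (qqPoch (m + n + 1) * Agf (m + n + 1)) * (qqPoch n * Agf (n - 1))
          * (qqPoch (m - 1) * Agf (m - 1))
          * (X ^ 1 * X ^ (m + 1) * (qqPoch m * qqPoch (m + n))) := by ring
      _ = _ := by rw [hA4, hA6, hA8]; ring
  have step1 : (qqPoch m * qqPoch (m + n)) * (qqPoch (m - 1) * qqPoch (m + n + 1) * qqPoch n *
        (Agf n * (Agf (m + n - 1) * Agf m)
        - X ^ m * (Agf (m + n) * (Agf (n - 1) * Agf m))
        - X ^ 1 * (Agf n * (Agf (m + n) * Agf (m - 1))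
            - X ^ (m + 1) * (Agf (m + n + 1) * (Agf (n - 1) * Agf (m - 1))))))
      = qqPoch (m - 1) * qqPoch (m + n) * ((1 - X ^ (m + n)) * (1 - X ^ (m + n + 1)))
        - X ^ m * (1 - X ^ n) * (qqPoch (m - 1) * qqPoch (m + n + 1))
        - X ^ 1 * (qqPoch m * qqPoch (m + n + 1))
        + X ^ 1 * X ^ (m + 1) * (1 - X ^ n) * (qqPoch m * qqPoch (m + n)) := by
    linear_combination hT1 - hT2 - hT3 + hT4
  rw [step1, hPm, hPmn1]
  ring

end
end

section
/- Let m ≥ 1 and n ≥ 1 be integers, and let P_1 be the finite poset whose elements are the cells {(1,j) : m ≤ j ≤ n+m−1} ∪ {(2,j) : 1 ≤ j ≤ n+m−1} ∪ {(3,j) : 1 ≤ j ≤ m}, partially ordered componentwise: (i,j) ≤ (i′,j′) iff i ≤ i′ and j ≤ j′. Then the number of linear extensions of P_1 is e(P_1) = (2n+2m−1)! / ((m−1)! · (n−1)! · (m+n+1)!). -/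
/-- The cells `(i, j)` (row `i`, 0-indexed; column `j`, 1-indexed) with `i < R` and
`lo i < j ≤ hi i`, partially ordered componentwise. -/
abbrev SkewCells (R : ℕ) (lo hi : ℕ → ℕ) : Type :=
  {c : ℕ × ℕ // c.1 < R ∧ lo c.1 < c.2 ∧ c.2 ≤ hi c.1}

namespace Stmt10


noncomputable def g (k : ℤ) : ℚ := if 0 ≤ k then ((k.toNat).factorial : ℚ)⁻¹ else 0

lemma g_natCast (k : ℕ) : g (k : ℤ) = ((k.factorial : ℚ))⁻¹ := by
  simp [g]

lemma g_neg {k : ℤ} (h : k < 0) : g k = 0 := by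
  simp [g, not_le.mpr h]

lemma g_sub_one (k : ℤ) : g (k - 1) = (k : ℚ) * g k := by
  rcases lt_trichotomy k 0 with h | h | h
  · rw [g_neg h, g_neg (by omega), mul_zero]
  · subst h; rw [g_neg (by omega)]; simp
  · obtain ⟨m, rfl⟩ : ∃ m : ℕ, k = (m : ℤ) + 1 := ⟨(k - 1).toNat, by omega⟩
    rw [show ((m:ℤ) + 1 - 1) = (m : ℤ) by ring, g_natCast]
    rw [show ((m:ℤ) + 1) = ((m + 1 : ℕ) : ℤ) by push_cast; ring, g_natCast]
    rw [Nat.factorial_succ]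
    push_cast
    field_simp

/-- explicit 3×3 determinant -/
def det3 (x : ℕ → ℕ → ℚ) : ℚ :=
  x 0 0 * (x 1 1 * x 2 2 - x 1 2 * x 2 1)
  - x 0 1 * (x 1 0 * x 2 2 - x 1 2 * x 2 0)
  + x 0 2 * (x 1 0 * x 2 1 - x 1 1 * x 2 0)

noncomputable def M (lo hi : ℕ → ℕ) (i j : ℕ) : ℚ := g ((hi i : ℤ) - lo j - i + j)

noncomputable def M' (lo hi : ℕ → ℕ) (t : ℕ) (i j : ℕ) : ℚ :=
  g ((hi i : ℤ) - lo j - i + j - if i = t then 1 else 0)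

lemma M'_eq (lo hi : ℕ → ℕ) (t i j : ℕ) :
    M' lo hi t i j = if i = t then (((hi i : ℤ) - lo j - i + j : ℤ) : ℚ) * M lo hi i j
      else M lo hi i j := by
  unfold M' M
  split <;> simp [g_sub_one]

lemma det3_rec (lo hi : ℕ → ℕ) :
    det3 (M' lo hi 0) + det3 (M' lo hi 1) + det3 (M' lo hi 2)
      = (((hi 0 : ℤ) - lo 0 + ((hi 1 : ℤ) - lo 1) + ((hi 2 : ℤ) - lo 2) : ℤ) : ℚ)
        * det3 (M lo hi) := by
  simp only [det3, M'_eq]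
  norm_num
  push_cast
  ring

lemma det3_eqrow01 (x : ℕ → ℕ → ℚ) (h : ∀ j, x 0 j = x 1 j) : det3 x = 0 := by
  simp only [det3, h]; ring

lemma det3_eqrow12 (x : ℕ → ℕ → ℚ) (h : ∀ j, x 1 j = x 2 j) : det3 x = 0 := by
  simp only [det3, h]; ring

/-- If rows `t` and `t+1` of `hi` agree, the decremented determinant vanishes. -/
lemma det3_M'_eqrow (lo hi : ℕ → ℕ) (t : ℕ) (ht : t + 1 < 3) (h : hi (t + 1) = hi t) :
    det3 (M' lo hi t) = 0 := by
  have ht2 : t < 2 := by omega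
  interval_cases t
  · apply det3_eqrow01
    intro j
    unfold M'
    norm_num
    rw [h]
    congr 1
    ring
  · apply det3_eqrow12
    intro j
    unfold M'
    norm_num
    rw [h]
    congr 1
    ring

/-- If row `t` is empty (`hi t ≤ lo t`), the decremented determinant vanishes
(given antitonicity). -/
lemma det3_M'_empty (lo hi : ℕ → ℕ) (t : ℕ) (ht : t < 3)
    (hlo : lo 1 ≤ lo 0 ∧ lo 2 ≤ lo 1) (hhi : hi 1 ≤ hi 0 ∧ hi 2 ≤ hi 1)
    (h : hi t ≤ lo t) : det3 (M' lo hi t) = 0 := by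
  have z : ∀ i j : ℕ, i < 3 → j ≤ t → t ≤ i → M' lo hi t i j = 0 := by
    intro i j hi3 hjt hti
    apply g_neg
    have h1 : hi i ≤ hi t := by interval_cases t <;> interval_cases i <;> omega
    have h2 : lo t ≤ lo j := by interval_cases t <;> interval_cases j <;> omega
    have : (if i = t then (1:ℤ) else 0) = if i = t then 1 else 0 := rfl
    by_cases hit : i = t <;> simp [hit] <;> omega
  interval_cases t
  · simp only [det3, z 0 0 (by omega) (by omega) (by omega),
      z 1 0 (by omega) (by omega) (by omega), z 2 0 (by omega) (by omega) (by omega)]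
    ring
  · simp only [det3, z 1 0 (by omega) (by omega) (by omega),
      z 1 1 (by omega) (by omega) (by omega), z 2 0 (by omega) (by omega) (by omega),
      z 2 1 (by omega) (by omega) (by omega)]
    ring
  · simp only [det3, z 2 0 (by omega) (by omega) (by omega),
      z 2 1 (by omega) (by omega) (by omega), z 2 2 (by omega) (by omega) (by omega)]
    ring

/-- Base case: empty shape has determinant 1. -/
lemma det3_M_base (lo hi : ℕ → ℕ) (hlo : lo 1 ≤ lo 0 ∧ lo 2 ≤ lo 1)
    (h : ∀ i, i < 3 → hi i = lo i) : det3 (M lo hi) = 1 := by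
  have z : ∀ i j : ℕ, i < 3 → j < i → M lo hi i j = 0 := by
    intro i j hi3 hji
    apply g_neg
    have : lo j ≥ lo i := by interval_cases i <;> interval_cases j <;> omega
    have := h i hi3
    omega
  have d : ∀ i, i < 3 → M lo hi i i = 1 := by
    intro i hi3
    unfold M
    rw [h i hi3, show ((lo i : ℤ) - lo i - i + i) = ((0:ℕ):ℤ) by push_cast; ring, g_natCast]
    simp
  simp only [det3, z 1 0 (by omega) (by omega), z 2 0 (by omega) (by omega),
    z 2 1 (by omega) (by omega), d 0 (by omega), d 1 (by omega), d 2 (by omega)]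
  ring



variable (lo hi : ℕ → ℕ)

instance : Finite (SkewCells 3 lo hi) := by
  apply Finite.of_injective (fun c : SkewCells 3 lo hi =>
    ((⟨c.1.1, c.2.1⟩ : Fin 3), (⟨c.1.2, by
      have h2 := c.2.2.2
      have h3 : c.1.1 = 0 ∨ c.1.1 = 1 ∨ c.1.1 = 2 := by omega
      rcases h3 with h | h | h <;> rw [h] at h2 <;> omega⟩ : Fin (hi 0 + hi 1 + hi 2 + 1))))
  intro a b hab
  apply Subtype.ext
  apply Prod.ext
  · exact congrArg Fin.val (congrArg Prod.fst hab)
  · exact congrArg Fin.val (congrArg Prod.snd hab)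

/-- the set of linear extensions -/
def LinExt (p : ℕ) : Type := {f : SkewCells 3 lo hi ≃ Fin p // Monotone ⇑f}

instance (p : ℕ) : Finite (LinExt lo hi p) := by unfold LinExt; infer_instance

lemma le_def (c d : SkewCells 3 lo hi) : c ≤ d ↔ c.1.1 ≤ d.1.1 ∧ c.1.2 ≤ d.1.2 := by
  rw [← Subtype.coe_le_coe, Prod.le_def]

lemma cell_ext {c d : SkewCells 3 lo hi} (h1 : c.1.1 = d.1.1) (h2 : c.1.2 = d.1.2) :
    c = d := Subtype.ext (Prod.ext h1 h2)

lemma cell_ext_iff {c d : SkewCells 3 lo hi} : c = d ↔ c.1.1 = d.1.1 ∧ c.1.2 = d.1.2 := by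
  constructor
  · rintro rfl; exact ⟨rfl, rfl⟩
  · rintro ⟨h1, h2⟩; exact cell_ext lo hi h1 h2

/-- `(t, hi t)` is a removable corner cell -/
def Corner (t : ℕ) : Prop := lo t < hi t ∧ ∀ i < 3, t < i → hi i < hi t

instance (t : ℕ) : Decidable (Corner lo hi t) := by unfold Corner; infer_instance

variable {lo hi}

/-- the preimage of the top is a maximal cell -/
lemma top_maximal {p : ℕ} (f : SkewCells 3 lo hi ≃ Fin (p + 1)) (hf : Monotone ⇑f)
    {y : SkewCells 3 lo hi} (hy : f.symm (Fin.last p) ≤ y) : y = f.symm (Fin.last p) := by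
  have h1 : f (f.symm (Fin.last p)) ≤ f y := hf hy
  rw [Equiv.apply_symm_apply] at h1
  have h2 : f y = Fin.last p := le_antisymm (Fin.le_last _) h1
  calc y = f.symm (f y) := (Equiv.symm_apply_apply f y).symm
    _ = f.symm (Fin.last p) := by rw [h2]

/-- a maximal cell is a corner cell -/
lemma maximal_corner (hlo : lo 1 ≤ lo 0 ∧ lo 2 ≤ lo 1) (hhi : hi 1 ≤ hi 0 ∧ hi 2 ≤ hi 1)
    {x : SkewCells 3 lo hi} (hx : ∀ y, x ≤ y → y = x) :
    x.1.2 = hi x.1.1 ∧ Corner lo hi x.1.1 := by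
  have h3 := x.2.1
  have hlj := x.2.2.1
  have hjh := x.2.2.2
  have hcol : x.1.2 = hi x.1.1 := by
    by_contra hne
    have hj : x.1.2 < hi x.1.1 := lt_of_le_of_ne hjh hne
    have heq := hx ⟨(x.1.1, x.1.2 + 1), by simpa using h3, by simpa using by omega,
      by simpa using by omega⟩ (by rw [le_def]; constructor <;> simp)
    rw [cell_ext_iff] at heq
    simp at heq
  refine ⟨hcol, by omega, ?_⟩
  intro i' hi3 hii'
  by_contra hge
  push_neg at hge
  have hlo' : lo i' ≤ lo x.1.1 := by
    have := x.2.1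
    interval_cases h : x.1.1 <;> interval_cases i' <;> simp_all <;> omega
  have heq := hx ⟨(i', hi x.1.1), by simpa using hi3, by simpa using by omega,
    by simpa using by omega⟩ (by rw [le_def]; constructor <;> simp <;> omega)
  rw [cell_ext_iff] at heq
  simp at heq
  omega

section CornerEquiv

variable (t : ℕ) (ht3 : t < 3) (hc : Corner lo hi t)

/-- the corner cell -/
def X : SkewCells 3 lo hi := ⟨(t, hi t), ht3, hc.1, le_refl _⟩

@[simp] lemma X_fst : (X t ht3 hc).1.1 = t := rfl
@[simp] lemma X_snd : (X t ht3 hc).1.2 = hi t := rfl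

lemma X_maximal : ∀ y, X t ht3 hc ≤ y → y = X t ht3 hc := by
  intro y hy
  rw [le_def] at hy
  obtain ⟨h1, h2⟩ := hy
  simp only [X_fst, X_snd] at h1 h2
  have h3 := y.2.2.2
  have hrow : y.1.1 = t := by
    by_contra hne
    have := hc.2 y.1.1 y.2.1 (by omega)
    omega
  apply cell_ext
  · simp [hrow]
  · simp only [X_snd]
    rw [hrow] at h3
    omega

lemma mem_small (c : SkewCells 3 lo hi) (hne : c ≠ X t ht3 hc) :
    c.1.1 < 3 ∧ lo c.1.1 < c.1.2 ∧ c.1.2 ≤ Function.update hi t (hi t - 1) c.1.1 := by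
  refine ⟨c.2.1, c.2.2.1, ?_⟩
  rw [Function.update_apply]
  split
  · rename_i h
    have h2 := c.2.2.2
    rw [h] at h2
    have hneq : c.1.2 ≠ hi t := by
      intro hcontra
      exact hne (cell_ext lo hi (by simp [h]) (by simp [hcontra]))
    omega
  · exact c.2.2.2

/-- inclusion of the smaller shape -/
def ι (c : SkewCells 3 lo (Function.update hi t (hi t - 1))) : SkewCells 3 lo hi :=
  ⟨c.1, c.2.1, c.2.2.1, le_trans c.2.2.2 (by
    rw [Function.update_apply]
    split
    · rename_i h; rw [h]; omega
    · exact le_refl _)⟩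

@[simp] lemma ι_coe (c : SkewCells 3 lo (Function.update hi t (hi t - 1))) :
    (ι (lo := lo) (hi := hi) t c).1 = c.1 := rfl

lemma ι_ne_X (c : SkewCells 3 lo (Function.update hi t (hi t - 1))) :
    ι t c ≠ X t ht3 hc := by
  intro h
  rw [cell_ext_iff] at h
  simp only [ι_coe, X_fst, X_snd] at h
  have h3 := c.2.2.2
  rw [h.1, Function.update_self] at h3
  have := hc.1
  omega

lemma ι_le_ι (c d : SkewCells 3 lo (Function.update hi t (hi t - 1))) :
    c ≤ d ↔ ι t c ≤ ι t d := by
  rw [le_def, le_def]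
  simp

variable (p : ℕ)

/-- removing the top element of a linear extension whose top is the corner `X t` -/
def down (f : SkewCells 3 lo hi ≃ Fin (p + 1))
    (hX : f.symm (Fin.last p) = X t ht3 hc) :
    SkewCells 3 lo (Function.update hi t (hi t - 1)) ≃ Fin p where
  toFun c := Fin.castPred (f (ι t c)) (by
    intro h
    apply ι_ne_X t ht3 hc c
    rw [← hX, ← h, Equiv.symm_apply_apply])
  invFun k := ⟨(f.symm k.castSucc).1, by
    apply mem_small t ht3 hc
    intro h
    rw [← hX] at h
    have h2 := f.symm.injective h
    exact (Fin.castSucc_lt_last k).ne h2⟩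
  left_inv c := by
    apply Subtype.ext
    simp only [Fin.castSucc_castPred, Equiv.symm_apply_apply, ι_coe]
  right_inv k := by
    have key : ∀ (c : SkewCells 3 lo hi) (h), (ι (lo := lo) (hi := hi) t ⟨c.1, h⟩) = c :=
      fun c h => Subtype.ext rfl
    simp only [key, Equiv.apply_symm_apply, Fin.castPred_castSucc]

lemma down_mono (f : SkewCells 3 lo hi ≃ Fin (p + 1)) (hf : Monotone ⇑f)
    (hX : f.symm (Fin.last p) = X t ht3 hc) : Monotone ⇑(down t ht3 hc p f hX) := by
  intro c d hcd
  have h2 := hf ((ι_le_ι t c d).mp hcd)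
  rw [Fin.le_def] at h2 ⊢
  exact h2

/-- adding the corner `X t` on top of a linear extension of the smaller shape -/
def up (g : SkewCells 3 lo (Function.update hi t (hi t - 1)) ≃ Fin p) :
    SkewCells 3 lo hi ≃ Fin (p + 1) where
  toFun c := if h : c = X t ht3 hc then Fin.last p
    else (g ⟨c.1, mem_small t ht3 hc c h⟩).castSucc
  invFun k := if h : k = Fin.last p then X t ht3 hc else ι t (g.symm (k.castPred h))
  left_inv c := by
    dsimp only
    by_cases h : c = X t ht3 hc
    · rw [dif_pos h, dif_pos rfl, h]
    · rw [dif_neg h, dif_neg (Fin.castSucc_lt_last _).ne]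
      have key : ∀ (c : SkewCells 3 lo hi) (h), (ι (lo := lo) (hi := hi) t ⟨c.1, h⟩) = c :=
        fun c h => Subtype.ext rfl
      simp only [Fin.castPred_castSucc, Equiv.symm_apply_apply, key]
  right_inv k := by
    dsimp only
    by_cases h : k = Fin.last p
    · rw [dif_pos h, dif_pos rfl, h]
    · rw [dif_neg h, dif_neg (ι_ne_X t ht3 hc _)]
      have key : ∀ (c : SkewCells 3 lo (Function.update hi t (hi t - 1))) (h),
          (⟨(ι (lo := lo) (hi := hi) t c).1, h⟩ :
            SkewCells 3 lo (Function.update hi t (hi t - 1))) = c :=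
        fun c h => Subtype.ext rfl
      simp only [key, Equiv.apply_symm_apply, Fin.castSucc_castPred]

lemma up_mono (g : SkewCells 3 lo (Function.update hi t (hi t - 1)) ≃ Fin p)
    (hg : Monotone ⇑g) : Monotone ⇑(up t ht3 hc p g) := by
  intro c d hcd
  show (if h : c = X t ht3 hc then Fin.last p else _) ≤
    (if h : d = X t ht3 hc then Fin.last p else _)
  by_cases hd : d = X t ht3 hc
  · rw [dif_pos hd]; exact Fin.le_last _
  · have hcX : c ≠ X t ht3 hc := by
      intro hcc
      exact hd (X_maximal t ht3 hc d (hcc ▸ hcd))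
    rw [dif_neg hd, dif_neg hcX, Fin.castSucc_le_castSucc_iff]
    apply hg
    rw [le_def] at hcd ⊢
    exact hcd

lemma up_symm_last (g : SkewCells 3 lo (Function.update hi t (hi t - 1)) ≃ Fin p) :
    (up t ht3 hc p g).symm (Fin.last p) = X t ht3 hc := by
  rw [Equiv.symm_apply_eq]
  show Fin.last p = if h : _ then _ else _
  rw [dif_pos rfl]

lemma down_up (g : SkewCells 3 lo (Function.update hi t (hi t - 1)) ≃ Fin p) :
    down t ht3 hc p (up t ht3 hc p g) (up_symm_last t ht3 hc p g) = g := by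
  apply Equiv.ext
  intro c
  apply Fin.val_injective
  show ((up t ht3 hc p g) (ι t c) : ℕ) = _
  rw [show (up t ht3 hc p g) (ι t c) = (g ⟨(ι (lo := lo) (hi := hi) t c).1,
    mem_small t ht3 hc _ (ι_ne_X t ht3 hc c)⟩).castSucc from dif_neg (ι_ne_X t ht3 hc c)]
  have key : (⟨(ι (lo := lo) (hi := hi) t c).1, mem_small t ht3 hc _ (ι_ne_X t ht3 hc c)⟩ :
      SkewCells 3 lo (Function.update hi t (hi t - 1))) = c := Subtype.ext rfl
  rw [key]
  rfl

lemma up_down (f : SkewCells 3 lo hi ≃ Fin (p + 1))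
    (hX : f.symm (Fin.last p) = X t ht3 hc) :
    up t ht3 hc p (down t ht3 hc p f hX) = f := by
  apply Equiv.ext
  intro c
  by_cases h : c = X t ht3 hc
  · show (if _ : c = X t ht3 hc then _ else _) = f c
    rw [dif_pos h, h, ← hX, Equiv.apply_symm_apply]
  · show (if _ : c = X t ht3 hc then _ else _) = f c
    rw [dif_neg h]
    apply Fin.val_injective
    show ((f (ι t ⟨c.1, mem_small t ht3 hc c h⟩)) : ℕ) = ((f c) : ℕ)
    have key : (ι (lo := lo) (hi := hi) t ⟨c.1, mem_small t ht3 hc c h⟩) = c :=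
      Subtype.ext rfl
    rw [key]

end CornerEquiv

section Recursion

variable (lo hi) in
/-- row of the top cell -/
def Φ {p : ℕ} (ff : LinExt lo hi (p + 1)) : Fin 3 :=
  ⟨(ff.1.symm (Fin.last p)).1.1, (ff.1.symm (Fin.last p)).2.1⟩

variable (hlo : lo 1 ≤ lo 0 ∧ lo 2 ≤ lo 1) (hhi : hi 1 ≤ hi 0 ∧ hi 2 ≤ hi 1)

include hlo hhi in
lemma top_corner {p : ℕ} (ff : LinExt lo hi (p + 1)) :
    Corner lo hi (Φ lo hi ff).1 ∧
      ∀ (h3 : (Φ lo hi ff).1 < 3) (hc : Corner lo hi (Φ lo hi ff).1),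
        ff.1.symm (Fin.last p) = X (Φ lo hi ff).1 h3 hc := by
  have hmax : ∀ y, ff.1.symm (Fin.last p) ≤ y → y = ff.1.symm (Fin.last p) :=
    fun y hy => top_maximal ff.1 ff.2 hy
  have h := maximal_corner hlo hhi hmax
  exact ⟨h.2, fun h3 hc => cell_ext lo hi rfl h.1⟩

include hlo hhi in
lemma fiber_card {p : ℕ} (t : ℕ) (ht3 : t < 3) :
    Nat.card {ff : LinExt lo hi (p + 1) // Φ lo hi ff = ⟨t, ht3⟩} =
      if Corner lo hi t then
        Nat.card (LinExt lo (Function.update hi t (hi t - 1)) p) else 0 := by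
  split
  · rename_i hc
    apply Nat.card_congr
    have hX : ∀ ff : {ff : LinExt lo hi (p + 1) // Φ lo hi ff = ⟨t, ht3⟩},
        ff.1.1.symm (Fin.last p) = X t ht3 hc := by
      intro ⟨ff, hff⟩
      have h := (top_corner hlo hhi ff).2
      have hval : (Φ lo hi ff).1 = t := by rw [hff]
      have := h (hval ▸ ht3) (hval ▸ hc)
      refine this.trans (cell_ext lo hi ?_ ?_) <;> simp [hval]
    exact {
      toFun := fun ff => ⟨down t ht3 hc p ff.1.1 (hX ff),
        down_mono t ht3 hc p ff.1.1 ff.1.2 (hX ff)⟩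
      invFun := fun gg => ⟨⟨up t ht3 hc p gg.1, up_mono t ht3 hc p gg.1 gg.2⟩, by
        apply Fin.val_injective
        show ((up t ht3 hc p gg.1).symm (Fin.last p)).1.1 = t
        rw [up_symm_last t ht3 hc p gg.1]; rfl⟩
      left_inv := fun ff => Subtype.ext (Subtype.ext (up_down t ht3 hc p ff.1.1 (hX ff)))
      right_inv := fun gg => Subtype.ext (down_up t ht3 hc p gg.1) }
  · rename_i hnc
    have : IsEmpty {ff : LinExt lo hi (p + 1) // Φ lo hi ff = ⟨t, ht3⟩} := by
      constructor
      intro ⟨ff, hff⟩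
      apply hnc
      have h := (top_corner hlo hhi ff).1
      rwa [hff] at h
    exact Nat.card_of_isEmpty

include hlo hhi in
lemma count_rec (p : ℕ) :
    Nat.card (LinExt lo hi (p + 1)) = ∑ t ∈ Finset.range 3,
      if Corner lo hi t then
        Nat.card (LinExt lo (Function.update hi t (hi t - 1)) p) else 0 := by
  classical
  haveI : Fintype (LinExt lo hi (p + 1)) := Fintype.ofFinite _
  rw [Nat.card_eq_fintype_card, Fintype.card_congr (Equiv.sigmaFiberEquiv (Φ lo hi)).symm,
    Fintype.card_sigma]
  rw [← Fin.sum_univ_eq_sum_range (fun t =>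
    if Corner lo hi t then
      Nat.card (LinExt lo (Function.update hi t (hi t - 1)) p) else 0) 3]
  apply Finset.sum_congr rfl
  intro i _
  rw [← Nat.card_eq_fintype_card]
  exact fiber_card hlo hhi i.1 i.2

end Recursion

lemma count_base (h : ∀ i < 3, hi i ≤ lo i) : Nat.card (LinExt lo hi 0) = 1 := by
  haveI : IsEmpty (SkewCells 3 lo hi) := by
    constructor
    intro c
    have := h c.1.1 c.2.1
    have := c.2.2.1
    have := c.2.2.2
    omega
  haveI : Unique (LinExt lo hi 0) := {
    default := ⟨Equiv.equivOfIsEmpty _ _, fun a => isEmptyElim a⟩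
    uniq := fun f => Subtype.ext (Equiv.ext fun c => isEmptyElim c) }
  exact Nat.card_unique



section Main

lemma M_update (lo hi : ℕ → ℕ) (t : ℕ) (hpos : 1 ≤ hi t) :
    M lo (Function.update hi t (hi t - 1)) = M' lo hi t := by
  funext i j
  unfold M M'
  rw [Function.update_apply]
  split
  · rename_i h
    subst h
    congr 1
    omega
  · rename_i h
    congr 1
    omega

theorem main_count : ∀ (p : ℕ) (lo hi : ℕ → ℕ),
    lo 1 ≤ lo 0 ∧ lo 2 ≤ lo 1 → hi 1 ≤ hi 0 ∧ hi 2 ≤ hi 1 →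
    (∀ i < 3, lo i ≤ hi i) →
    hi 0 - lo 0 + (hi 1 - lo 1) + (hi 2 - lo 2) = p →
    (Nat.card (LinExt lo hi p) : ℚ) = p.factorial * det3 (M lo hi) := by
  intro p
  induction p with
  | zero =>
    intro lo hi hlo hhi hle hp
    have hempty : ∀ i < 3, hi i = lo i := by
      intro i h3
      have h0 := hle 0 (by omega)
      have h1 := hle 1 (by omega)
      have h2 := hle 2 (by omega)
      interval_cases i <;> omega
    rw [count_base (fun i h => (hempty i h).le), det3_M_base lo hi hlo hempty]
    simp
  | succ p ih =>
    intro lo hi hlo hhi hle hp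
    have upd : ∀ t i : ℕ, Function.update hi t (hi t - 1) i =
        if i = t then hi t - 1 else hi i := fun t i => Function.update_apply ..
    have key : ∀ t < 3, ((if Corner lo hi t then
        Nat.card (LinExt lo (Function.update hi t (hi t - 1)) p) else 0 : ℕ) : ℚ)
        = p.factorial * det3 (M' lo hi t) := by
      intro t ht3
      by_cases hc : Corner lo hi t
      · rw [if_pos hc]
        have hc1 := hc.1
        have hc2 := hc.2
        have g1 : Function.update hi t (hi t - 1) 1 ≤ Function.update hi t (hi t - 1) 0 := by
          rw [upd, upd]
          interval_cases t
          · have := hc2 1 (by omega) (by omega); simp; omega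
          · simp; omega
          · simp; omega
        have g2 : Function.update hi t (hi t - 1) 2 ≤ Function.update hi t (hi t - 1) 1 := by
          rw [upd, upd]
          interval_cases t
          · simp; omega
          · have := hc2 2 (by omega) (by omega); simp; omega
          · simp; omega
        have hterm := ih lo (Function.update hi t (hi t - 1))
          hlo ⟨g1, g2⟩
          (by intro i h3
              rw [upd]
              split
              · rename_i h; subst h; omega
              · exact hle i h3)
          (by rw [upd, upd, upd]
              have h0 := hle 0 (by omega)
              have h1 := hle 1 (by omega)
              have h2 := hle 2 (by omega)
              interval_cases t <;> simp <;> omega)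
        rw [hterm, M_update lo hi t (by omega)]
      · rw [if_neg hc]
        unfold Corner at hc
        push_neg at hc
        by_cases hrow : lo t < hi t
        · obtain ⟨i, h3, hti, hgei⟩ := hc hrow
          have heq : hi (t + 1) = hi t := by
            have hhi1 := hhi.1
            have hhi2 := hhi.2
            interval_cases t <;> interval_cases i <;> norm_num <;> omega
          rw [det3_M'_eqrow lo hi t (by omega) heq]
          simp
        · rw [det3_M'_empty lo hi t ht3 hlo hhi (by omega)]
          simp
    rw [count_rec hlo hhi p]
    rw [Finset.sum_range_succ, Finset.sum_range_succ, Finset.sum_range_one]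
    rw [Nat.cast_add, Nat.cast_add, key 0 (by omega), key 1 (by omega), key 2 (by omega)]
    have hdet := det3_rec lo hi
    have hcast : (((hi 0 : ℤ) - lo 0 + ((hi 1 : ℤ) - lo 1) + ((hi 2 : ℤ) - lo 2) : ℤ) : ℚ)
        = (p : ℚ) + 1 := by
      have h0 := hle 0 (by omega)
      have h1 := hle 1 (by omega)
      have h2 := hle 2 (by omega)
      have : ((hi 0 : ℤ) - lo 0 + ((hi 1 : ℤ) - lo 1) + ((hi 2 : ℤ) - lo 2) : ℤ)
          = ((p + 1 : ℕ) : ℤ) := by omega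
      rw [this]
      push_cast
      ring
    rw [hcast] at hdet
    rw [Nat.factorial_succ]
    push_cast
    nlinarith [hdet]

end Main

end Stmt10

/-- The cell poset of the skew shape `(n+m-1, n+m-1, m)/(m-1)` has exactly
`(2n+2m-1)! / ((m-1)! (n-1)! (m+n+1)!)` linear extensions. -/
theorem stmt_10 (m n : ℕ) (hm : 1 ≤ m) (hn : 1 ≤ n) :
    (Nat.card {f : SkewCells 3 (fun i => if i = 0 then m - 1 else 0)
        (fun i => if i = 0 then n + m - 1 else if i = 1 then n + m - 1 else m)
        ≃ Fin (2 * n + 2 * m - 1) // Monotone ⇑f} : ℚ)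
      = ((2 * n + 2 * m - 1).factorial : ℚ) /
          (((m - 1).factorial : ℚ) * ((n - 1).factorial : ℚ) * ((m + n + 1).factorial : ℚ)) := by
  obtain ⟨a, rfl⟩ : ∃ a, m = a + 1 := ⟨m - 1, by omega⟩
  obtain ⟨b, rfl⟩ : ∃ b, n = b + 1 := ⟨n - 1, by omega⟩
  set lo : ℕ → ℕ := fun i => if i = 0 then (a + 1) - 1 else 0 with hlo_def
  set hi : ℕ → ℕ := fun i => if i = 0 then (b + 1) + (a + 1) - 1
    else if i = 1 then (b + 1) + (a + 1) - 1 else (a + 1) with hhi_def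
  have hmain := Stmt10.main_count (2 * (b + 1) + 2 * (a + 1) - 1) lo hi
    (by simp [hlo_def])
    (by simp [hhi_def])
    (by intro i h3; interval_cases i <;> simp [hlo_def, hhi_def] <;> omega)
    (by simp [hlo_def, hhi_def]; omega)
  rw [show (Nat.card {f : SkewCells 3 lo hi ≃ Fin (2 * (b + 1) + 2 * (a + 1) - 1) //
      Monotone ⇑f} : ℚ) = (Nat.card (Stmt10.LinExt lo hi
        (2 * (b + 1) + 2 * (a + 1) - 1)) : ℚ) from rfl]
  rw [hmain]
  -- now compute the determinant
  have hM : ∀ i j : ℕ, Stmt10.M lo hi i j = Stmt10.g ((hi i : ℤ) - lo j - i + j) :=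
    fun i j => rfl
  have e00 : Stmt10.M lo hi 0 0 = ((b + 1).factorial : ℚ)⁻¹ := by
    have h : ((hi 0 : ℤ) - ↑(lo 0) - ↑(0:ℕ) + ↑(0:ℕ)) = ((b + 1 : ℕ) : ℤ) := by
      simp [hlo_def, hhi_def] <;> omega
    rw [hM, h, Stmt10.g_natCast]
  have e01 : Stmt10.M lo hi 0 1 = ((a + b + 2).factorial : ℚ)⁻¹ := by
    have h : ((hi 0 : ℤ) - ↑(lo 1) - ↑(0:ℕ) + ↑(1:ℕ)) = ((a + b + 2 : ℕ) : ℤ) := by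
      simp [hlo_def, hhi_def] <;> omega
    rw [hM, h, Stmt10.g_natCast]
  have e02 : Stmt10.M lo hi 0 2 = ((a + b + 3).factorial : ℚ)⁻¹ := by
    have h : ((hi 0 : ℤ) - ↑(lo 2) - ↑(0:ℕ) + ↑(2:ℕ)) = ((a + b + 3 : ℕ) : ℤ) := by
      simp [hlo_def, hhi_def] <;> omega
    rw [hM, h, Stmt10.g_natCast]
  have e10 : Stmt10.M lo hi 1 0 = ((b).factorial : ℚ)⁻¹ := by
    have h : ((hi 1 : ℤ) - ↑(lo 0) - ↑(1:ℕ) + ↑(0:ℕ)) = ((b : ℕ) : ℤ) := by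
      simp [hlo_def, hhi_def] <;> omega
    rw [hM, h, Stmt10.g_natCast]
  have e11 : Stmt10.M lo hi 1 1 = ((a + b + 1).factorial : ℚ)⁻¹ := by
    have h : ((hi 1 : ℤ) - ↑(lo 1) - ↑(1:ℕ) + ↑(1:ℕ)) = ((a + b + 1 : ℕ) : ℤ) := by
      simp [hlo_def, hhi_def] <;> omega
    rw [hM, h, Stmt10.g_natCast]
  have e12 : Stmt10.M lo hi 1 2 = ((a + b + 2).factorial : ℚ)⁻¹ := by
    have h : ((hi 1 : ℤ) - ↑(lo 2) - ↑(1:ℕ) + ↑(2:ℕ)) = ((a + b + 2 : ℕ) : ℤ) := by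
      simp [hlo_def, hhi_def] <;> omega
    rw [hM, h, Stmt10.g_natCast]
  have e20 : Stmt10.M lo hi 2 0 = 0 := by
    rw [hM]
    apply Stmt10.g_neg
    simp [hlo_def, hhi_def] <;> omega
  have e21 : Stmt10.M lo hi 2 1 = ((a).factorial : ℚ)⁻¹ := by
    have h : ((hi 2 : ℤ) - ↑(lo 1) - ↑(2:ℕ) + ↑(1:ℕ)) = ((a : ℕ) : ℤ) := by
      simp [hlo_def, hhi_def] <;> omega
    rw [hM, h, Stmt10.g_natCast]
  have e22 : Stmt10.M lo hi 2 2 = ((a + 1).factorial : ℚ)⁻¹ := by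
    have h : ((hi 2 : ℤ) - ↑(lo 2) - ↑(2:ℕ) + ↑(2:ℕ)) = ((a + 1 : ℕ) : ℤ) := by
      simp [hlo_def, hhi_def] <;> omega
    rw [hM, h, Stmt10.g_natCast]
  rw [show (2 * (b + 1) + 2 * (a + 1) - 1) = 2 * a + 2 * b + 3 by omega]
  rw [show ((a + 1) - 1) = a by omega, show ((b + 1) - 1) = b by omega,
    show ((a + 1) + (b + 1) + 1) = a + b + 3 by omega]
  unfold Stmt10.det3
  rw [e00, e01, e02, e10, e11, e12, e20, e21, e22]
  have f1 : ((a + 1).factorial : ℚ) = (a + 1) * a.factorial := by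
    rw [Nat.factorial_succ]; push_cast; ring
  have f2 : ((b + 1).factorial : ℚ) = (b + 1) * b.factorial := by
    rw [Nat.factorial_succ]; push_cast; ring
  have f3 : ((a + b + 2).factorial : ℚ) = (a + b + 2) * (a + b + 1).factorial := by
    rw [show a + b + 2 = (a + b + 1) + 1 by omega, Nat.factorial_succ]; push_cast; ring
  have f4 : ((a + b + 3).factorial : ℚ)
      = (a + b + 3) * ((a + b + 2) * (a + b + 1).factorial) := by
    rw [show a + b + 3 = (a + b + 2) + 1 by omega, Nat.factorial_succ]
    push_cast
    rw [f3]
    push_cast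
    ring
  rw [f1, f2, f3, f4]
  have ha : (a.factorial : ℚ) ≠ 0 := Nat.cast_ne_zero.mpr a.factorial_ne_zero
  have hb : (b.factorial : ℚ) ≠ 0 := Nat.cast_ne_zero.mpr b.factorial_ne_zero
  have hab : ((a + b + 1).factorial : ℚ) ≠ 0 :=
    Nat.cast_ne_zero.mpr (a + b + 1).factorial_ne_zero
  have h1 : ((a : ℚ) + 1) ≠ 0 := by positivity
  have h2 : ((b : ℚ) + 1) ≠ 0 := by positivity
  have h3 : ((a : ℚ) + b + 2) ≠ 0 := by positivity
  have h4 : ((a : ℚ) + b + 3) ≠ 0 := by positivity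
  field_simp
  ring
end
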